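/- arXiv:2212.14060 — 6 statements merged into one kernel-verified Lean document; each statement's English description precedes it below -/
import Mathlib

section
/- Let d ≥ 3 and θ_0 > θ_1 > ⋯ > θ_d be real numbers, and fix b ∈ ℝ. For c ∈ ℝ and 0 ≤ i ≤ d set p_i(c) = θ_i³ + b·θ_i² + c·θ_i. Let c* be the largest real number c for which p_d(c) = p_i(c) for some index i ∈ {1,…,d−1}, and let j ∈ {1,…,d−1} be an index with p_j(c*) = p_d(c*). For 1 ≤ i ≤ j let c_i* be the unique real solution of p_i(c) = p_{i−1}(c). Then the minimum min_{1≤i≤d} p_i(c) equals: p_s(c) whenever 1 ≤ s ≤ j−1 and c ∈ [c_s*, c_{s+1}*]; p_j(c) whenever c ∈ [c_j*, c*]; and p_d(c) whenever c ∈ [c*, ∞). -/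
/-- **Lemma 5 (Kavi–Newman).**
Let `d ≥ 3` and `θ 0 > θ 1 > ⋯ > θ d` be real numbers, and fix `b ∈ ℝ`.
For `c ∈ ℝ` and `0 ≤ i ≤ d` set `p i c = θ i ^ 3 + b * θ i ^ 2 + c * θ i`.
Let `cstar` be the largest real number `c` for which `p d c = p i c` for some index
`i ∈ {1, …, d − 1}`, and let `j ∈ {1, …, d − 1}` be an index with `p j cstar = p d cstar`.
For `1 ≤ i ≤ j` let `cs i` be the (unique) real solution of `p i c = p (i − 1) c`.
Then `min_{1 ≤ i ≤ d} p i c` equals: `p s c` whenever `1 ≤ s ≤ j − 1` and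
`c ∈ [cs s, cs (s+1)]`; `p j c` whenever `c ∈ [cs j, cstar]`; and `p d c` whenever
`c ∈ [cstar, ∞)`. -/
theorem optimal_c_interval_min
    (d : ℕ) (hd : 3 ≤ d) (θ : ℕ → ℝ)
    (hθ : ∀ i j : ℕ, i < j → j ≤ d → θ j < θ i)
    (b : ℝ)
    (p : ℕ → ℝ → ℝ)
    (hp : ∀ (i : ℕ) (c : ℝ), p i c = θ i ^ 3 + b * θ i ^ 2 + c * θ i)
    (cstar : ℝ)
    (hcstar : IsGreatest {c : ℝ | ∃ i : ℕ, 1 ≤ i ∧ i ≤ d - 1 ∧ p d c = p i c} cstar)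
    (j : ℕ) (hj1 : 1 ≤ j) (hj2 : j ≤ d - 1) (hjc : p j cstar = p d cstar)
    (cs : ℕ → ℝ)
    (hcs : ∀ i : ℕ, 1 ≤ i → i ≤ j → p i (cs i) = p (i - 1) (cs i)) :
    (∀ s : ℕ, 1 ≤ s → s ≤ j - 1 → ∀ c : ℝ, cs s ≤ c → c ≤ cs (s + 1) →
        ∀ i : ℕ, 1 ≤ i → i ≤ d → p s c ≤ p i c) ∧
    (∀ c : ℝ, cs j ≤ c → c ≤ cstar →
        ∀ i : ℕ, 1 ≤ i → i ≤ d → p j c ≤ p i c) ∧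
    (∀ c : ℝ, cstar ≤ c →
        ∀ i : ℕ, 1 ≤ i → i ≤ d → p d c ≤ p i c) := by
  -- crossing points
  obtain ⟨C, hCdef⟩ : ∃ C : ℕ → ℕ → ℝ, ∀ i k : ℕ,
      C i k = -(θ i ^ 2 + θ i * θ k + θ k ^ 2 + b * (θ i + θ k)) :=
    ⟨fun i k => -(θ i ^ 2 + θ i * θ k + θ k ^ 2 + b * (θ i + θ k)), fun _ _ => rfl⟩
  have key : ∀ (i k : ℕ) (c : ℝ), p i c - p k c = (θ i - θ k) * (c - C i k) := by
    intro i k c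
    simp only [hCdef, hp]
    ring
  have Csymm : ∀ i k : ℕ, C i k = C k i := by
    intro i k; simp only [hCdef]; ring
  have hle : ∀ i k : ℕ, i ≤ k → k ≤ d → θ k ≤ θ i := by
    intro i k h1 h2
    rcases eq_or_lt_of_le h1 with h | h
    · rw [h]
    · exact le_of_lt (hθ _ _ h h2)
  -- crossing point values of cs
  have hcsC : ∀ i : ℕ, 1 ≤ i → i ≤ j → cs i = C i (i - 1) := by
    intro i h1 h2
    have h := hcs i h1 h2
    have hk := key i (i - 1) (cs i)
    rw [h, sub_self] at hk
    have hne : θ i - θ (i - 1) < 0 := by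
      have := hθ (i - 1) i (by omega) (by omega)
      linarith
    rcases mul_eq_zero.mp hk.symm with h' | h'
    · exact absurd h' (ne_of_lt hne)
    · have := sub_eq_zero.mp h'
      linarith
  -- cstar = C j d
  have hjd : j < d := by omega
  have hcstarC : cstar = C j d := by
    have hk := key j d cstar
    rw [hjc, sub_self] at hk
    have hne : 0 < θ j - θ d := by
      have := hθ j d hjd le_rfl
      linarith
    rcases mul_eq_zero.mp hk.symm with h' | h'
    · exact absurd h' (ne_of_gt hne)
    · have := sub_eq_zero.mp h'
      linarith
  -- maximality of cstar
  have hmax : ∀ k : ℕ, 1 ≤ k → k ≤ d - 1 → C k d ≤ cstar := by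
    intro k h1 h2
    apply hcstar.2
    refine ⟨k, h1, h2, ?_⟩
    have hk := key d k (C k d)
    rw [Csymm d k, sub_self, mul_zero] at hk
    linarith
  -- sign facts
  have S1 : ∀ k : ℕ, 1 ≤ k → k < j → 0 ≤ θ k + θ j + θ d + b := by
    intro k h1 h2
    have hm := hmax k h1 (by omega)
    rw [hcstarC] at hm
    have hkj : θ j < θ k := hθ k j h2 (by omega)
    by_contra hcon
    push_neg at hcon
    have := mul_pos (by linarith : (0:ℝ) < θ k - θ j) (by linarith : (0:ℝ) < -(θ k + θ j + θ d + b))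
    simp only [hCdef] at hm
    nlinarith
  have S2 : ∀ k : ℕ, j < k → k ≤ d - 1 → θ k + θ j + θ d + b ≤ 0 := by
    intro k h1 h2
    have hm := hmax k (by omega) h2
    rw [hcstarC] at hm
    have hkj : θ k < θ j := hθ j k h1 (by omega)
    by_contra hcon
    push_neg at hcon
    have := mul_pos (by linarith : (0:ℝ) < θ j - θ k) (by linarith : (0:ℝ) < θ k + θ j + θ d + b)
    simp only [hCdef] at hm
    nlinarith
  -- comparison helper
  have cmp : ∀ (a i : ℕ) (c : ℝ), (θ a - θ i) * (c - C a i) ≤ 0 → p a c ≤ p i c := by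
    intro a i c h
    have := key a i c
    linarith
  refine ⟨?_, ?_, ?_⟩
  · -- part 1
    intro s hs1 hs2 c hc1 hc2 i hi1 hi2
    have hsj : s < j := by omega
    have hcss : cs s = C s (s - 1) := hcsC s hs1 (by omega)
    have hcss1 : cs (s + 1) = C (s + 1) s := by
      have := hcsC (s + 1) (by omega) (by omega)
      simpa using this
    rcases lt_trichotomy i s with hlt' | heq | hgt
    · -- i < s
      have sum0 := S1 i hi1 (by omega)
      have h1 : θ j ≤ θ (s - 1) := hle (s - 1) j (by omega) (by omega)
      have h2 : θ d ≤ θ s := hle s d (by omega) le_rfl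
      have hsum : 0 ≤ θ i + θ (s - 1) + θ s + b := by linarith
      have hθi : θ (s - 1) ≤ θ i := hle i (s - 1) (by omega) (by omega)
      have hCle : C s i ≤ C s (s - 1) := by
        simp only [hCdef]
        nlinarith [mul_nonneg (by linarith : (0:ℝ) ≤ θ i - θ (s - 1)) hsum]
      apply cmp
      have hθsi : θ s < θ i := hθ i s hlt' (by omega)
      have : C s i ≤ c := by rw [hcss] at hc1; linarith
      exact mul_nonpos_iff.mpr (Or.inr ⟨by linarith, by linarith⟩)
    · rw [heq]
    · -- s < i
      have sum0 := S1 s hs1 hsj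
      have h1 : θ j ≤ θ (s + 1) := hle (s + 1) j (by omega) (by omega)
      have h2 : θ d ≤ θ i := hle i d hi2 le_rfl
      have hθi : θ i ≤ θ (s + 1) := hle (s + 1) i (by omega) hi2
      have hsum : 0 ≤ θ i + θ (s + 1) + θ s + b := by linarith
      have hCge : C s (s + 1) ≤ C s i := by
        simp only [hCdef]
        nlinarith [mul_nonneg (by linarith : (0:ℝ) ≤ θ (s + 1) - θ i) hsum]
      apply cmp
      have hθsi : θ i < θ s := hθ s i hgt hi2
      have hcC : c ≤ C s i := by
        rw [hcss1, Csymm (s + 1) s] at hc2; linarith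
      exact mul_nonpos_iff.mpr (Or.inl ⟨by linarith, by linarith⟩)
  · -- part 2
    intro c hc1 hc2 i hi1 hi2
    have hcsj : cs j = C j (j - 1) := hcsC j hj1 le_rfl
    rcases lt_trichotomy i j with hlt' | heq | hgt
    · -- i < j
      have sum0 := S1 i hi1 hlt'
      have h1 : θ j ≤ θ (j - 1) := hle (j - 1) j (by omega) (by omega)
      have h2 : θ d ≤ θ j := hle j d (by omega) le_rfl
      have hsum : 0 ≤ θ i + θ (j - 1) + θ j + b := by linarith
      have hθi : θ (j - 1) ≤ θ i := hle i (j - 1) (by omega) (by omega)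
      have hCle : C j i ≤ C j (j - 1) := by
        simp only [hCdef]
        nlinarith [mul_nonneg (by linarith : (0:ℝ) ≤ θ i - θ (j - 1)) hsum]
      apply cmp
      have hθji : θ j < θ i := hθ i j hlt' (by omega)
      have : C j i ≤ c := by rw [hcsj] at hc1; linarith
      exact mul_nonpos_iff.mpr (Or.inr ⟨by linarith, by linarith⟩)
    · rw [heq]
    · -- j < i
      have hθji : θ i < θ j := hθ j i hgt hi2
      rcases eq_or_lt_of_le hi2 with hid | hid
      · -- i = d
        apply cmp
        have : c ≤ C j i := by rw [hid, ← hcstarC]; exact hc2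
        have hθjd : θ d < θ j := hθ j d hjd le_rfl
        exact mul_nonpos_iff.mpr (Or.inl ⟨by rw [hid]; linarith, by linarith⟩)
      · -- j < i ≤ d - 1
        have s2 := S2 i hgt (by omega)
        have h2 : θ d < θ i := hθ i d hid le_rfl
        have hCge : C j d ≤ C j i := by
          simp only [hCdef]
          nlinarith [mul_nonneg (by linarith : (0:ℝ) ≤ θ i - θ d)
            (by linarith : (0:ℝ) ≤ -(θ i + θ d + θ j + b))]
        apply cmp
        have hcC : c ≤ C j i := by rw [hcstarC] at hc2; linarith
        exact mul_nonpos_iff.mpr (Or.inl ⟨by linarith, by linarith⟩)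
  · -- part 3
    intro c hc i hi1 hi2
    rcases eq_or_lt_of_le hi2 with hid | hid
    · rw [hid]
    · have hm := hmax i hi1 (by omega)
      have hθi : θ d < θ i := hθ i d hid le_rfl
      apply cmp
      have : C d i ≤ c := by rw [Csymm d i]; linarith
      exact mul_nonpos_iff.mpr (Or.inr ⟨by linarith, by linarith⟩)
end

section
/- Let G be a connected δ-regular simple graph on n vertices with real adjacency matrix A and distinct eigenvalues θ_0 > θ_1 > ⋯ > θ_d where θ_0 = δ and d ≥ 3. Let Δ = max_{u ∈ V(G)} (A³)_{uu}, and let s be the largest index such that θ_s ≥ −(θ_0² + θ_0·θ_d − Δ)/(θ_0·(θ_d + 1)). Then α_3(G) ≤ n·(Δ − θ_0·(θ_s + θ_{s+1} + θ_d) − θ_s·θ_{s+1}·θ_d) / ((θ_0 − θ_s)·(θ_0 − θ_{s+1})·(θ_0 − θ_d)). -/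
/-- A finite set `S` of vertices is `k`-independent if any two distinct vertices of `S`
are at graph distance greater than `k`. -/
def SimpleGraph.IsKIndepSet {V : Type*} (G : SimpleGraph V) (k : ℕ) (S : Finset V) : Prop :=
  ∀ u ∈ S, ∀ v ∈ S, u ≠ v → k < G.dist u v

/-- The `k`-independence number of a graph: the maximum size of a `k`-independent set. -/
noncomputable def SimpleGraph.kIndepNum {V : Type*} [Fintype V]
    (G : SimpleGraph V) (k : ℕ) : ℕ :=
  sSup {m : ℕ | ∃ S : Finset V, G.IsKIndepSet k S ∧ S.card = m}

namespace Alpha3Aux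

open Matrix Finset RealInnerProductSpace


variable {V : Type*} [Fintype V] [DecidableEq V]

lemma const_of_eig {G : SimpleGraph V} [DecidableRel G.Adj] (hG : G.Connected)
    {δ : ℕ} (hreg : G.IsRegularOfDegree δ) {v : V → ℝ}
    (hv : G.adjMatrix ℝ *ᵥ v = (δ : ℝ) • v) (u w : V) : v u = v w := by
  have : Nonempty V := hG.nonempty
  have hne : (Finset.univ : Finset V).Nonempty := univ_nonempty
  set M : ℝ := univ.sup' hne v with hM
  have hle : ∀ a : V, v a ≤ M := fun a => le_sup' v (mem_univ a)
  have step : ∀ a b : V, G.Adj a b → v a = M → v b = M := by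
    intro a b hab ha
    by_contra hb
    have hblt : v b < M := lt_of_le_of_ne (hle b) hb
    have h1 : (G.adjMatrix ℝ *ᵥ v) a = ∑ x ∈ G.neighborFinset a, v x := by
      simp [SimpleGraph.adjMatrix_mulVec_apply]
    have h2 : (G.adjMatrix ℝ *ᵥ v) a = (δ : ℝ) * M := by
      rw [hv]; simp [ha]
    have hlt : ∑ x ∈ G.neighborFinset a, v x < ∑ _x ∈ G.neighborFinset a, M := by
      refine Finset.sum_lt_sum (fun i _ => hle i) ⟨b, ?_, hblt⟩
      rwa [SimpleGraph.mem_neighborFinset]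
    rw [Finset.sum_const, SimpleGraph.card_neighborFinset_eq_degree, hreg a,
      nsmul_eq_mul] at hlt
    rw [h1] at h2
    exact lt_irrefl _ (h2 ▸ hlt)
  have reach : ∀ {a b : V} (p : G.Walk a b), v a = M → v b = M := by
    intro a b p
    induction p with
    | nil => exact id
    | cons h q ih => intro ha; exact ih (step _ _ h ha)
  obtain ⟨a0, -, ha0⟩ := Finset.exists_mem_eq_sup' hne v
  have hall : ∀ b : V, v b = M := fun b => reach ((hG.preconnected a0 b).some) ha0.symm
  rw [hall u, hall w]


lemma colsum_const {G : SimpleGraph V} [DecidableRel G.Adj]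
    {δ : ℕ} (hreg : G.IsRegularOfDegree δ) (t : V) :
    ∑ v, G.adjMatrix ℝ v t = (δ : ℝ) := by
  have h1 : ∀ v, G.adjMatrix ℝ v t = G.adjMatrix ℝ t v := by
    intro v
    rw [SimpleGraph.adjMatrix_apply, SimpleGraph.adjMatrix_apply]
    congr 1
    exact propext (G.adj_comm v t)
  rw [Finset.sum_congr rfl (fun v _ => h1 v)]
  have := SimpleGraph.adjMatrix_mulVec_const_apply_of_regular (α := ℝ) (a := (1:ℝ)) hreg (v := t)
  have h2 : ∑ v, G.adjMatrix ℝ t v = ∑ v, (if G.Adj t v then (1:ℝ) else 0) :=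
    Finset.sum_congr rfl (fun v _ => by rw [SimpleGraph.adjMatrix_apply])
  rw [h2]
  simpa [Matrix.mulVec, dotProduct, Function.const] using this

lemma sum_eig_zero {G : SimpleGraph V} [DecidableRel G.Adj]
    {δ : ℕ} (hreg : G.IsRegularOfDegree δ) {w : V → ℝ} {m : ℝ}
    (hw : G.adjMatrix ℝ *ᵥ w = m • w) (hm : m ≠ (δ : ℝ)) : ∑ v, w v = 0 := by
  have h1 : ∑ v, (G.adjMatrix ℝ *ᵥ w) v = (δ : ℝ) * ∑ t, w t := by
    calc ∑ v, (G.adjMatrix ℝ *ᵥ w) v = ∑ v, ∑ t, G.adjMatrix ℝ v t * w t := rfl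
    _ = ∑ t, ∑ v, G.adjMatrix ℝ v t * w t := Finset.sum_comm
    _ = ∑ t, (∑ v, G.adjMatrix ℝ v t) * w t :=
        Finset.sum_congr rfl (fun t _ => (Finset.sum_mul _ _ _).symm)
    _ = ∑ t, (δ : ℝ) * w t := by
        refine Finset.sum_congr rfl (fun t _ => ?_)
        rw [colsum_const hreg t]
    _ = (δ : ℝ) * ∑ t, w t := (Finset.mul_sum _ _ _).symm
  have h2 : ∑ v, (G.adjMatrix ℝ *ᵥ w) v = m * ∑ v, w v := by
    rw [hw]; simp [Finset.mul_sum]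
  have h3 : (m - (δ : ℝ)) * ∑ v, w v = 0 := by
    rw [sub_mul]; rw [h1] at h2; linarith
  rcases mul_eq_zero.mp h3 with h | h
  · exact absurd (by linarith : m = (δ : ℝ)) hm
  · exact h

lemma key_quadform {G : SimpleGraph V} [DecidableRel G.Adj] (hG : G.Connected)
    {δ : ℕ} (hreg : G.IsRegularOfDegree δ) (c0 c1 c2 c3 : ℝ)
    (hq : ∀ μ : ℝ, μ ∈ spectrum ℝ (G.adjMatrix ℝ) → μ ≠ (δ : ℝ) →
      0 ≤ c3 * μ ^ 3 + c2 * μ ^ 2 + c1 * μ + c0)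
    (x : V → ℝ) :
    (c3 * (δ : ℝ) ^ 3 + c2 * (δ : ℝ) ^ 2 + c1 * δ + c0) * (∑ u, x u) ^ 2
        / (Fintype.card V : ℝ) ≤
      x ⬝ᵥ ((c3 • (G.adjMatrix ℝ) ^ 3 + c2 • (G.adjMatrix ℝ) ^ 2 + c1 • (G.adjMatrix ℝ)
        + c0 • (1 : Matrix V V ℝ)) *ᵥ x) := by
  classical
  haveI hnV : Nonempty V := hG.nonempty
  have hcard : (0:ℝ) < (Fintype.card V : ℝ) := by exact_mod_cast Fintype.card_pos
  set A : Matrix V V ℝ := G.adjMatrix ℝ with hAdef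
  have hA : A.IsHermitian := by
    rw [Matrix.IsHermitian, Matrix.conjTranspose_eq_transpose_of_trivial,
      SimpleGraph.transpose_adjMatrix]
  set U : Matrix V V ℝ := (hA.eigenvectorUnitary : Matrix V V ℝ) with hUdef
  set q : ℝ → ℝ := fun t => c3 * t ^ 3 + c2 * t ^ 2 + c1 * t + c0 with hqdef
  have hU1 : star U * U = 1 := Matrix.mem_unitaryGroup_iff'.mp hA.eigenvectorUnitary.2
  have hU2 : U * star U = 1 := Matrix.mem_unitaryGroup_iff.mp hA.eigenvectorUnitary.2
  set conj : (V → ℝ) → Matrix V V ℝ := fun f => U * Matrix.diagonal f * star U with hconj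
  have hmul : ∀ f g, conj f * conj g = conj (fun i => f i * g i) := by
    intro f g
    calc conj f * conj g = U * (Matrix.diagonal f * ((star U * U) * (Matrix.diagonal g * star U))) := by
          simp only [hconj, Matrix.mul_assoc]
    _ = conj (fun i => f i * g i) := by
          rw [hU1, Matrix.one_mul, ← Matrix.mul_assoc (Matrix.diagonal f),
            Matrix.diagonal_mul_diagonal, ← Matrix.mul_assoc]
  have hsmulc : ∀ (c : ℝ) f, c • conj f = conj (fun i => c * f i) := by
    intro c f
    have hc : (fun i => c * f i) = c • f := rfl
    simp only [hconj, hc, Matrix.diagonal_smul, Matrix.mul_smul, Matrix.smul_mul]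
  have haddc : ∀ f g, conj f + conj g = conj (fun i => f i + g i) := by
    intro f g
    simp only [hconj]
    rw [← Matrix.add_mul, ← Matrix.mul_add, Matrix.diagonal_add]
  obtain ⟨μ', hμ'⟩ : ∃ μ'' : V → ℝ, μ'' = hA.eigenvalues := ⟨_, rfl⟩
  have hspecA : A = conj μ' := by
    rw [hμ']
    have := hA.spectral_theorem
    simpa [hconj] using this
  have hone : (1 : Matrix V V ℝ) = conj (fun _ => 1) := by
    simp only [hconj, Matrix.diagonal_one, Matrix.mul_one, hU2]
  have h2 : A ^ 2 = conj (fun i => μ' i * μ' i) := by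
    rw [pow_two, hspecA, hmul]
  have h3 : A ^ 3 = conj (fun i => (μ' i * μ' i) * μ' i) := by
    rw [pow_succ, h2, hspecA, hmul]
  have hB : c3 • A ^ 3 + c2 • A ^ 2 + c1 • A + c0 • (1 : Matrix V V ℝ)
      = conj (fun j => q (μ' j)) := by
    rw [h3, h2, hspecA, hone, hsmulc, hsmulc, hsmulc, hsmulc, haddc, haddc, haddc]
    refine congrArg conj ?_
    funext j
    simp only [hqdef]
    ring
  set y : V → ℝ := star U *ᵥ x with hy
  have hstarT : (star U)ᵀ = U := by
    rw [Matrix.star_eq_conjTranspose, Matrix.conjTranspose_eq_transpose_of_trivial,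
      Matrix.transpose_transpose]
  have hyvec : y = x ᵥ* U := by
    rw [hy, ← Matrix.vecMul_transpose, hstarT]
  have hdotU : ∀ w : V → ℝ, x ⬝ᵥ (U *ᵥ w) = y ⬝ᵥ w := by
    intro w
    rw [Matrix.dotProduct_mulVec, ← hyvec]
  have hform : ∀ f : V → ℝ, x ⬝ᵥ (conj f *ᵥ x) = ∑ j, f j * (y j) ^ 2 := by
    intro f
    simp only [hconj]
    rw [← Matrix.mulVec_mulVec, ← Matrix.mulVec_mulVec, hdotU]
    rw [dotProduct]
    refine Finset.sum_congr rfl (fun j _ => ?_)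
    rw [Matrix.mulVec_diagonal]
    ring
  set ψ : V → ℝ := fun j => ∑ v, U v j with hψ
  have hcol : ∀ (j v : V), U v j = hA.eigenvectorBasis j v := fun j v => rfl
  have hψ0 : ∀ j, μ' j ≠ (δ : ℝ) → ψ j = 0 := by
    intro j hj
    have hev := hA.mulVec_eigenvectorBasis j
    rw [← hμ'] at hev
    have hz := sum_eig_zero hreg hev hj
    simpa [hψ, hcol] using hz
  have hsumx : ∑ u, x u = ψ ⬝ᵥ y := by
    have hxU : U *ᵥ y = x := by
      rw [hy, Matrix.mulVec_mulVec, hU2, Matrix.one_mulVec]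
    calc ∑ u, x u = ∑ v, (U *ᵥ y) v := by rw [hxU]
    _ = ∑ v, ∑ j, U v j * y j := rfl
    _ = ∑ j, ∑ v, U v j * y j := Finset.sum_comm
    _ = ψ ⬝ᵥ y := by
        rw [dotProduct]
        exact Finset.sum_congr rfl (fun j _ => (Finset.sum_mul _ _ _).symm)
  have hqspec : ∀ j, μ' j ≠ (δ : ℝ) → 0 ≤ q (μ' j) := by
    intro j hj
    refine hq (μ' j) ?_ hj
    rw [hμ']
    exact hA.eigenvalues_mem_spectrum_real j
  rw [hB, hform]
  by_cases hex : ∃ j0, μ' j0 = (δ : ℝ)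
  · obtain ⟨j0, hj0⟩ := hex
    have hconstv : ∀ v w' : V, hA.eigenvectorBasis j0 v = hA.eigenvectorBasis j0 w' := by
      have hev := hA.mulVec_eigenvectorBasis j0
      rw [← hμ', hj0] at hev
      exact fun v w' => const_of_eig hG hreg hev v w'
    obtain ⟨u0⟩ := hnV
    set c : ℝ := hA.eigenvectorBasis j0 u0 with hc
    have hcv : ∀ v, hA.eigenvectorBasis j0 v = c := fun v => hconstv v u0
    have horth := hA.eigenvectorBasis.orthonormal
    rw [orthonormal_iff_ite] at horth
    have hinner : ∀ i j : V, (inner ℝ (hA.eigenvectorBasis i) (hA.eigenvectorBasis j) : ℝ)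
        = ∑ v, hA.eigenvectorBasis i v * hA.eigenvectorBasis j v := by
      intro i j
      rw [PiLp.inner_apply]
      simp [RCLike.inner_apply, conj_trivial]
      exact Finset.sum_congr rfl (fun _ _ => mul_comm _ _)
    have hnc : (Fintype.card V : ℝ) * c ^ 2 = 1 := by
      have h := horth j0 j0
      rw [hinner, if_pos rfl] at h
      have hsumcc : ∑ v : V, hA.eigenvectorBasis j0 v * hA.eigenvectorBasis j0 v
          = (Fintype.card V : ℝ) * (c * c) := by
        calc ∑ v : V, hA.eigenvectorBasis j0 v * hA.eigenvectorBasis j0 v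
            = ∑ _v : V, c * c := Finset.sum_congr rfl (fun v _ => by rw [hcv v])
        _ = (Fintype.card V : ℝ) * (c * c) := by
            rw [Finset.sum_const, Finset.card_univ, nsmul_eq_mul]
      rw [hsumcc] at h
      calc (Fintype.card V : ℝ) * c ^ 2 = (Fintype.card V : ℝ) * (c * c) := by ring
      _ = 1 := h
    have hcne : c ≠ 0 := by
      intro h
      rw [h] at hnc; simp at hnc
    have huniq : ∀ j, j ≠ j0 → μ' j ≠ (δ : ℝ) := by
      intro j hjne hjeq
      have hconstj : ∀ v w' : V, hA.eigenvectorBasis j v = hA.eigenvectorBasis j w' := by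
        have hev := hA.mulVec_eigenvectorBasis j
        rw [← hμ', hjeq] at hev
        exact fun v w' => const_of_eig hG hreg hev v w'
      have hcv' : ∀ v, hA.eigenvectorBasis j v = hA.eigenvectorBasis j u0 :=
        fun v => hconstj v u0
      have h0 := horth j j0
      rw [hinner, if_neg hjne] at h0
      rw [Finset.sum_congr rfl (fun v _ => by rw [hcv' v, hcv v]) ] at h0
      rw [Finset.sum_const, Finset.card_univ, nsmul_eq_mul] at h0
      have hc'0 : hA.eigenvectorBasis j u0 = 0 := by
        rcases mul_eq_zero.mp h0 with h | h
        · exact absurd h (ne_of_gt hcard)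
        · rcases mul_eq_zero.mp h with h | h
          · exact h
          · exact absurd h hcne
      have h1 := horth j j
      rw [hinner, if_pos rfl] at h1
      rw [Finset.sum_congr rfl (fun v _ => by rw [hcv' v, hc'0]) ] at h1
      simp at h1
    have hψj0 : ψ j0 = (Fintype.card V : ℝ) * c := by
      calc ψ j0 = ∑ v : V, U v j0 := rfl
      _ = ∑ _v : V, c := Finset.sum_congr rfl (fun v _ => by rw [hcol j0 v, hcv])
      _ = (Fintype.card V : ℝ) * c := by
          rw [Finset.sum_const, Finset.card_univ, nsmul_eq_mul]
    have hsum1 : ∑ u, x u = (Fintype.card V : ℝ) * c * y j0 := by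
      rw [hsumx, dotProduct]
      rw [Finset.sum_eq_single j0]
      · rw [hψj0]
      · intro j _ hjne
        rw [hψ0 j (huniq j hjne)]; ring
      · intro h; exact absurd (Finset.mem_univ j0) h
    have hLHS : q (δ : ℝ) * (∑ u, x u) ^ 2 / (Fintype.card V : ℝ)
        = q (δ : ℝ) * (y j0) ^ 2 := by
      rw [hsum1]
      have h1 : ((Fintype.card V : ℝ) * c * y j0) ^ 2
          = (Fintype.card V : ℝ) * ((Fintype.card V : ℝ) * c ^ 2 * (y j0) ^ 2) := by ring
      rw [h1, hnc, one_mul, mul_div_assoc, mul_div_cancel_left₀ _ (ne_of_gt hcard)]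
    calc (c3 * (δ : ℝ) ^ 3 + c2 * (δ : ℝ) ^ 2 + c1 * δ + c0) * (∑ u, x u) ^ 2
        / (Fintype.card V : ℝ)
        = q (δ : ℝ) * (∑ u, x u) ^ 2 / (Fintype.card V : ℝ) := rfl
    _ = q (δ : ℝ) * (y j0) ^ 2 := hLHS
    _ ≤ ∑ j, q (μ' j) * (y j) ^ 2 := by
        rw [← Finset.add_sum_erase _ _ (Finset.mem_univ j0), hj0]
        have h2 : 0 ≤ ∑ j ∈ Finset.univ.erase j0, q (μ' j) * (y j) ^ 2 := by
          refine Finset.sum_nonneg (fun j hj => ?_)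
          exact mul_nonneg (hqspec j (huniq j (Finset.ne_of_mem_erase hj))) (sq_nonneg _)
        linarith
  · push_neg at hex
    have h0 : ∑ u, x u = 0 := by
      rw [hsumx, dotProduct]
      refine Finset.sum_eq_zero (fun j _ => ?_)
      rw [hψ0 j (hex j)]; ring
    rw [h0]
    have hpos : 0 ≤ ∑ j, q (μ' j) * (y j) ^ 2 :=
      Finset.sum_nonneg (fun j _ => mul_nonneg (hqspec j (hex j)) (sq_nonneg _))
    simpa using hpos

lemma dot_single (M : Matrix V V ℝ) (u : V) :
    (Pi.single u 1 : V → ℝ) ⬝ᵥ (M *ᵥ Pi.single u 1) = M u u := by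
  simp [Matrix.mulVec_single, single_dotProduct]

lemma dot3 (M : Matrix V V ℝ) (a b c : V) :
    ((Pi.single a 1 : V → ℝ) - Pi.single b 1 + Pi.single c 1) ⬝ᵥ
      (M *ᵥ ((Pi.single a 1 : V → ℝ) - Pi.single b 1 + Pi.single c 1))
    = M a a + M b b + M c c - M a b - M b a - M b c - M c b + M a c + M c a := by
  simp [Matrix.mulVec_add, Matrix.mulVec_sub, Matrix.mulVec_single,
    dotProduct_add, dotProduct_sub, add_dotProduct,
    sub_dotProduct, single_dotProduct]
  ring

lemma spectrum_vec {M : Matrix V V ℝ} {x : ℝ} (hx : x ∈ spectrum ℝ M) :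
    ∃ v : V → ℝ, v ≠ 0 ∧ M *ᵥ v = x • v := by
  rw [spectrum.mem_iff] at hx
  rw [Matrix.isUnit_iff_isUnit_det, isUnit_iff_ne_zero, not_not] at hx
  obtain ⟨v, hv0, hv⟩ := (Matrix.exists_mulVec_eq_zero_iff).mpr hx
  refine ⟨v, hv0, ?_⟩
  rw [Matrix.sub_mulVec] at hv
  have h1 : (algebraMap ℝ (Matrix V V ℝ) x) *ᵥ v = x • v := by
    rw [Algebra.algebraMap_eq_smul_one, Matrix.smul_mulVec, Matrix.one_mulVec]
  rw [h1, sub_eq_zero] at hv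
  exact hv.symm

lemma complete_spectrum {G : SimpleGraph V} [DecidableRel G.Adj]
    (hcomp : ∀ u v : V, u ≠ v → G.Adj u v) {x : ℝ}
    (hx : x ∈ spectrum ℝ (G.adjMatrix ℝ)) :
    x = -1 ∨ x = (Fintype.card V : ℝ) - 1 := by
  obtain ⟨v, hv0, hv⟩ := spectrum_vec hx
  by_cases hx1 : x = -1
  · exact Or.inl hx1
  · right
    have hap : ∀ u, (G.adjMatrix ℝ *ᵥ v) u = (∑ w, v w) - v u := by
      intro u
      rw [SimpleGraph.adjMatrix_mulVec_apply]
      have hN : G.neighborFinset u = Finset.univ.erase u := by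
        ext w
        simp only [SimpleGraph.mem_neighborFinset, Finset.mem_erase, Finset.mem_univ, and_true]
        constructor
        · intro h; exact (G.ne_of_adj h).symm
        · intro h; exact hcomp u w (Ne.symm h)
      rw [hN, Finset.sum_erase_eq_sub (Finset.mem_univ u)]
    have heq : ∀ u, (x + 1) * v u = ∑ w, v w := by
      intro u
      have := congrFun hv u
      rw [hap u] at this
      simp only [Pi.smul_apply, smul_eq_mul] at this
      linarith
    have hx1' : x + 1 ≠ 0 := fun h => hx1 (by linarith)
    have hconst : ∀ u w, v u = v w := by
      intro u w
      have := (heq u).trans (heq w).symm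
      exact mul_left_cancel₀ hx1' this
    obtain ⟨u0, hu0⟩ : ∃ u, v u ≠ 0 := Function.ne_iff.mp hv0
    have hsum : ∑ w, v w = (Fintype.card V : ℝ) * v u0 := by
      calc ∑ w, v w = ∑ _w : V, v u0 := Finset.sum_congr rfl (fun w _ => hconst w u0)
      _ = (Fintype.card V : ℝ) * v u0 := by
          rw [Finset.sum_const, Finset.card_univ, nsmul_eq_mul]
    have := heq u0
    rw [hsum] at this
    have h2 : (x + 1) = (Fintype.card V : ℝ) := mul_right_cancel₀ hu0 this
    linarith

lemma walk_P3 {G : SimpleGraph V} :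
    ∀ {u v : V} (_p : G.Walk u v), u ≠ v → ¬G.Adj u v →
    ∃ a b c : V, G.Adj a b ∧ G.Adj b c ∧ ¬G.Adj a c ∧ a ≠ c := by
  intro u v p
  induction p with
  | nil => intro h _; exact absurd rfl h
  | @cons u w v huw q ih =>
    intro hne hnadj
    by_cases hwv : w = v
    · subst hwv; exact absurd huw hnadj
    · by_cases hadj : G.Adj w v
      · exact ⟨u, w, v, huw, hadj, hnadj, hne⟩
      · exact ih hwv hadj

lemma pow_apply_zero_of_dist {G : SimpleGraph V} [DecidableRel G.Adj] {u v : V} {k : ℕ}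
    (h : k < G.dist u v) : (G.adjMatrix ℝ ^ k) u v = 0 := by
  rw [SimpleGraph.adjMatrix_pow_apply_eq_card_walk]
  norm_cast
  rw [Fintype.card_eq_zero_iff]
  constructor
  rintro ⟨p, hp⟩
  have h1 := G.dist_le p
  have h2 : p.length = k := hp
  omega

set_option maxHeartbeats 2000000 in
theorem alpha3_optimal_bound' {V : Type*} [Fintype V] [DecidableEq V]
    (G : SimpleGraph V) [DecidableRel G.Adj]
    (hG : G.Connected) (δ : ℕ) (hreg : G.IsRegularOfDegree δ)
    (n : ℕ) (hn : Fintype.card V = n)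
    (d : ℕ) (hd : 3 ≤ d) (θ : ℕ → ℝ)
    (hmono : ∀ i j : ℕ, i < j → j ≤ d → θ j < θ i)
    (hspec : spectrum ℝ (G.adjMatrix ℝ) = {x : ℝ | ∃ i ≤ d, θ i = x})
    (hθ0 : θ 0 = δ)
    (Δ : ℝ)
    (hΔ : IsGreatest {x : ℝ | ∃ u : V, ((G.adjMatrix ℝ) ^ 3) u u = x} Δ)
    (s : ℕ) (hsd : s < d)
    (hs : θ s ≥ -(θ 0 ^ 2 + θ 0 * θ d - Δ) / (θ 0 * (θ d + 1)))
    (hslargest : ∀ t ≤ d,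
      θ t ≥ -(θ 0 ^ 2 + θ 0 * θ d - Δ) / (θ 0 * (θ d + 1)) → t ≤ s)
    (m : ℕ) (S : Finset V) (hSind : G.IsKIndepSet 3 S) (hScard : S.card = m) :
    (m : ℝ) ≤
      (n : ℝ) * (Δ - θ 0 * (θ s + θ (s + 1) + θ d) - θ s * θ (s + 1) * θ d) /
        ((θ 0 - θ s) * (θ 0 - θ (s + 1)) * (θ 0 - θ d)) := by
  classical
  subst hn
  subst hScard
  haveI hnV : Nonempty V := hG.nonempty
  set A : Matrix V V ℝ := G.adjMatrix ℝ with hAdef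
  have hcard : (0:ℝ) < (Fintype.card V : ℝ) := by exact_mod_cast Fintype.card_pos
  have hmono' : ∀ i j : ℕ, i ≤ j → j ≤ d → θ j ≤ θ i := by
    intro i j hij hjd
    rcases eq_or_lt_of_le hij with h | h
    · rw [h]
    · exact le_of_lt (hmono i j h hjd)
  have hθmem : ∀ i, i ≤ d → θ i ∈ spectrum ℝ A := by
    intro i hi
    rw [hspec]
    exact ⟨i, hi, rfl⟩
  have hspec' : ∀ x ∈ spectrum ℝ A, ∃ i, i ≤ d ∧ θ i = x := by
    intro x hx
    rw [hspec] at hx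
    obtain ⟨i, hi, h⟩ := hx
    exact ⟨i, hi, h⟩
  -- V is nontrivial
  have hNT : Nontrivial V := by
    by_contra hsub
    rw [not_nontrivial_iff_subsingleton] at hsub
    have hA0 : A = 0 := by
      ext u v
      have : u = v := Subsingleton.elim u v
      subst this
      simp [hAdef]
    have hzero : ∀ x ∈ spectrum ℝ A, x = 0 := by
      intro x hx
      by_contra hx0
      rw [spectrum.mem_iff, hA0, sub_zero] at hx
      exact hx (IsUnit.map (algebraMap ℝ (Matrix V V ℝ)) (isUnit_iff_ne_zero.mpr hx0))
    have h0 := hzero (θ 0) (hθmem 0 (by omega))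
    have h1 := hzero (θ 1) (hθmem 1 (by omega))
    have := hmono 0 1 (by omega) (by omega)
    rw [h0, h1] at this
    exact lt_irrefl _ this
  -- δ ≥ 1
  have hδ1 : 1 ≤ δ := by
    obtain ⟨u, v, huv⟩ := hNT
    obtain ⟨p⟩ := hG.preconnected u v
    cases p with
    | nil => exact absurd rfl huv
    | cons h q =>
        have : 0 < G.degree u := G.degree_pos_iff_exists_adj u |>.mpr ⟨_, h⟩
        rw [hreg u] at this
        omega
  have hθ0pos : (0:ℝ) < θ 0 := by
    rw [hθ0]
    exact_mod_cast hδ1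
  -- G is not complete
  have hncomp : ∃ u v : V, u ≠ v ∧ ¬G.Adj u v := by
    by_contra h
    push_neg at h
    have hcomp : ∀ u v : V, u ≠ v → G.Adj u v := h
    have h1 := complete_spectrum hcomp (hθmem 1 (by omega))
    have h2 := complete_spectrum hcomp (hθmem 2 (by omega))
    have h3 := complete_spectrum hcomp (hθmem 3 (by omega))
    have h12 := hmono 1 2 (by omega) (by omega)
    have h23 := hmono 2 3 (by omega) (by omega)
    rcases h1 with h1 | h1 <;> rcases h2 with h2 | h2 <;> rcases h3 with h3 | h3 <;> linarith
  -- there is an induced P3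
  obtain ⟨u₀, v₀, hne₀, hnadj₀⟩ := hncomp
  obtain ⟨pw⟩ := hG.preconnected u₀ v₀
  obtain ⟨a, b, c, hab, hbc, hac, hane⟩ := walk_P3 pw hne₀ hnadj₀
  -- θ d < -1 via the linear polynomial x - θ d
  have hθd : θ d < -1 := by
    have hq : ∀ μ : ℝ, μ ∈ spectrum ℝ A → μ ≠ (δ : ℝ) →
        0 ≤ 0 * μ ^ 3 + 0 * μ ^ 2 + 1 * μ + (-(θ d)) := by
      intro μ hμ _
      obtain ⟨i, hid, hi⟩ := hspec' μ hμ
      have := hmono' i d (by omega) (le_refl d)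
      rw [hi] at this
      linarith
    have hkey := key_quadform hG hreg (-(θ d)) 1 0 0 hq
      ((Pi.single a 1 : V → ℝ) - Pi.single b 1 + Pi.single c 1)
    set B : Matrix V V ℝ := (0:ℝ) • A ^ 3 + (0:ℝ) • A ^ 2 + (1:ℝ) • A + (-(θ d)) • 1 with hBdef
    have hsum : ∑ u, (((Pi.single a 1 : V → ℝ) - Pi.single b 1 + Pi.single c 1) : V → ℝ) u = 1 := by
      simp [Pi.single_apply, Finset.sum_add_distrib, Finset.sum_sub_distrib]
    have hBval : ∀ i j : V, B i j = A i j + (-(θ d)) * (1 : Matrix V V ℝ) i j := by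
      intro i j
      simp [hBdef, Matrix.add_apply, Matrix.smul_apply]
    have hd3 : ((Pi.single a 1 : V → ℝ) - Pi.single b 1 + Pi.single c 1) ⬝ᵥ
        (B *ᵥ ((Pi.single a 1 : V → ℝ) - Pi.single b 1 + Pi.single c 1))
        = -4 - 3 * θ d := by
      rw [dot3]
      have hAaa : A a a = 0 := by simp [hAdef]
      have hAbb : A b b = 0 := by simp [hAdef]
      have hAcc : A c c = 0 := by simp [hAdef]
      have hAab : A a b = 1 := by simp [hAdef, hab]
      have hAba : A b a = 1 := by simp [hAdef, hab.symm]
      have hAbc : A b c = 1 := by simp [hAdef, hbc]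
      have hAcb : A c b = 1 := by simp [hAdef, hbc.symm]
      have hAac : A a c = 0 := by simp [hAdef, hac]
      have hAca : A c a = 0 := by
        have : ¬ G.Adj c a := fun h => hac h.symm
        simp [hAdef, this]
      have hane' : b ≠ a := G.ne_of_adj hab.symm
      have hbne : b ≠ c := G.ne_of_adj hbc
      simp only [hBval, Matrix.one_apply_eq, Matrix.one_apply_ne hane,
        Matrix.one_apply_ne hane', Matrix.one_apply_ne hbne,
        Matrix.one_apply_ne (Ne.symm hane), Matrix.one_apply_ne (Ne.symm hane'),
        Matrix.one_apply_ne (Ne.symm hbne), hAaa, hAbb, hAcc, hAab, hAba, hAbc, hAcb,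
        hAac, hAca]
      ring
    rw [hsum, hd3] at hkey
    have hθ0d : θ d < θ 0 := hmono 0 d (by omega) (le_refl d)
    have hLHS : 0 < (0 * (δ:ℝ)^3 + 0 * (δ:ℝ)^2 + 1 * δ + (-(θ d))) * 1 ^ 2
        / (Fintype.card V : ℝ) := by
      apply div_pos _ hcard
      rw [← hθ0]
      nlinarith
    nlinarith
  -- diagonal entries of cubic polynomials in A
  have hdiagB : ∀ (c0 c1 c2 c3 : ℝ) (u : V),
      (c3 • A^3 + c2 • A^2 + c1 • A + c0 • (1 : Matrix V V ℝ)) u u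
        = c3 * (A^3) u u + c2 * (δ : ℝ) + c0 := by
    intro c0 c1 c2 c3 u
    have hA2 : (A^2) u u = (δ : ℝ) := by
      rw [pow_two, hAdef, SimpleGraph.adjMatrix_mul_self_apply_self, hreg u]
    have hAuu : A u u = 0 := by simp [hAdef]
    have h1uu : (1 : Matrix V V ℝ) u u = 1 := Matrix.one_apply_eq u
    simp only [Matrix.add_apply, Matrix.smul_apply, hA2, hAuu, h1uu, smul_eq_mul]
    ring
  have hΔub : ∀ u : V, (A^3) u u ≤ Δ := fun u => hΔ.2 ⟨u, rfl⟩
  obtain ⟨ustar, hustar⟩ := hΔ.1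
  have hdiagkey : ∀ (c0 c1 c2 c3 : ℝ),
      (∀ μ : ℝ, μ ∈ spectrum ℝ A → μ ≠ (δ:ℝ) → 0 ≤ c3*μ^3+c2*μ^2+c1*μ+c0) → ∀ u : V,
      (c3 * (δ:ℝ)^3 + c2*(δ:ℝ)^2 + c1*δ + c0) / (Fintype.card V : ℝ)
        ≤ c3 * (A^3) u u + c2 * (δ:ℝ) + c0 := by
    intro c0 c1 c2 c3 hq u
    have hkey := key_quadform hG hreg c0 c1 c2 c3 hq (Pi.single u 1)
    have hsum : ∑ w, (Pi.single u 1 : V → ℝ) w = 1 := by simp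
    rw [hsum, dot_single, hdiagB] at hkey
    simpa using hkey
  have hθ1d : θ d < θ 1 := hmono 1 d (by omega) (le_refl d)
  have hθ01 : θ 1 < θ 0 := hmono 0 1 (by omega) (by omega)
  have hδθ : (δ : ℝ) = θ 0 := hθ0.symm
  -- Hoffman-type inequality P2
  have hP2 : θ 0 + θ 1 * θ d ≤ (θ 0 - θ 1) * (θ 0 - θ d) / (Fintype.card V : ℝ) := by
    have hq : ∀ μ : ℝ, μ ∈ spectrum ℝ A → μ ≠ (δ:ℝ) →
        0 ≤ (0:ℝ)*μ^3 + (-1)*μ^2 + (θ 1 + θ d)*μ + (-(θ 1 * θ d)) := by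
      intro μ hμ hne
      obtain ⟨i, hid, hi⟩ := hspec' μ hμ
      have hi0 : i ≠ 0 := by
        rintro rfl
        exact hne (by rw [← hi, hθ0])
      have h1 : μ ≤ θ 1 := hi ▸ hmono' 1 i (by omega) hid
      have h2 : θ d ≤ μ := hi ▸ hmono' i d hid (le_refl d)
      nlinarith
    have hthis := hdiagkey _ _ _ _ hq a
    rw [hδθ] at hthis
    calc θ 0 + θ 1 * θ d = -(0 * (A^3) a a + (-1) * θ 0 + (-(θ 1 * θ d))) := by ring
    _ ≤ -(((0:ℝ)*(θ 0)^3 + (-1)*(θ 0)^2 + (θ 1 + θ d)*(θ 0) + (-(θ 1 * θ d)))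
          / (Fintype.card V : ℝ)) := by linarith
    _ = (θ 0 - θ 1) * (θ 0 - θ d) / (Fintype.card V : ℝ) := by
        rw [← neg_div]
        congr 1
        ring
  -- lower bound on Δ via (x-θ1)²(x-θd)
  have hΔlow : (2*θ 1 + θ d) * θ 0 + θ 1^2 * θ d
      + (θ 0 - θ 1)^2*(θ 0 - θ d)/(Fintype.card V : ℝ) ≤ Δ := by
    have hq : ∀ μ : ℝ, μ ∈ spectrum ℝ A → μ ≠ (δ:ℝ) →
        0 ≤ (1:ℝ)*μ^3 + (-(2*θ 1 + θ d))*μ^2 + (θ 1^2 + 2*θ 1*θ d)*μ + (-(θ 1^2*θ d)) := by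
      intro μ hμ hne
      obtain ⟨i, hid, hi⟩ := hspec' μ hμ
      have h2 : θ d ≤ μ := hi ▸ hmono' i d hid (le_refl d)
      nlinarith [sq_nonneg (μ - θ 1)]
    have hthis := hdiagkey _ _ _ _ hq ustar
    rw [hustar, hδθ] at hthis
    have e1 : ((1:ℝ)*(θ 0)^3 + (-(2*θ 1 + θ d))*(θ 0)^2 + (θ 1^2 + 2*θ 1*θ d)*(θ 0)
        + (-(θ 1^2*θ d))) = (θ 0 - θ 1)^2*(θ 0 - θ d) := by ring
    rw [e1] at hthis
    linarith
  -- 1 ≤ s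
  have hDneg : θ 0 * (θ d + 1) < 0 := mul_neg_of_pos_of_neg hθ0pos (by linarith)
  have hθ1c : θ 1 ≥ -(θ 0^2 + θ 0*θ d - Δ)/(θ 0*(θ d+1)) := by
    rw [ge_iff_le, div_le_iff_of_neg hDneg]
    have hkey2 := mul_le_mul_of_nonneg_left hP2 (le_of_lt (sub_pos.mpr hθ01))
    have e2 : (θ 0 - θ 1)*((θ 0 - θ 1)*(θ 0 - θ d)/(Fintype.card V : ℝ))
        = (θ 0 - θ 1)^2*(θ 0 - θ d)/(Fintype.card V : ℝ) := by ring
    rw [e2] at hkey2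
    nlinarith [hΔlow, hkey2]
  have hs1 : 1 ≤ s := hslargest 1 (by omega) hθ1c
  -- the optimal cubic polynomial p(x) = (x - θ s)(x - θ (s+1))(x - θ d)
  have hs1d : s + 1 ≤ d := hsd
  have hθs0 : θ s < θ 0 := hmono 0 s (by omega) (by omega)
  have hθs10 : θ (s+1) < θ 0 := hmono 0 (s+1) (by omega) (by omega)
  have hθd0 : θ d < θ 0 := hmono 0 d (by omega) (le_refl d)
  set P0 : ℝ := (θ 0 - θ s) * (θ 0 - θ (s + 1)) * (θ 0 - θ d) with hP0def
  have hP0pos : 0 < P0 :=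
    mul_pos (mul_pos (sub_pos.mpr hθs0) (sub_pos.mpr hθs10)) (sub_pos.mpr hθd0)
  set W : ℝ := Δ - θ 0 * (θ s + θ (s + 1) + θ d) - θ s * θ (s + 1) * θ d with hWdef
  set cc2 : ℝ := -(θ s + θ (s+1) + θ d) with hcc2
  set cc1 : ℝ := θ s * θ (s+1) + θ s * θ d + θ (s+1) * θ d with hcc1
  set cc0 : ℝ := -(θ s * θ (s+1) * θ d) with hcc0
  have hq : ∀ μ : ℝ, μ ∈ spectrum ℝ A → μ ≠ (δ:ℝ) →
      0 ≤ (1:ℝ)*μ^3 + cc2*μ^2 + cc1*μ + cc0 := by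
    intro μ hμ hne
    obtain ⟨i, hid, hi⟩ := hspec' μ hμ
    have hi0 : i ≠ 0 := by
      rintro rfl
      exact hne (by rw [← hi, hθ0])
    have hfac : 0 ≤ (μ - θ s) * (μ - θ (s+1)) * (μ - θ d) := by
      rcases le_or_gt i s with h | h
      · have f1 : θ s ≤ μ := hi ▸ hmono' i s h (by omega)
        have f2 : θ (s+1) ≤ μ := by
          have := hmono s (s+1) (by omega) (by omega)
          linarith
        have f3 : θ d ≤ μ := hi ▸ hmono' i d (by omega) (le_refl d)
        have := mul_nonneg (mul_nonneg (by linarith : (0:ℝ) ≤ μ - θ s)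
          (by linarith : (0:ℝ) ≤ μ - θ (s+1))) (by linarith : (0:ℝ) ≤ μ - θ d)
        linarith
      · have g1 : μ ≤ θ (s+1) := hi ▸ hmono' (s+1) i (by omega) hid
        have g2 : μ ≤ θ s := by
          have := hmono s (s+1) (by omega) (by omega)
          linarith
        have g3 : θ d ≤ μ := hi ▸ hmono' i d hid (le_refl d)
        have h12 : 0 ≤ (μ - θ s) * (μ - θ (s+1)) := by
          have := mul_nonneg (by linarith : (0:ℝ) ≤ θ s - μ)
            (by linarith : (0:ℝ) ≤ θ (s+1) - μ)
          nlinarith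
        have := mul_nonneg h12 (by linarith : (0:ℝ) ≤ μ - θ d)
        linarith
    rw [hcc2, hcc1, hcc0]
    nlinarith [hfac]
  have eP0 : (1:ℝ)*(δ:ℝ)^3 + cc2*(δ:ℝ)^2 + cc1*(δ:ℝ) + cc0 = P0 := by
    rw [hδθ, hP0def, hcc2, hcc1, hcc0]
    ring
  -- W is positive
  have hWge : P0 / (Fintype.card V : ℝ) ≤ W := by
    have hthis := hdiagkey cc0 cc1 cc2 1 hq ustar
    rw [hustar, eP0] at hthis
    calc P0 / (Fintype.card V : ℝ) ≤ 1 * Δ + cc2 * (δ:ℝ) + cc0 := hthis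
    _ = W := by rw [hδθ, hWdef, hcc2, hcc0]; ring
  have hWpos : 0 < W := lt_of_lt_of_le (div_pos hP0pos hcard) hWge
  -- indicator vector of S
  set x : V → ℝ := fun u => if u ∈ S then 1 else 0 with hx
  have hSsum : ∑ u, x u = (S.card : ℝ) := by
    rw [hx]
    calc ∑ u, (if u ∈ S then (1:ℝ) else 0) = ∑ u ∈ Finset.univ ∩ S, (1:ℝ) :=
      Finset.sum_ite_mem _ _ _
    _ = (S.card : ℝ) := by rw [Finset.univ_inter, Finset.sum_const, nsmul_eq_mul, mul_one]
  have hdotind : ∀ (M : Matrix V V ℝ), (∀ u ∈ S, ∀ v ∈ S, u ≠ v → M u v = 0) →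
      x ⬝ᵥ (M *ᵥ x) = ∑ u ∈ S, M u u := by
    intro M hoff
    have h1 : ∀ g : V → ℝ, ∑ u, x u * g u = ∑ u ∈ S, g u := by
      intro g
      calc ∑ u, x u * g u = ∑ u, (if u ∈ S then g u else 0) := by
            refine Finset.sum_congr rfl fun u _ => ?_
            by_cases h : u ∈ S <;> simp [hx, h]
      _ = ∑ u ∈ Finset.univ ∩ S, g u := Finset.sum_ite_mem _ _ _
      _ = ∑ u ∈ S, g u := by rw [Finset.univ_inter]
    have h2 : ∀ u : V, (M *ᵥ x) u = ∑ v ∈ S, M u v := by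
      intro u
      calc (M *ᵥ x) u = ∑ v, M u v * x v := rfl
      _ = ∑ v, (if v ∈ S then M u v else 0) := by
            refine Finset.sum_congr rfl fun v _ => ?_
            by_cases h : v ∈ S <;> simp [hx, h]
      _ = ∑ v ∈ Finset.univ ∩ S, M u v := Finset.sum_ite_mem _ _ _
      _ = ∑ v ∈ S, M u v := by rw [Finset.univ_inter]
    calc x ⬝ᵥ (M *ᵥ x) = ∑ u, x u * (M *ᵥ x) u := rfl
    _ = ∑ u ∈ S, (M *ᵥ x) u := h1 _
    _ = ∑ u ∈ S, ∑ v ∈ S, M u v := Finset.sum_congr rfl fun u _ => h2 u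
    _ = ∑ u ∈ S, M u u := by
        refine Finset.sum_congr rfl fun u hu => ?_
        refine Finset.sum_eq_single_of_mem u hu fun v hv hvu => ?_
        exact hoff u hu v hv (Ne.symm hvu)
  -- off-diagonal entries vanish on S
  have hoff : ∀ u ∈ S, ∀ v ∈ S, u ≠ v →
      ((1:ℝ) • A^3 + cc2 • A^2 + cc1 • A + cc0 • (1 : Matrix V V ℝ)) u v = 0 := by
    intro u hu v hv huv
    have hdist : 3 < G.dist u v := hSind u hu v hv huv
    have h3 : (A^3) u v = 0 := pow_apply_zero_of_dist hdist
    have h2 : (A^2) u v = 0 := pow_apply_zero_of_dist (by omega)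
    have h1 : A u v = 0 := by
      have := pow_apply_zero_of_dist (G := G) (u := u) (v := v) (k := 1) (by omega)
      rwa [pow_one] at this
    have h0 : (1 : Matrix V V ℝ) u v = 0 := Matrix.one_apply_ne huv
    simp [Matrix.add_apply, Matrix.smul_apply, h3, h2, h1, h0]
  -- the quadratic form bound
  have hqf := key_quadform hG hreg cc0 cc1 cc2 1 hq x
  rw [hSsum, eP0] at hqf
  have hupper : x ⬝ᵥ (((1:ℝ) • A^3 + cc2 • A^2 + cc1 • A + cc0 • (1 : Matrix V V ℝ)) *ᵥ x)
      ≤ (S.card : ℝ) * W := by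
    rw [hdotind _ hoff]
    have hbd : ∀ u ∈ S, ((1:ℝ) • A^3 + cc2 • A^2 + cc1 • A + cc0 • (1 : Matrix V V ℝ)) u u ≤ W := by
      intro u _
      rw [hdiagB]
      have := hΔub u
      calc 1 * (A^3) u u + cc2 * (δ:ℝ) + cc0 ≤ 1 * Δ + cc2 * (δ:ℝ) + cc0 := by linarith
      _ = W := by rw [hδθ, hWdef, hcc2, hcc0]; ring
    calc ∑ u ∈ S, ((1:ℝ) • A^3 + cc2 • A^2 + cc1 • A + cc0 • (1 : Matrix V V ℝ)) u u
        ≤ S.card • W := Finset.sum_le_card_nsmul _ _ _ hbd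
    _ = (S.card : ℝ) * W := nsmul_eq_mul _ _
  have hmain : P0 * (S.card : ℝ)^2 / (Fintype.card V : ℝ) ≤ (S.card : ℝ) * W :=
    le_trans hqf hupper
  -- conclude
  rw [le_div_iff₀ hP0pos]
  rcases Nat.eq_zero_or_pos S.card with h0 | hpos
  · rw [h0]
    simp only [Nat.cast_zero, zero_mul]
    positivity
  · have hmpos : (0:ℝ) < (S.card : ℝ) := by exact_mod_cast hpos
    rw [div_le_iff₀ hcard] at hmain
    have h' : (S.card:ℝ) * (P0 * (S.card:ℝ)) ≤ (S.card:ℝ) * (W * (Fintype.card V : ℝ)) := by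
      calc (S.card:ℝ) * (P0 * (S.card:ℝ)) = P0 * (S.card:ℝ)^2 := by ring
      _ ≤ (S.card:ℝ) * W * (Fintype.card V : ℝ) := hmain
      _ = (S.card:ℝ) * (W * (Fintype.card V : ℝ)) := by ring
    rw [mul_le_mul_iff_of_pos_left hmpos] at h'
    linarith

end Alpha3Aux

/-- **Theorem (optimal polynomial-method bound on the 3-independence number).**
Let `G` be a connected `δ`-regular graph on `n` vertices with adjacency matrix `A` and
distinct eigenvalues `θ 0 > θ 1 > ⋯ > θ d`, `θ 0 = δ`, `d ≥ 3`.  Let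
`Δ = max_u (A^3) u u` and let `s` be the largest index with
`θ s ≥ -(θ 0 ^ 2 + θ 0 * θ d - Δ) / (θ 0 * (θ d + 1))`.  Then
`α₃(G) ≤ n * (Δ - θ 0 * (θ s + θ (s+1) + θ d) - θ s * θ (s+1) * θ d) /
  ((θ 0 - θ s) * (θ 0 - θ (s+1)) * (θ 0 - θ d))`. -/
theorem alpha3_optimal_bound {V : Type*} [Fintype V] [DecidableEq V]
    (G : SimpleGraph V) [DecidableRel G.Adj]
    (hG : G.Connected) (δ : ℕ) (hreg : G.IsRegularOfDegree δ)
    (n : ℕ) (hn : Fintype.card V = n)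
    (d : ℕ) (hd : 3 ≤ d) (θ : ℕ → ℝ)
    (hmono : ∀ i j : ℕ, i < j → j ≤ d → θ j < θ i)
    (hspec : spectrum ℝ (G.adjMatrix ℝ) = {x : ℝ | ∃ i ≤ d, θ i = x})
    (hθ0 : θ 0 = δ)
    (Δ : ℝ)
    (hΔ : IsGreatest {x : ℝ | ∃ u : V, ((G.adjMatrix ℝ) ^ 3) u u = x} Δ)
    (s : ℕ) (hsd : s < d)
    (hs : θ s ≥ -(θ 0 ^ 2 + θ 0 * θ d - Δ) / (θ 0 * (θ d + 1)))
    (hslargest : ∀ t ≤ d,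
      θ t ≥ -(θ 0 ^ 2 + θ 0 * θ d - Δ) / (θ 0 * (θ d + 1)) → t ≤ s) :
    (G.kIndepNum 3 : ℝ) ≤
      (n : ℝ) * (Δ - θ 0 * (θ s + θ (s + 1) + θ d) - θ s * θ (s + 1) * θ d) /
        ((θ 0 - θ s) * (θ 0 - θ (s + 1)) * (θ 0 - θ d)) := by
  classical
  have hset : ({m : ℕ | ∃ S : Finset V, G.IsKIndepSet 3 S ∧ S.card = m}).Nonempty :=
    ⟨0, ∅, fun u hu => absurd hu (Finset.notMem_empty u), Finset.card_empty⟩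
  have hbdd : BddAbove {m : ℕ | ∃ S : Finset V, G.IsKIndepSet 3 S ∧ S.card = m} := by
    refine ⟨Fintype.card V, fun m hm => ?_⟩
    obtain ⟨S, _, h⟩ := hm
    exact h ▸ S.card_le_univ
  obtain ⟨S, hSind, hScard⟩ := Nat.sSup_mem hset hbdd
  exact Alpha3Aux.alpha3_optimal_bound' G hG δ hreg n hn d hd θ hmono hspec hθ0 Δ hΔ s hsd
    hs hslargest (G.kIndepNum 3) S hSind hScard
end

section
/- Let G be a connected δ-regular simple graph on n vertices with girth greater than 3 and distinct adjacency-matrix eigenvalues θ_0 > θ_1 > ⋯ > θ_d, where θ_0 = δ and d ≥ 3. Let θ_s be the least eigenvalue such that θ_s ≥ −(θ_d + θ_0)/(θ_d + 1). Then α_3(G) ≤ n·(−θ_0·(θ_s + θ_{s+1} + θ_d) − θ_s·θ_{s+1}·θ_d) / ((θ_0 − θ_s)·(θ_0 − θ_{s+1})·(θ_0 − θ_d)). -/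
open Matrix Finset SimpleGraph

set_option linter.unusedSectionVars false
set_option linter.unusedVariables false
set_option maxHeartbeats 1000000

namespace Alpha3Aux

variable {V : Type*} [Fintype V] [DecidableEq V]

lemma dot_sum (x : V → ℝ) (f : V → V → ℝ) : x ⬝ᵥ (∑ i, f i) = ∑ i, x ⬝ᵥ f i := by
  simp only [dotProduct, Finset.sum_apply, Finset.mul_sum]
  exact Finset.sum_comm

lemma dot_inner (x y : EuclideanSpace ℝ V) : (x : V → ℝ) ⬝ᵥ (y : V → ℝ) = inner (𝕜 := ℝ) x y := by
  simp [PiLp.inner_apply, RCLike.inner_apply, dotProduct, mul_comm]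

lemma quadform_eigen {A : Matrix V V ℝ} (hA : A.IsHermitian) (M : Matrix V V ℝ) (ν : V → ℝ)
    (hM : ∀ i, M *ᵥ (hA.eigenvectorBasis i : V → ℝ) = ν i • (hA.eigenvectorBasis i : V → ℝ))
    (x : V → ℝ) :
    x ⬝ᵥ (M *ᵥ x) = ∑ i, ν i * ((hA.eigenvectorBasis i : V → ℝ) ⬝ᵥ x)^2 := by
  classical
  set b := hA.eigenvectorBasis with hb
  set c : V → ℝ := fun i => ((b i : V → ℝ) ⬝ᵥ x) with hc
  have hsum : (∑ i, c i • (b i : V → ℝ)) = x := by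
    have h := b.sum_repr' (WithLp.toLp 2 x)
    simp_rw [← dot_inner] at h
    have h' := congrArg (WithLp.ofLp (p := 2)) h
    simpa using h'
  have hMx : M *ᵥ x = ∑ i, (ν i * c i) • (b i : V → ℝ) := by
    conv_lhs => rw [← hsum]
    rw [← M.mulVecLin_apply, map_sum]
    refine Finset.sum_congr rfl fun i _ => ?_
    rw [LinearMap.map_smul, M.mulVecLin_apply, hM i, smul_smul, mul_comm]
  rw [hMx, dot_sum x (fun i => (ν i * c i) • (b i : V → ℝ))]
  refine Finset.sum_congr rfl fun i _ => ?_
  rw [dotProduct_smul, smul_eq_mul, dotProduct_comm]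
  ring

lemma pow_mulVec_eig (A : Matrix V V ℝ) (v : V → ℝ) (t : ℝ) (hv : A *ᵥ v = t • v) (k : ℕ) :
    A ^ k *ᵥ v = t ^ k • v := by
  induction k with
  | zero => simp
  | succ k ih => rw [pow_succ', ← mulVec_mulVec, ih, mulVec_smul, hv, smul_smul, pow_succ',
      mul_comm]

lemma cubic_mulVec_eig (A : Matrix V V ℝ) (a b c : ℝ) (v : V → ℝ) (t : ℝ)
    (hv : A *ᵥ v = t • v) :
    (A^3 + (-(a+b+c)) • A^2 + (a*b+a*c+b*c) • A + (-(a*b*c)) • (1:Matrix V V ℝ)) *ᵥ v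
      = ((t-a)*((t-b)*(t-c))) • v := by
  funext u
  have h3 := pow_mulVec_eig A v t hv 3
  have h2 := pow_mulVec_eig A v t hv 2
  simp only [add_mulVec, smul_mulVec, one_mulVec, h3, h2, hv, Pi.add_apply,
    Pi.smul_apply, smul_eq_mul]
  ring

lemma quad_mulVec_eig (A : Matrix V V ℝ) (a b : ℝ) (v : V → ℝ) (t : ℝ)
    (hv : A *ᵥ v = t • v) :
    (A^2 + (-(a+b)) • A + (a*b) • (1:Matrix V V ℝ)) *ᵥ v = ((t-a)*(t-b)) • v := by
  funext u
  have h2 := pow_mulVec_eig A v t hv 2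
  simp only [add_mulVec, smul_mulVec, one_mulVec, h2, hv, Pi.add_apply,
    Pi.smul_apply, smul_eq_mul]
  ring

lemma perron (G : SimpleGraph V) [DecidableRel G.Adj] (hG : G.Connected) {δ : ℕ}
    (hreg : G.IsRegularOfDegree δ) (v : V → ℝ) (hv : G.adjMatrix ℝ *ᵥ v = (δ:ℝ) • v)
    (x y : V) : v x = v y := by
  have hne : Nonempty V := hG.nonempty
  obtain ⟨u0, -, hmax⟩ := Finset.exists_max_image Finset.univ v
    ⟨Classical.arbitrary V, Finset.mem_univ _⟩
  have step : ∀ x, v x = v u0 → ∀ y, G.Adj x y → v y = v u0 := by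
    intro x hx y hxy
    have h1 : ∑ z ∈ G.neighborFinset x, v z = (δ:ℝ) * v x := by
      have := congrFun hv x
      simpa using this
    have h2 : ∑ z ∈ G.neighborFinset x, v u0 = (δ:ℝ) * v x := by
      rw [Finset.sum_const, hx]
      rw [G.card_neighborFinset_eq_degree x, hreg x]
      simp [mul_comm]
    have heq := (Finset.sum_eq_sum_iff_of_le
      (fun z _ => hmax z (Finset.mem_univ z))).mp (h1.trans h2.symm)
    exact heq y (by rwa [mem_neighborFinset])
  have walkstep : ∀ (a bb : V) (w : G.Walk a bb), v a = v u0 → v bb = v u0 := by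
    intro a bb w
    induction w with
    | nil => exact id
    | cons h p ih => intro ha; exact ih (step _ ha _ h)
  obtain ⟨wx⟩ := hG.preconnected u0 x
  obtain ⟨wy⟩ := hG.preconnected u0 y
  rw [walkstep _ _ wx rfl, walkstep _ _ wy rfl]

lemma no_triangle (G : SimpleGraph V) (hgirth : (3:ℕ∞) < G.girth) {a b c : V}
    (hab : G.Adj a b) (hbc : G.Adj b c) (hca : G.Adj c a) : False := by
  have hcyc : (Walk.cons hab (Walk.cons hbc (Walk.cons hca Walk.nil))).IsCycle := by
    have h1 := hab.ne
    have h2 := hbc.ne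
    have h3 := hca.ne
    have h4 := hab.ne'
    simp [Walk.isCycle_def, Walk.isTrail_def, List.nodup_cons, Sym2.eq_iff]
    aesop
  have hle : G.egirth ≤ 3 := by
    have h5 := iInf_le (fun a0 => ⨅ (w : G.Walk a0 a0), ⨅ (_ : w.IsCycle), (w.length : ℕ∞)) a
    refine le_trans h5 ?_
    have h6 := iInf_le (fun w : G.Walk a a => ⨅ (_ : w.IsCycle), (w.length : ℕ∞))
      (Walk.cons hab (Walk.cons hbc (Walk.cons hca Walk.nil)))
    refine le_trans h6 ?_
    simp [hcyc]
  have heq : (G.girth : ℕ∞) = G.egirth := by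
    rw [SimpleGraph.girth, ENat.coe_toNat]
    intro h
    rw [h] at hle
    simp at hle
  rw [← heq] at hle
  exact absurd (lt_of_lt_of_le hgirth hle) (by norm_num)

variable (G : SimpleGraph V) [DecidableRel G.Adj]

lemma sq_apply_adj (hgirth : (3:ℕ∞) < G.girth) {a b : V} (hab : G.Adj a b) :
    (G.adjMatrix ℝ ^ 2) a b = 0 := by
  rw [pow_two, adjMatrix_mul_apply]
  refine Finset.sum_eq_zero fun u hu => ?_
  rw [mem_neighborFinset] at hu
  simp only [adjMatrix_apply, ite_eq_right_iff]
  intro hub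
  exact (no_triangle G hgirth hu hub hab.symm).elim

lemma cube_apply_self (hgirth : (3:ℕ∞) < G.girth) (a : V) :
    (G.adjMatrix ℝ ^ 3) a a = 0 := by
  have h3 : (G.adjMatrix ℝ)^3 = (G.adjMatrix ℝ)^2 * G.adjMatrix ℝ := by rw [pow_succ]
  rw [h3, mul_adjMatrix_apply]
  refine Finset.sum_eq_zero fun u hu => ?_
  rw [mem_neighborFinset] at hu
  exact sq_apply_adj G hgirth hu

lemma sq_apply_self {δ : ℕ} (hreg : G.IsRegularOfDegree δ) (a : V) :
    (G.adjMatrix ℝ ^ 2) a a = (δ : ℝ) := by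
  rw [pow_two, adjMatrix_mul_self_apply_self, hreg a]

lemma pow_apply_eq_zero_of_dist {u v : V} (k : ℕ) (hfar : k < G.dist u v) :
    (G.adjMatrix ℝ ^ k) u v = 0 := by
  rw [adjMatrix_pow_apply_eq_card_walk]
  norm_cast
  rw [Fintype.card_eq_zero_iff]
  constructor
  rintro ⟨p, hp⟩
  have := SimpleGraph.dist_le p
  simp only [Set.mem_setOf_eq] at hp
  omega

lemma delta_zero_absurd (hne : Nonempty V) {δ : ℕ} (hreg : G.IsRegularOfDegree δ)
    {d : ℕ} (θ : ℕ → ℝ) (hd : 1 ≤ d)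
    (hmono : ∀ i j : ℕ, i < j → j ≤ d → θ j < θ i)
    (hspec : spectrum ℝ (G.adjMatrix ℝ) = {x : ℝ | ∃ i ≤ d, θ i = x})
    (hθ0 : θ 0 = δ) (hδ : δ = 0) : False := by
  have hA0 : G.adjMatrix ℝ = 0 := by
    ext a b
    simp only [adjMatrix_apply, Matrix.zero_apply, ite_eq_right_iff]
    intro hab
    have h1 : b ∈ G.neighborFinset a := by rwa [mem_neighborFinset]
    have h2 : G.neighborFinset a = ∅ := by
      apply Finset.card_eq_zero.mp
      rw [G.card_neighborFinset_eq_degree a, hreg a, hδ]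
    rw [h2] at h1
    exact absurd h1 (Finset.notMem_empty b)
  have h1 : θ 1 ∈ spectrum ℝ (G.adjMatrix ℝ) := by
    rw [hspec]; exact ⟨1, hd, rfl⟩
  rw [hA0, spectrum.zero_eq] at h1
  have h2 : θ 1 < θ 0 := hmono 0 1 (by omega) hd
  rw [hθ0, hδ] at h2
  simp only [Set.mem_singleton_iff] at h1
  rw [h1] at h2
  norm_num at h2

lemma one_regular_sq (hreg : G.IsRegularOfDegree 1) :
    G.adjMatrix ℝ * G.adjMatrix ℝ = 1 := by
  ext a b
  have ha : ∃ w, G.neighborFinset a = {w} :=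
    Finset.card_eq_one.mp (by rw [G.card_neighborFinset_eq_degree a, hreg a])
  obtain ⟨w, hw⟩ := ha
  have haw : G.Adj a w := by rw [← mem_neighborFinset, hw]; exact Finset.mem_singleton_self w
  rw [adjMatrix_mul_apply, hw, Finset.sum_singleton]
  have hww : ∃ z, G.neighborFinset w = {z} :=
    Finset.card_eq_one.mp (by rw [G.card_neighborFinset_eq_degree w, hreg w])
  obtain ⟨z, hz⟩ := hww
  have hza : a = z := by
    have : a ∈ G.neighborFinset w := by rw [mem_neighborFinset]; exact haw.symm
    rw [hz] at this; exact Finset.mem_singleton.mp this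
  by_cases hab : a = b
  · subst hab
    simp [adjMatrix_apply, haw.symm, Matrix.one_apply]
  · rw [Matrix.one_apply_ne hab]
    simp only [adjMatrix_apply, ite_eq_right_iff]
    intro hwb
    have hb' : b ∈ G.neighborFinset w := by rwa [mem_neighborFinset]
    rw [hz] at hb'
    have := Finset.mem_singleton.mp hb'
    exact absurd (hza.trans this.symm) hab

lemma spectrum_sq_one {μ : ℝ} {A : Matrix V V ℝ}
    (hA2 : A * A = 1) (hμ : μ ∈ spectrum ℝ A) : μ^2 = 1 := by
  by_contra hne1
  rw [spectrum.mem_iff] at hμ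
  apply hμ
  have hprod : (algebraMap ℝ (Matrix V V ℝ) μ - A) * (algebraMap ℝ (Matrix V V ℝ) μ + A)
      = algebraMap ℝ (Matrix V V ℝ) (μ^2 - 1) := by
    rw [Algebra.algebraMap_eq_smul_one, Algebra.algebraMap_eq_smul_one]
    rw [sub_mul, mul_add, mul_add, smul_mul_assoc, smul_mul_assoc, one_mul,
      Matrix.mul_smul, mul_one, hA2]
    rw [smul_smul]
    ext i j
    simp [Matrix.sub_apply, Matrix.add_apply, Matrix.smul_apply, smul_eq_mul]
    ring
  have hunit : IsUnit (algebraMap ℝ (Matrix V V ℝ) (μ^2 - 1)) :=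
    (isUnit_iff_ne_zero.mpr (sub_ne_zero.mpr hne1)).map (algebraMap ℝ (Matrix V V ℝ))
  rw [← hprod] at hunit
  rw [Matrix.isUnit_iff_isUnit_det] at hunit ⊢
  rw [Matrix.det_mul] at hunit
  exact isUnit_of_mul_isUnit_left hunit

lemma delta_one_absurd {d : ℕ} (θ : ℕ → ℝ) (hd : 2 ≤ d)
    (hreg : G.IsRegularOfDegree 1)
    (hmono : ∀ i j : ℕ, i < j → j ≤ d → θ j < θ i)
    (hspec : spectrum ℝ (G.adjMatrix ℝ) = {x : ℝ | ∃ i ≤ d, θ i = x})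
    (hθ0 : θ 0 = 1) : False := by
  have hA2 := one_regular_sq G hreg
  have hmem : ∀ k ≤ d, θ k ∈ spectrum ℝ (G.adjMatrix ℝ) := fun k hk => by
    rw [hspec]; exact ⟨k, hk, rfl⟩
  have h1 : θ 1 ^ 2 = 1 := spectrum_sq_one hA2 (hmem 1 (by omega))
  have h2 : θ 2 ^ 2 = 1 := spectrum_sq_one hA2 (hmem 2 hd)
  have m1 : θ 1 < θ 0 := hmono 0 1 (by omega) (by omega)
  have m2 : θ 2 < θ 1 := hmono 1 2 (by omega) hd
  rw [hθ0] at m1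
  have h1' : θ 1 = 1 ∨ θ 1 = -1 := sq_eq_one_iff.mp h1
  have h2' : θ 2 = 1 ∨ θ 2 = -1 := sq_eq_one_iff.mp h2
  rcases h1' with h1' | h1' <;> rcases h2' with h2' | h2' <;> linarith

end Alpha3Aux


/-- **Corollary (triangle-free case of the optimal bound).**
Let `G` be a connected `δ`-regular graph on `n` vertices with girth greater than `3`
and distinct adjacency eigenvalues `θ 0 > θ 1 > ⋯ > θ d`, `θ 0 = δ`, `d ≥ 3`.
Let `θ s` be the least eigenvalue with `θ s ≥ -(θ d + θ 0) / (θ d + 1)`.  Then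
`α₃(G) ≤ n * (-θ 0 * (θ s + θ (s+1) + θ d) - θ s * θ (s+1) * θ d) /
  ((θ 0 - θ s) * (θ 0 - θ (s+1)) * (θ 0 - θ d))`. -/
theorem alpha3_bound_of_girth_gt_three {V : Type*} [Fintype V] [DecidableEq V]
    (G : SimpleGraph V) [DecidableRel G.Adj]
    (hG : G.Connected) (δ : ℕ) (hreg : G.IsRegularOfDegree δ)
    (hgirth : (3 : ℕ∞) < G.girth)
    (n : ℕ) (hn : Fintype.card V = n)
    (d : ℕ) (hd : 3 ≤ d) (θ : ℕ → ℝ)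
    (hmono : ∀ i j : ℕ, i < j → j ≤ d → θ j < θ i)
    (hspec : spectrum ℝ (G.adjMatrix ℝ) = {x : ℝ | ∃ i ≤ d, θ i = x})
    (hθ0 : θ 0 = δ)
    (s : ℕ) (hsd : s < d)
    (hs : θ s ≥ -(θ d + θ 0) / (θ d + 1))
    (hslargest : ∀ t ≤ d, θ t ≥ -(θ d + θ 0) / (θ d + 1) → t ≤ s) :
    (G.kIndepNum 3 : ℝ) ≤
      (n : ℝ) * (-(θ 0) * (θ s + θ (s + 1) + θ d) - θ s * θ (s + 1) * θ d) /
        ((θ 0 - θ s) * (θ 0 - θ (s + 1)) * (θ 0 - θ d)) := by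
  classical
  have hneV : Nonempty V := hG.nonempty
  set A := G.adjMatrix ℝ with hAdef
  have hA : A.IsHermitian := by
    show Aᴴ = A
    rw [Matrix.conjTranspose_eq_transpose_of_trivial]
    exact transpose_adjMatrix G
  set b := hA.eigenvectorBasis with hbdef
  set μ := hA.eigenvalues with hμdef
  have hbe : ∀ i, A *ᵥ (b i : V → ℝ) = μ i • (b i : V → ℝ) :=
    fun i => hA.mulVec_eigenvectorBasis i
  have hμmem : ∀ i, ∃ j, j ≤ d ∧ θ j = μ i := by
    intro i
    have h := hA.eigenvalues_mem_spectrum_real i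
    rw [hspec] at h
    obtain ⟨j, hj, hje⟩ := h
    exact ⟨j, hj, hje⟩
  have hθd_le : ∀ j, j ≤ d → θ d ≤ θ j := by
    intro j hj
    rcases eq_or_lt_of_le hj with h | h
    · rw [h]
    · exact le_of_lt (hmono j d h le_rfl)
  have hθ0_ge : ∀ j, j ≤ d → θ j ≤ θ 0 := by
    intro j hj
    rcases Nat.eq_zero_or_pos j with h | h
    · rw [h]
    · exact le_of_lt (hmono 0 j h hj)
  have hδ1 : 1 ≤ δ := by
    by_contra h
    exact Alpha3Aux.delta_zero_absurd G hneV hreg θ (by omega) hmono hspec hθ0 (by omega)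
  obtain ⟨u0, v0, hadj⟩ : ∃ u v, G.Adj u v := by
    have u := Classical.arbitrary V
    have hc : 0 < (G.neighborFinset u).card := by
      rw [G.card_neighborFinset_eq_degree u, hreg u]; omega
    obtain ⟨v, hv⟩ := Finset.card_pos.mp hc
    rw [mem_neighborFinset] at hv
    exact ⟨u, v, hv⟩
  have hne0 : u0 ≠ v0 := hadj.ne
  set w0 : V → ℝ := Pi.single u0 1 - Pi.single v0 1 with hw0def
  have hsd1 : ∀ (M : Matrix V V ℝ) (x y : V),
      Pi.single x (1:ℝ) ⬝ᵥ (M *ᵥ Pi.single y 1) = M x y := by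
    intro M x y
    rw [Matrix.mulVec_single, single_dotProduct]
    simp
  have hAu0v0 : A u0 v0 = 1 := by simp [hAdef, hadj]
  have hAv0u0 : A v0 u0 = 1 := by simp [hAdef, hadj.symm]
  have hAu0u0 : A u0 u0 = 0 := by simp [hAdef]
  have hAv0v0 : A v0 v0 = 0 := by simp [hAdef]
  have hQw0A : w0 ⬝ᵥ (A *ᵥ w0) = -2 := by
    rw [hw0def, mulVec_sub, dotProduct_sub, sub_dotProduct, sub_dotProduct,
      hsd1, hsd1, hsd1, hsd1, hAu0v0, hAv0u0, hAu0u0, hAv0v0]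
    ring
  have hθd_neg : θ d < 0 := by
    by_contra hnn
    push_neg at hnn
    have hge : (0:ℝ) ≤ ∑ i, μ i * ((b i : V → ℝ) ⬝ᵥ w0)^2 := by
      refine Finset.sum_nonneg fun i _ => ?_
      obtain ⟨j, hj, hje⟩ := hμmem i
      have h0 : 0 ≤ μ i := by rw [← hje]; exact le_trans hnn (hθd_le j hj)
      positivity
    rw [← Alpha3Aux.quadform_eigen hA A μ hbe w0, hQw0A] at hge
    linarith
  -- δ ≤ θd²
  have hδθd : (δ:ℝ) ≤ θ d * θ d := by
    have hM1 : ∀ i, (A^3 + (-(-θ d + -θ d + θ d)) • A^2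
        + ((-θ d)*(-θ d) + (-θ d)*(θ d) + (-θ d)*(θ d)) • A
        + (-((-θ d)*(-θ d)*(θ d))) • (1:Matrix V V ℝ)) *ᵥ (b i : V → ℝ)
        = ((μ i - (-θ d))*((μ i - (-θ d))*(μ i - θ d))) • (b i : V → ℝ) :=
      fun i => Alpha3Aux.cubic_mulVec_eig A (-θ d) (-θ d) (θ d) _ (μ i) (hbe i)
    have hQ1 := Alpha3Aux.quadform_eigen hA _ _ hM1 (Pi.single u0 1)
    rw [hsd1] at hQ1
    have hnn : 0 ≤ (A^3 + (-(-θ d + -θ d + θ d)) • A^2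
        + ((-θ d)*(-θ d) + (-θ d)*(θ d) + (-θ d)*(θ d)) • A
        + (-((-θ d)*(-θ d)*(θ d))) • (1:Matrix V V ℝ)) u0 u0 := by
      rw [hQ1]
      refine Finset.sum_nonneg fun i _ => ?_
      obtain ⟨j, hj, hje⟩ := hμmem i
      have hdle : θ d ≤ μ i := by rw [← hje]; exact hθd_le j hj
      have h1 : 0 ≤ (μ i + θ d)*(μ i + θ d)*(μ i - θ d) :=
        mul_nonneg (mul_self_nonneg _) (sub_nonneg.mpr hdle)
      nlinarith [sq_nonneg ((b i : V → ℝ) ⬝ᵥ Pi.single u0 1)]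
    have hdiag : (A^3 + (-(-θ d + -θ d + θ d)) • A^2
        + ((-θ d)*(-θ d) + (-θ d)*(θ d) + (-θ d)*(θ d)) • A
        + (-((-θ d)*(-θ d)*(θ d))) • (1:Matrix V V ℝ)) u0 u0
        = θ d * (δ:ℝ) - θ d * θ d * θ d := by
      simp only [Matrix.add_apply, Matrix.smul_apply, smul_eq_mul, Matrix.one_apply_eq]
      rw [Alpha3Aux.cube_apply_self G hgirth, Alpha3Aux.sq_apply_self G hreg, hAu0u0]
      ring
    rw [hdiag] at hnn
    nlinarith [hθd_neg]
  -- L inequality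
  have hL : θ 0 + θ 1 + θ d + θ 1 * θ d ≤ 0 := by
    have hM2 : ∀ i, (A^2 + (-(θ 1 + θ d)) • A + (θ 1 * θ d) • (1:Matrix V V ℝ)) *ᵥ (b i : V → ℝ)
        = ((μ i - θ 1)*(μ i - θ d)) • (b i : V → ℝ) :=
      fun i => Alpha3Aux.quad_mulVec_eig A (θ 1) (θ d) _ (μ i) (hbe i)
    have hQ2 := Alpha3Aux.quadform_eigen hA _ _ hM2 w0
    have hQ2le : w0 ⬝ᵥ ((A^2 + (-(θ 1 + θ d)) • A + (θ 1 * θ d) • (1:Matrix V V ℝ)) *ᵥ w0) ≤ 0 := by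
      rw [hQ2]
      refine Finset.sum_nonpos fun i _ => ?_
      obtain ⟨j, hj, hje⟩ := hμmem i
      rcases Nat.eq_zero_or_pos j with hj0 | hjpos
      · have hμi : A *ᵥ (b i : V → ℝ) = ((δ:ℕ):ℝ) • (b i : V → ℝ) := by
          rw [hbe i, ← hje, hj0, hθ0]
        have hconst := Alpha3Aux.perron G hG hreg (b i : V → ℝ) hμi
        have hz : (b i : V → ℝ) ⬝ᵥ w0 = 0 := by
          rw [hw0def, dotProduct_sub, dotProduct_single, dotProduct_single,
            mul_one, mul_one, hconst u0 v0, sub_self]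
        rw [hz]
        simp
      · have h1 : μ i ≤ θ 1 := by
          rw [← hje]
          rcases eq_or_lt_of_le (show 1 ≤ j from hjpos) with h | h
          · rw [← h]
          · exact le_of_lt (hmono 1 j h hj)
        have h2 : θ d ≤ μ i := by rw [← hje]; exact hθd_le j hj
        have hfac : (μ i - θ 1)*(μ i - θ d) ≤ 0 :=
          mul_nonpos_of_nonpos_of_nonneg (sub_nonpos.mpr h1) (sub_nonneg.mpr h2)
        exact mul_nonpos_of_nonpos_of_nonneg hfac (sq_nonneg _)
    have hval : w0 ⬝ᵥ ((A^2 + (-(θ 1 + θ d)) • A + (θ 1 * θ d) • (1:Matrix V V ℝ)) *ᵥ w0)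
        = 2*((δ:ℝ) + θ 1 * θ d + θ 1 + θ d) := by
      rw [hw0def, mulVec_sub, dotProduct_sub, sub_dotProduct, sub_dotProduct,
        hsd1, hsd1, hsd1, hsd1]
      have e11 : (A^2 + (-(θ 1 + θ d)) • A + (θ 1 * θ d) • (1:Matrix V V ℝ)) u0 u0
          = (δ:ℝ) + θ 1 * θ d := by
        simp only [Matrix.add_apply, Matrix.smul_apply, smul_eq_mul, Matrix.one_apply_eq]
        rw [Alpha3Aux.sq_apply_self G hreg, hAu0u0]; ring
      have e22 : (A^2 + (-(θ 1 + θ d)) • A + (θ 1 * θ d) • (1:Matrix V V ℝ)) v0 v0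
          = (δ:ℝ) + θ 1 * θ d := by
        simp only [Matrix.add_apply, Matrix.smul_apply, smul_eq_mul, Matrix.one_apply_eq]
        rw [Alpha3Aux.sq_apply_self G hreg, hAv0v0]; ring
      have e12 : (A^2 + (-(θ 1 + θ d)) • A + (θ 1 * θ d) • (1:Matrix V V ℝ)) u0 v0
          = -(θ 1 + θ d) := by
        simp only [Matrix.add_apply, Matrix.smul_apply, smul_eq_mul,
          Matrix.one_apply_ne hne0]
        rw [Alpha3Aux.sq_apply_adj G hgirth hadj, hAu0v0]; ring
      have e21 : (A^2 + (-(θ 1 + θ d)) • A + (θ 1 * θ d) • (1:Matrix V V ℝ)) v0 u0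
          = -(θ 1 + θ d) := by
        simp only [Matrix.add_apply, Matrix.smul_apply, smul_eq_mul,
          Matrix.one_apply_ne (Ne.symm hne0)]
        rw [Alpha3Aux.sq_apply_adj G hgirth hadj.symm, hAv0u0]; ring
      rw [e11, e22, e12, e21]; ring
    rw [hval] at hQ2le
    rw [hθ0]
    linarith
  -- s ≥ 1
  have hs1 : 0 < s := by
    have h1d : θ 1 ≥ -(θ d + θ 0) / (θ d + 1) := by
      rcases lt_trichotomy (θ d + 1) 0 with hc | hc | hc
      · rw [ge_iff_le, div_le_iff_of_neg hc]
        nlinarith [hL]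
      · exfalso
        have hθdval : θ d = -1 := by linarith
        have hprod : θ 1 * θ d = -θ 1 := by rw [hθdval]; ring
        have hδle : (δ:ℝ) ≤ 1 := by rw [← hθ0]; linarith [hL]
        have hδeq : δ = 1 := by
          have h9 : (δ:ℕ) ≤ 1 := by exact_mod_cast hδle
          omega
        exact Alpha3Aux.delta_one_absurd G θ (by omega) (by rwa [hδeq] at hreg)
          hmono hspec (by rw [hθ0, hδeq]; norm_num)
      · exfalso
        have h9 : (δ:ℝ) < 1 := lt_of_le_of_lt hδθd (by nlinarith [hθd_neg])
        have h10 : (δ:ℕ) < 1 := by exact_mod_cast h9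
        omega
    have := hslargest 1 (by omega) h1d
    omega
  -- main PSD matrix
  set M : Matrix V V ℝ := A^3 + (-(θ s + θ (s+1) + θ d)) • A^2
    + (θ s * θ (s+1) + θ s * θ d + θ (s+1) * θ d) • A
    + (-(θ s * θ (s+1) * θ d)) • (1:Matrix V V ℝ) with hMdef
  have hM : ∀ i, M *ᵥ (b i : V → ℝ)
      = ((μ i - θ s)*((μ i - θ (s+1))*(μ i - θ d))) • (b i : V → ℝ) :=
    fun i => Alpha3Aux.cubic_mulVec_eig A (θ s) (θ (s+1)) (θ d) _ (μ i) (hbe i)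
  have hν : ∀ i, 0 ≤ (μ i - θ s)*((μ i - θ (s+1))*(μ i - θ d)) := by
    intro i
    obtain ⟨j, hj, hje⟩ := hμmem i
    rw [← hje]
    rcases le_or_gt j s with hjs | hjs
    · have f1 : 0 ≤ θ j - θ s := by
        rcases eq_or_lt_of_le hjs with h | h
        · rw [h]; simp
        · exact sub_nonneg.mpr (le_of_lt (hmono j s h (le_of_lt hsd)))
      have f2 : 0 ≤ θ j - θ (s+1) :=
        sub_nonneg.mpr (le_of_lt (hmono j (s+1) (by omega) (by omega)))
      have f3 : 0 ≤ θ j - θ d :=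
        sub_nonneg.mpr (le_of_lt (hmono j d (by omega) le_rfl))
      exact mul_nonneg f1 (mul_nonneg f2 f3)
    · have f1 : θ j - θ s ≤ 0 := sub_nonpos.mpr (le_of_lt (hmono s j hjs hj))
      have f2 : θ j - θ (s+1) ≤ 0 := by
        rcases eq_or_lt_of_le (show s + 1 ≤ j from hjs) with h | h
        · rw [← h]; simp
        · exact sub_nonpos.mpr (le_of_lt (hmono (s+1) j h hj))
      have f3 : 0 ≤ θ j - θ d := sub_nonneg.mpr (hθd_le j hj)
      nlinarith [mul_nonneg (mul_nonneg_of_nonpos_of_nonpos f1 f2) f3]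
  have hPSD : ∀ x : V → ℝ, 0 ≤ x ⬝ᵥ (M *ᵥ x) := by
    intro x
    rw [Alpha3Aux.quadform_eigen hA M _ hM x]
    exact Finset.sum_nonneg fun i _ => mul_nonneg (hν i) (sq_nonneg _)
  have hdiagM : ∀ u : V, M u u
      = -(θ 0) * (θ s + θ (s + 1) + θ d) - θ s * θ (s + 1) * θ d := by
    intro u
    rw [hMdef]
    simp only [Matrix.add_apply, Matrix.smul_apply, smul_eq_mul, Matrix.one_apply_eq]
    rw [Alpha3Aux.cube_apply_self G hgirth, Alpha3Aux.sq_apply_self G hreg]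
    have hz : A u u = 0 := by simp [hAdef]
    rw [hz, hθ0]
    ring
  have hW0 : 0 ≤ -(θ 0) * (θ s + θ (s + 1) + θ d) - θ s * θ (s + 1) * θ d := by
    have h9 := hPSD (Pi.single u0 1)
    rw [hsd1, hdiagM u0] at h9
    exact h9
  -- all-ones vector
  set onev : V → ℝ := fun _ => 1 with honevdef
  have hAone : A *ᵥ onev = ((δ:ℕ):ℝ) • onev := by
    funext v
    rw [hAdef]
    simp only [adjMatrix_mulVec_apply, honevdef, Finset.sum_const, nsmul_eq_mul,
      mul_one, Pi.smul_apply, smul_eq_mul]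
    rw [G.card_neighborFinset_eq_degree v, hreg v]
  have hMone : M *ᵥ onev
      = ((θ 0 - θ s)*((θ 0 - θ (s+1))*(θ 0 - θ d))) • onev := by
    have h9 := Alpha3Aux.cubic_mulVec_eig A (θ s) (θ (s+1)) (θ d) onev ((δ:ℕ):ℝ) hAone
    rw [← hθ0] at h9
    exact h9
  have hP0pos : 0 < (θ 0 - θ s)*((θ 0 - θ (s+1))*(θ 0 - θ d)) := by
    have g1 : θ s < θ 0 := hmono 0 s hs1 (le_of_lt hsd)
    have g2 : θ (s+1) < θ 0 := hmono 0 (s+1) (by omega) (by omega)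
    have g3 : θ d < θ 0 := hmono 0 d (by omega) le_rfl
    exact mul_pos (sub_pos.mpr g1) (mul_pos (sub_pos.mpr g2) (sub_pos.mpr g3))
  have hnpos : 0 < (n:ℝ) := by
    have h9 : 0 < Fintype.card V := Fintype.card_pos
    rw [hn] at h9
    exact_mod_cast h9
  -- extract maximal independent set
  obtain ⟨S, hSind, hScard⟩ :
      ∃ S : Finset V, G.IsKIndepSet 3 S ∧ S.card = G.kIndepNum 3 := by
    have h0 : (0:ℕ) ∈ {m : ℕ | ∃ S : Finset V, G.IsKIndepSet 3 S ∧ S.card = m} :=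
      ⟨∅, fun u hu => absurd hu (Finset.notMem_empty u), rfl⟩
    have hbdd : BddAbove {m : ℕ | ∃ S : Finset V, G.IsKIndepSet 3 S ∧ S.card = m} := by
      refine ⟨Fintype.card V, fun m hm => ?_⟩
      obtain ⟨S, hS, hSc⟩ := hm
      rw [← hSc]; exact Finset.card_le_univ S
    have h9 := Nat.sSup_mem ⟨0, h0⟩ hbdd
    obtain ⟨S, h1, h2⟩ := h9
    exact ⟨S, h1, h2⟩
  set χ : V → ℝ := fun u => if u ∈ S then 1 else 0 with hχdef
  have hiteL : ∀ f : V → ℝ, (∑ u, (if u ∈ S then (1:ℝ) else 0) * f u) = ∑ u ∈ S, f u := by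
    intro f
    rw [← Finset.univ_inter S, ← Finset.sum_ite_mem]
    exact Finset.sum_congr rfl fun u _ => by by_cases h : u ∈ S <;> simp [h]
  have hQχ : χ ⬝ᵥ (M *ᵥ χ)
      = (S.card : ℝ) * (-(θ 0) * (θ s + θ (s + 1) + θ d) - θ s * θ (s + 1) * θ d) := by
    have hstep1 : χ ⬝ᵥ (M *ᵥ χ) = ∑ u ∈ S, ∑ v ∈ S, M u v := by
      calc χ ⬝ᵥ (M *ᵥ χ) = ∑ u, (if u ∈ S then (1:ℝ) else 0) * (M *ᵥ χ) u := rfl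
        _ = ∑ u ∈ S, (M *ᵥ χ) u := hiteL _
        _ = ∑ u ∈ S, ∑ v ∈ S, M u v := by
            refine Finset.sum_congr rfl fun u _ => ?_
            calc (M *ᵥ χ) u = ∑ v, M u v * (if v ∈ S then (1:ℝ) else 0) := rfl
              _ = ∑ v, (if v ∈ S then (1:ℝ) else 0) * M u v := by
                  exact Finset.sum_congr rfl fun v _ => mul_comm _ _
              _ = ∑ v ∈ S, M u v := hiteL _
    rw [hstep1]
    have hstep2 : ∀ u ∈ S, ∑ v ∈ S, M u v
        = -(θ 0) * (θ s + θ (s + 1) + θ d) - θ s * θ (s + 1) * θ d := by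
      intro u hu
      rw [Finset.sum_eq_single_of_mem u hu]
      · exact hdiagM u
      · intro v hv hvu
        have hfar : 3 < G.dist u v := hSind u hu v hv (Ne.symm hvu)
        have e3 := Alpha3Aux.pow_apply_eq_zero_of_dist G 3 hfar
        have e2 := Alpha3Aux.pow_apply_eq_zero_of_dist G (u := u) (v := v) 2 (by omega)
        have e1 := Alpha3Aux.pow_apply_eq_zero_of_dist G (u := u) (v := v) 1 (by omega)
        rw [pow_one] at e1
        rw [hMdef]
        simp only [Matrix.add_apply, Matrix.smul_apply, smul_eq_mul,
          Matrix.one_apply_ne (Ne.symm hvu)]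
        rw [← hAdef] at e3 e2 e1
        rw [e3, e2, e1]
        ring
    rw [Finset.sum_congr rfl hstep2, Finset.sum_const, nsmul_eq_mul]
  have hχsum : onev ⬝ᵥ χ = (S.card : ℝ) := by
    have h9 := hiteL (fun _ => (1:ℝ))
    simp only [mul_one] at h9
    calc onev ⬝ᵥ χ = ∑ u, (if u ∈ S then (1:ℝ) else 0) := by
          simp [dotProduct, honevdef, hχdef]
      _ = (S.card : ℝ) := by rw [h9, Finset.sum_const, nsmul_eq_mul, mul_one]
  set cc : ℝ := (S.card : ℝ) / n with hccdef
  set wv : V → ℝ := χ - cc • onev with hwvdef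
  have hχdecomp : χ = cc • onev + wv := by
    rw [hwvdef]
    funext u
    simp only [Pi.add_apply, Pi.sub_apply, Pi.smul_apply, smul_eq_mul]
    ring
  have honedot : onev ⬝ᵥ onev = (n:ℝ) := by
    simp only [dotProduct, honevdef, mul_one, Finset.sum_const, nsmul_eq_mul]
    rw [Finset.card_univ, hn]
  have hwv1 : onev ⬝ᵥ wv = 0 := by
    rw [hwvdef, dotProduct_sub, hχsum, dotProduct_smul, honedot, hccdef, smul_eq_mul]
    field_simp
    ring
  have hwv1' : wv ⬝ᵥ onev = 0 := by rw [dotProduct_comm]; exact hwv1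
  have hcross1 : wv ⬝ᵥ (M *ᵥ onev) = 0 := by
    rw [hMone, dotProduct_smul, smul_eq_mul, hwv1', mul_zero]
  have hMsym : Mᵀ = M := by
    rw [hMdef]
    have hAt : Aᵀ = A := by rw [hAdef]; exact transpose_adjMatrix G
    simp only [Matrix.transpose_add, Matrix.transpose_smul, Matrix.transpose_pow,
      Matrix.transpose_one, hAt]
  have hcross2 : onev ⬝ᵥ (M *ᵥ wv) = 0 := by
    rw [dotProduct_mulVec]
    have h9 : onev ᵥ* M = ((θ 0 - θ s)*((θ 0 - θ (s+1))*(θ 0 - θ d))) • onev := by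
      rw [← Matrix.mulVec_transpose, hMsym, hMone]
    rw [h9, smul_dotProduct, smul_eq_mul, hwv1, mul_zero]
  have hQwv : 0 ≤ wv ⬝ᵥ (M *ᵥ wv) := hPSD wv
  have hkey : (S.card:ℝ) * (-(θ 0) * (θ s + θ (s + 1) + θ d) - θ s * θ (s + 1) * θ d)
      = cc^2 * ((n:ℝ) * ((θ 0 - θ s)*((θ 0 - θ (s+1))*(θ 0 - θ d))))
        + wv ⬝ᵥ (M *ᵥ wv)
        + cc * (onev ⬝ᵥ (M *ᵥ wv)) + cc * (wv ⬝ᵥ (M *ᵥ onev)) := by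
    have e0 : M *ᵥ (cc • onev + wv) = cc • (M *ᵥ onev) + M *ᵥ wv := by
      rw [mulVec_add, mulVec_smul]
    have q11 : (cc • onev) ⬝ᵥ (cc • (M *ᵥ onev))
        = cc^2 * ((n:ℝ) * ((θ 0 - θ s)*((θ 0 - θ (s+1))*(θ 0 - θ d)))) := by
      rw [hMone, smul_dotProduct, dotProduct_smul, dotProduct_smul, honedot]
      simp only [smul_eq_mul]
      ring
    have q12 : (cc • onev) ⬝ᵥ (M *ᵥ wv) = cc * (onev ⬝ᵥ (M *ᵥ wv)) := by
      rw [smul_dotProduct]; simp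
    have q21 : wv ⬝ᵥ (cc • (M *ᵥ onev)) = cc * (wv ⬝ᵥ (M *ᵥ onev)) := by
      rw [dotProduct_smul]; simp
    calc (S.card:ℝ) * (-(θ 0) * (θ s + θ (s + 1) + θ d) - θ s * θ (s + 1) * θ d)
        = χ ⬝ᵥ (M *ᵥ χ) := hQχ.symm
      _ = (cc • onev + wv) ⬝ᵥ (M *ᵥ (cc • onev + wv)) := by rw [← hχdecomp]
      _ = (cc • onev) ⬝ᵥ (cc • (M *ᵥ onev)) + wv ⬝ᵥ (cc • (M *ᵥ onev))
           + ((cc • onev) ⬝ᵥ (M *ᵥ wv) + wv ⬝ᵥ (M *ᵥ wv)) := by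
          rw [e0, dotProduct_add, add_dotProduct, add_dotProduct]
      _ = _ := by rw [q11, q12, q21]; ring
  rw [hcross1, hcross2] at hkey
  have hineq : cc^2 * ((n:ℝ) * ((θ 0 - θ s)*((θ 0 - θ (s+1))*(θ 0 - θ d))))
      ≤ (S.card:ℝ) * (-(θ 0) * (θ s + θ (s + 1) + θ d) - θ s * θ (s + 1) * θ d) := by
    rw [hkey]; nlinarith [hQwv]
  -- final arithmetic
  have hDpos : 0 < (θ 0 - θ s) * (θ 0 - θ (s + 1)) * (θ 0 - θ d) := by
    have := hP0pos; nlinarith [this]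
  rw [le_div_iff₀ hDpos, ← hScard]
  rcases Nat.eq_zero_or_pos S.card with hSc0 | hScpos
  · rw [hSc0]
    simp only [Nat.cast_zero, zero_mul]
    exact mul_nonneg (le_of_lt hnpos) hW0
  · have hmpos : 0 < (S.card:ℝ) := by exact_mod_cast hScpos
    have hccsq : cc^2 * ((n:ℝ) * ((θ 0 - θ s)*((θ 0 - θ (s+1))*(θ 0 - θ d))))
        = (S.card:ℝ)^2 * ((θ 0 - θ s)*((θ 0 - θ (s+1))*(θ 0 - θ d))) / n := by
      rw [hccdef]
      rw [div_pow, eq_div_iff (ne_of_gt hnpos), div_mul_eq_mul_div, div_mul_eq_mul_div, div_eq_iff (pow_ne_zero 2 (ne_of_gt hnpos))]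
      ring
    rw [hccsq] at hineq
    have h6 : (S.card:ℝ)^2 * ((θ 0 - θ s)*((θ 0 - θ (s+1))*(θ 0 - θ d)))
        ≤ (S.card:ℝ) * (-(θ 0) * (θ s + θ (s + 1) + θ d) - θ s * θ (s + 1) * θ d) * n :=
      (div_le_iff₀ hnpos).mp hineq
    nlinarith [h6, hmpos, hDpos]
end

section
/- Let G be a connected bipartite δ-regular simple graph on n vertices with distinct adjacency-matrix eigenvalues θ_0 > θ_1 > ⋯ > θ_d, where θ_0 = δ and d ≥ 3 (so θ_d = −θ_0 and every diagonal entry of A³ is 0). Let θ_s be the least eigenvalue greater than or equal to 0. Then α_3(G) ≤ n·(θ_0 − (θ_s + θ_{s+1}) + θ_s·θ_{s+1}) / (2·(θ_0 − θ_s)·(θ_0 − θ_{s+1})). -/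
open Matrix

section Aux

variable {V : Type*} [Fintype V] [DecidableEq V]

/-- Membership in the spectrum of a real matrix is equivalent to having an eigenvector. -/
lemma aux_mem_spectrum_iff (A : Matrix V V ℝ) (x : ℝ) :
    x ∈ spectrum ℝ A ↔ ∃ v : V → ℝ, v ≠ 0 ∧ A *ᵥ v = x • v := by
  rw [spectrum.mem_iff, Matrix.isUnit_iff_isUnit_det, isUnit_iff_ne_zero, not_ne_iff,
    ← Matrix.exists_mulVec_eq_zero_iff]
  constructor
  · rintro ⟨v, hv0, hv⟩
    refine ⟨v, hv0, ?_⟩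
    rw [Matrix.sub_mulVec, sub_eq_zero, Algebra.algebraMap_eq_smul_one,
      Matrix.smul_mulVec, Matrix.one_mulVec] at hv
    exact hv.symm
  · rintro ⟨v, hv0, hv⟩
    refine ⟨v, hv0, ?_⟩
    rw [Matrix.sub_mulVec, sub_eq_zero, Algebra.algebraMap_eq_smul_one,
      Matrix.smul_mulVec, Matrix.one_mulVec, hv]

end Aux

/-- **Bipartite case of the optimal bound on the 3-independence number.**
Let `G` be a connected bipartite `δ`-regular graph on `n` vertices with distinct
adjacency eigenvalues `θ 0 > θ 1 > ⋯ > θ d`, `θ 0 = δ`, `d ≥ 3`.  Let `θ s` be the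
least eigenvalue greater than or equal to `0`.  Then
`α₃(G) ≤ n * (θ 0 - (θ s + θ (s+1)) + θ s * θ (s+1)) /
  (2 * (θ 0 - θ s) * (θ 0 - θ (s+1)))`. -/
theorem alpha3_bound_bipartite {V : Type*} [Fintype V] [DecidableEq V]
    (G : SimpleGraph V) [DecidableRel G.Adj]
    (hG : G.Connected) (hbip : G.Colorable 2)
    (δ : ℕ) (hreg : G.IsRegularOfDegree δ)
    (n : ℕ) (hn : Fintype.card V = n)
    (d : ℕ) (hd : 3 ≤ d) (θ : ℕ → ℝ)
    (hmono : ∀ i j : ℕ, i < j → j ≤ d → θ j < θ i)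
    (hspec : spectrum ℝ (G.adjMatrix ℝ) = {x : ℝ | ∃ i ≤ d, θ i = x})
    (hθ0 : θ 0 = δ)
    (s : ℕ) (hsd : s < d)
    (hs : 0 ≤ θ s)
    (hslargest : ∀ t ≤ d, 0 ≤ θ t → t ≤ s) :
    (G.kIndepNum 3 : ℝ) ≤
      (n : ℝ) * (θ 0 - (θ s + θ (s + 1)) + θ s * θ (s + 1)) /
        (2 * (θ 0 - θ s) * (θ 0 - θ (s + 1))) := by
  classical
  -- dispose of the empty case
  rcases isEmpty_or_nonempty V with hV | hV
  · have hset : {m : ℕ | ∃ S : Finset V, G.IsKIndepSet 3 S ∧ S.card = m} = {0} := by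
      ext m
      simp only [Set.mem_setOf_eq, Set.mem_singleton_iff]
      constructor
      · rintro ⟨S, -, rfl⟩
        simp [Finset.eq_empty_of_isEmpty S]
      · rintro rfl
        exact ⟨∅, fun u hu => absurd hu (by simp), rfl⟩
    have h0 : G.kIndepNum 3 = 0 := by
      rw [SimpleGraph.kIndepNum, hset, csSup_singleton]
    have hn0 : n = 0 := by rw [← hn, Fintype.card_eq_zero]
    rw [h0, hn0]
    simp
  -- main case
  set A := G.adjMatrix ℝ with hAdef
  have hA : A.IsHermitian := by
    show Aᴴ = A
    ext i j
    simp only [Matrix.conjTranspose_apply, star_trivial, hAdef]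
    simp [SimpleGraph.adj_comm]
  have hnpos : 0 < n := by rw [← hn]; exact Fintype.card_pos
  -- constant eigenvector
  have honev : A *ᵥ (fun _ => (1 : ℝ)) = (δ : ℝ) • (fun _ => (1 : ℝ)) := by
    ext u
    simp only [hAdef, SimpleGraph.adjMatrix_mulVec_apply, Finset.sum_const, nsmul_eq_mul, mul_one,
      Pi.smul_apply, smul_eq_mul]
    rw [show (G.neighborFinset u).card = G.degree u from rfl, hreg u]
  have hδmem : (δ : ℝ) ∈ spectrum ℝ A := by
    rw [aux_mem_spectrum_iff]
    refine ⟨fun _ => 1, ?_, honev⟩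
    intro h
    exact one_ne_zero (congrFun h (Classical.arbitrary V))
  -- eigenvalue bound
  have habs : ∀ x ∈ spectrum ℝ A, |x| ≤ (δ : ℝ) := by
    intro x hx
    obtain ⟨v, hv0, hv⟩ := (aux_mem_spectrum_iff A x).mp hx
    obtain ⟨u, -, hu⟩ := Finset.exists_max_image Finset.univ (fun w => |v w|)
      ⟨Classical.arbitrary V, Finset.mem_univ _⟩
    have hvu : 0 < |v u| := by
      obtain ⟨w, hw⟩ := Function.ne_iff.mp hv0
      exact lt_of_lt_of_le (abs_pos.mpr hw) (hu w (Finset.mem_univ _))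
    have key : |x * v u| ≤ (δ : ℝ) * |v u| := by
      have h1 : (A *ᵥ v) u = x * v u := by rw [hv]; rfl
      rw [← h1, hAdef, SimpleGraph.adjMatrix_mulVec_apply]
      calc |∑ w ∈ G.neighborFinset u, v w| ≤ ∑ w ∈ G.neighborFinset u, |v w| :=
            Finset.abs_sum_le_sum_abs _ _
        _ ≤ ∑ _w ∈ G.neighborFinset u, |v u| :=
            Finset.sum_le_sum fun w _ => hu w (Finset.mem_univ _)
        _ = (δ : ℝ) * |v u| := by
            rw [Finset.sum_const, nsmul_eq_mul,
              show (G.neighborFinset u).card = G.degree u from rfl, hreg u]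
    rw [abs_mul] at key
    exact le_of_mul_le_mul_right key hvu
  -- the bipartite sign vector
  obtain ⟨C2⟩ := hbip
  let C : G.Coloring Bool := G.recolorOfEquiv finTwoEquiv C2
  let σ : V → ℝ := fun u => if C u then 1 else -1
  have hσ0 : ∀ u, σ u ≠ 0 := by
    intro u
    by_cases h : C u <;> simp [σ, h]
  have hσadj : ∀ {u w : V}, G.Adj u w → σ w = -σ u := by
    intro u w h
    have := C.valid h
    by_cases hcu : C u <;> by_cases hcw : C w <;> simp_all [σ]
  -- spectrum is symmetric
  have hflip : ∀ x ∈ spectrum ℝ A, -x ∈ spectrum ℝ A := by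
    intro x hx
    obtain ⟨v, hv0, hv⟩ := (aux_mem_spectrum_iff A x).mp hx
    rw [aux_mem_spectrum_iff]
    refine ⟨fun u => σ u * v u, ?_, ?_⟩
    · obtain ⟨w, hw⟩ := Function.ne_iff.mp hv0
      exact Function.ne_iff.mpr ⟨w, mul_ne_zero (hσ0 w) hw⟩
    · ext u
      have h2 : ∑ w ∈ G.neighborFinset u, σ w * v w
          = -σ u * ∑ w ∈ G.neighborFinset u, v w := by
        rw [Finset.mul_sum]
        refine Finset.sum_congr rfl fun w hw => ?_
        rw [hσadj ((SimpleGraph.mem_neighborFinset _ _ _).mp hw)]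
      have h3 : (A *ᵥ v) u = x * v u := by rw [hv]; rfl
      rw [hAdef, SimpleGraph.adjMatrix_mulVec_apply] at h3 ⊢
      rw [h2, h3]
      simp only [Pi.smul_apply, smul_eq_mul]
      ring
  have hmem : ∀ i ≤ d, θ i ∈ spectrum ℝ A := by
    intro i hi
    rw [hspec]
    exact ⟨i, hi, rfl⟩
  have hrep : ∀ x ∈ spectrum ℝ A, ∃ i ≤ d, θ i = x := by
    intro x hx
    rwa [hspec] at hx
  have hmono' : ∀ i j : ℕ, i ≤ j → j ≤ d → θ j ≤ θ i := by
    intro i j hij hjd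
    rcases eq_or_lt_of_le hij with rfl | h
    · exact le_rfl
    · exact le_of_lt (hmono i j h hjd)
  -- θ d = -δ
  have hθd : θ d = -(δ : ℝ) := by
    obtain ⟨j, hjd, hj⟩ := hrep _ (hflip _ hδmem)
    have h1 : θ d ≤ θ j := hmono' j d hjd le_rfl
    have h2 := (abs_le.mp (habs _ (hmem d le_rfl))).1
    rw [hj] at h1
    linarith
  have hδpos : (0 : ℝ) < δ := by
    have := hmono 0 d (by omega) le_rfl
    rw [hθ0, hθd] at this
    linarith
  -- s ≥ 1
  have hs1 : 1 ≤ s := by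
    by_contra h
    have hs0 : s = 0 := by omega
    have hθ1neg : θ 1 < 0 := by
      by_contra h'
      have := hslargest 1 (by omega) (le_of_not_gt h')
      omega
    obtain ⟨j, hjd, hj⟩ := hrep _ (hflip _ (hmem 1 (by omega)))
    have hjpos : 0 ≤ θ j := by rw [hj]; linarith
    have hj0 : j = 0 := by have := hslargest j hjd hjpos; omega
    have h1 : θ 1 = θ d := by
      rw [hθd]
      rw [hj0, hθ0] at hj
      linarith
    have := hmono 1 d (by omega) le_rfl
    linarith
  set a := θ s with hadef
  set b := θ (s + 1) with hbdef
  set δ' := ((δ : ℕ) : ℝ) with hδ'def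
  have ha_lt : a < δ' := by
    have := hmono 0 s (by omega) (by omega)
    rwa [hθ0] at this
  have hb_neg : b < 0 := by
    by_contra h'
    have := hslargest (s + 1) (by omega) (le_of_not_gt h')
    omega
  have hb_ge : -δ' ≤ b := by
    have : θ d ≤ θ (s + 1) := hmono' _ _ (by omega) le_rfl
    rw [hθd] at this
    exact this
  -- the polynomial and matrix
  set q : ℝ → ℝ := fun x => (x - a) * (x - b) * (x + δ') with hqdef
  have hq : ∀ x ∈ spectrum ℝ A, 0 ≤ q x := by
    intro x hx
    obtain ⟨i, hid, rfl⟩ := hrep x hx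
    have hxδ : -δ' ≤ θ i := (abs_le.mp (habs _ hx)).1
    rcases le_or_gt i s with h | h
    · have h1 : a ≤ θ i := hmono' i s h (by omega)
      have h2 : 0 ≤ θ i - a := by linarith
      have h3 : 0 ≤ θ i - b := by linarith
      have h4 : 0 ≤ θ i + δ' := by linarith
      positivity
    · have h1 : θ i ≤ b := hmono' (s + 1) i h hid
      have h2 : θ i - a ≤ 0 := by linarith
      have h3 : θ i - b ≤ 0 := by linarith
      have h4 : 0 ≤ θ i + δ' := by linarith
      have h5 := mul_nonneg (mul_nonneg (neg_nonneg.mpr h2) (neg_nonneg.mpr h3)) h4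
      rwa [neg_mul_neg] at h5
  set M : Matrix V V ℝ := (A - a • 1) * (A - b • 1) * (A + δ' • 1) with hMdef
  -- spectral theorem conjugation
  set U : Matrix V V ℝ := (hA.eigenvectorUnitary : Matrix V V ℝ) with hUdef
  have hUU : U * star U = 1 := (Matrix.mem_unitaryGroup_iff).mp hA.eigenvectorUnitary.2
  have hUU' : star U * U = 1 := (Matrix.mem_unitaryGroup_iff').mp hA.eigenvectorUnitary.2
  have hAspec : A = U * Matrix.diagonal hA.eigenvalues * star U := by
    have := hA.spectral_theorem
    rwa [show (RCLike.ofReal ∘ hA.eigenvalues : V → ℝ) = hA.eigenvalues by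
      funext i; simp [RCLike.ofReal_real_eq_id]] at this
  have hconj_smul : ∀ c : ℝ, c • (1 : Matrix V V ℝ) = U * (c • 1) * star U := by
    intro c
    rw [Matrix.mul_smul, Matrix.smul_mul, mul_one, hUU]
  have hconj_mul : ∀ X Y : Matrix V V ℝ,
      (U * X * star U) * (U * Y * star U) = U * (X * Y) * star U := by
    intro X Y
    have h1 : ∀ t : Matrix V V ℝ, star U * (U * t) = t := by
      intro t
      rw [← mul_assoc, hUU', one_mul]
    simp only [mul_assoc]
    rw [h1]
  have hsmul_diag : ∀ c : ℝ, c • (1 : Matrix V V ℝ) = Matrix.diagonal (fun _ => c) := by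
    intro c
    rw [Matrix.smul_one_eq_diagonal]
  have key : M = U * Matrix.diagonal (fun i => q (hA.eigenvalues i)) * star U := by
    have h1 : A - a • 1 = U * (Matrix.diagonal hA.eigenvalues - a • 1) * star U := by
      rw [Matrix.mul_sub, Matrix.sub_mul, ← hAspec, ← hconj_smul]
    have h2 : A - b • 1 = U * (Matrix.diagonal hA.eigenvalues - b • 1) * star U := by
      rw [Matrix.mul_sub, Matrix.sub_mul, ← hAspec, ← hconj_smul]
    have h3 : A + δ' • 1 = U * (Matrix.diagonal hA.eigenvalues + δ' • 1) * star U := by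
      rw [Matrix.mul_add, Matrix.add_mul, ← hAspec, ← hconj_smul]
    rw [hMdef, h1, h2, h3, hconj_mul, hconj_mul]
    congr 1
    congr 1
    simp only [hsmul_diag, Matrix.diagonal_sub, Matrix.diagonal_add,
      Matrix.diagonal_mul_diagonal]
    rfl
  have hPSD : M.PosSemidef := by
    rw [key]
    have hd0 : (Matrix.diagonal (fun i => q (hA.eigenvalues i))).PosSemidef :=
      Matrix.PosSemidef.diagonal fun i => hq _ (hA.eigenvalues_mem_spectrum_real i)
    have := hd0.mul_mul_conjTranspose_same U
    rwa [Matrix.star_eq_conjTranspose]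
  have hquad : ∀ x : V → ℝ, 0 ≤ x ⬝ᵥ (M *ᵥ x) := by
    intro x
    have := hPSD.dotProduct_mulVec_nonneg x
    rwa [star_trivial] at this
  -- expansion of M
  set e2 : ℝ := δ' - a - b with he2def
  set e1 : ℝ := a * b - (a + b) * δ' with he1def
  set e0 : ℝ := a * b * δ' with he0def
  have hMexp : M = A ^ 3 + e2 • A ^ 2 + e1 • A + e0 • 1 := by
    have h1 : M = (Polynomial.aeval A)
        ((Polynomial.X - Polynomial.C a) * (Polynomial.X - Polynomial.C b) *
          (Polynomial.X + Polynomial.C δ')) := by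
      simp [_root_.map_mul, _root_.map_sub, _root_.map_add, Polynomial.aeval_X,
        Polynomial.aeval_C, Algebra.algebraMap_eq_smul_one, hMdef]
    have h2 : (Polynomial.X - Polynomial.C a) * (Polynomial.X - Polynomial.C b) *
        (Polynomial.X + Polynomial.C δ')
        = Polynomial.X ^ 3 + Polynomial.C e2 * Polynomial.X ^ 2 + Polynomial.C e1 * Polynomial.X
          + Polynomial.C e0 := by
      simp only [he2def, he1def, he0def, _root_.map_sub, _root_.map_add, _root_.map_mul]
      ring
    rw [h1, h2]
    simp [_root_.map_add, _root_.map_mul, _root_.map_pow, Polynomial.aeval_X, Polynomial.aeval_C,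
      Algebra.algebraMap_eq_smul_one, smul_mul_assoc, one_mul]
  -- entries of M
  have hwalk0 : ∀ (m : ℕ) (u v : V), (∀ p : G.Walk u v, p.length ≠ m) → (A ^ m) u v = 0 := by
    intro m u v hp
    rw [hAdef, SimpleGraph.adjMatrix_pow_apply_eq_card_walk]
    norm_cast
    rw [Fintype.card_eq_zero_iff]
    constructor
    rintro ⟨p, hpm⟩
    exact hp p hpm
  have hA3diag : ∀ u : V, (A ^ 3) u u = 0 := by
    intro u
    refine hwalk0 3 u u fun p hp => ?_
    have hodd : Odd p.length := by rw [hp]; decide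
    have := (C.odd_length_iff_not_congr p).mp hodd
    tauto
  have hA2diag : ∀ u : V, (A ^ 2) u u = δ' := by
    intro u
    rw [sq, hAdef, G.adjMatrix_mul_self_apply_self u, hreg u]
  have hAdiag : ∀ u : V, A u u = 0 := by
    intro u
    simp [hAdef]
  set N : ℝ := δ' - (a + b) + a * b with hNdef
  have hMdiag : ∀ u : V, M u u = δ' * N := by
    intro u
    have h1 : M u u = (A ^ 3) u u + e2 * (A ^ 2) u u + e1 * A u u + e0 * (1 : Matrix V V ℝ) u u := by
      rw [hMexp]
      simp [Matrix.add_apply, Matrix.smul_apply, smul_eq_mul]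
    rw [h1, hA3diag, hA2diag, hAdiag, Matrix.one_apply_eq, he2def, he1def, he0def, hNdef]
    ring
  have hMoff : ∀ u v : V, u ≠ v → 3 < G.dist u v → M u v = 0 := by
    intro u v huv hdist
    have hnw : ∀ m, m ≤ 3 → (A ^ m) u v = 0 := by
      intro m hm
      refine hwalk0 m u v fun p hp => ?_
      have := G.dist_le p
      omega
    have h1 : A u v = 0 := by
      have := hnw 1 (by omega)
      rwa [pow_one] at this
    rw [hMexp]
    simp [Matrix.add_apply, Matrix.smul_apply, hnw 3 le_rfl, hnw 2 (by omega), h1,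
      Matrix.one_apply_ne huv]
  -- the extremal set
  obtain ⟨S, hSind, hScard⟩ :
      ∃ S : Finset V, G.IsKIndepSet 3 S ∧ S.card = G.kIndepNum 3 := by
    have hne : {m : ℕ | ∃ S : Finset V, G.IsKIndepSet 3 S ∧ S.card = m}.Nonempty :=
      ⟨0, ∅, fun u hu => absurd hu (by simp), Finset.card_empty⟩
    have hbdd : BddAbove {m : ℕ | ∃ S : Finset V, G.IsKIndepSet 3 S ∧ S.card = m} := by
      refine ⟨Fintype.card V, ?_⟩
      rintro m ⟨S, -, rfl⟩
      exact Finset.card_le_univ S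
    exact Nat.sSup_mem hne hbdd
  rw [← hScard]
  -- quadratic form computations
  set o : V → ℝ := fun _ => 1 with hodef
  have honev' : A *ᵥ o = δ' • o := honev
  have hpow : ∀ m : ℕ, (A ^ m) *ᵥ o = (δ' ^ m) • o := by
    intro m
    induction m with
    | zero => simp [Matrix.one_mulVec]
    | succ m ih =>
      rw [pow_succ, ← Matrix.mulVec_mulVec, honev', Matrix.mulVec_smul, ih, smul_smul,
        pow_succ]
      rw [mul_comm]
  have hM1 : M *ᵥ o = q δ' • o := by
    rw [hMexp]
    simp only [Matrix.add_mulVec, Matrix.smul_mulVec, Matrix.one_mulVec, hpow,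
      honev', smul_smul]
    ext u
    simp only [Pi.add_apply, Pi.smul_apply, smul_eq_mul, hodef, hqdef, mul_one]
    ring
  have hMsymm : Mᵀ = M := by
    rw [hMexp]
    simp [Matrix.transpose_add, Matrix.transpose_smul, Matrix.transpose_pow,
      Matrix.transpose_one, hAdef]
  set χ : V → ℝ := fun u => if u ∈ S then 1 else 0 with hχdef
  set k : ℝ := (S.card : ℝ) with hkdef
  have hsum_ind : ∀ f : V → ℝ, (∑ u, χ u * f u) = ∑ u ∈ S, f u := by
    intro f
    calc (∑ u, χ u * f u) = ∑ u, (if u ∈ S then f u else 0) := by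
          refine Finset.sum_congr rfl fun u _ => ?_
          simp only [hχdef]
          split <;> simp
      _ = ∑ u ∈ S, f u := by rw [Finset.sum_ite_mem, Finset.univ_inter]
  have hsum_ind' : ∀ f : V → ℝ, (∑ v, f v * χ v) = ∑ v ∈ S, f v := by
    intro f
    calc (∑ v, f v * χ v) = ∑ v, (if v ∈ S then f v else 0) := by
          refine Finset.sum_congr rfl fun v _ => ?_
          simp only [hχdef]
          split <;> simp
      _ = ∑ v ∈ S, f v := by rw [Finset.sum_ite_mem, Finset.univ_inter]
  have hform : χ ⬝ᵥ (M *ᵥ χ) = k * (δ' * N) := by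
    have h1 : χ ⬝ᵥ (M *ᵥ χ) = ∑ u ∈ S, ∑ v ∈ S, M u v := by
      rw [dotProduct, hsum_ind fun u => (M *ᵥ χ) u]
      refine Finset.sum_congr rfl fun u _ => ?_
      rw [Matrix.mulVec, dotProduct, hsum_ind' fun v => M u v]
    have h2 : ∀ u ∈ S, (∑ v ∈ S, M u v) = δ' * N := by
      intro u hu
      rw [Finset.sum_eq_single_of_mem u hu fun v hv hvu =>
        hMoff u v (Ne.symm hvu) (hSind u hu v hv (Ne.symm hvu))]
      exact hMdiag u
    rw [h1, Finset.sum_congr rfl h2, Finset.sum_const, nsmul_eq_mul]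
  have hone_dot : o ⬝ᵥ o = (n : ℝ) := by
    simp [dotProduct, hodef, Finset.card_univ, hn]
  have hχ_dot_one : χ ⬝ᵥ o = k := by
    rw [dotProduct, hsum_ind fun _ => (1 : ℝ)]
    simp [hkdef]
  have hnne : (n : ℝ) ≠ 0 := by
    exact_mod_cast hnpos.ne'
  set c' : ℝ := k / n with hc'def
  have hχMo : χ ⬝ᵥ (M *ᵥ o) = q δ' * k := by
    rw [hM1, dotProduct_smul, smul_eq_mul, hχ_dot_one]
  have hoMχ : o ⬝ᵥ (M *ᵥ χ) = q δ' * k := by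
    rw [Matrix.dotProduct_mulVec, show o ᵥ* M = q δ' • o by
      rw [← hMsymm, Matrix.vecMul_transpose, hM1], smul_dotProduct, smul_eq_mul,
      dotProduct_comm, hχ_dot_one]
  have hoMo : o ⬝ᵥ M *ᵥ o = q δ' * n := by
    rw [hM1, dotProduct_smul, smul_eq_mul, hone_dot]
  have hlow : k ^ 2 * q δ' / n ≤ χ ⬝ᵥ (M *ᵥ χ) := by
    have hstep : (χ - c' • o) ⬝ᵥ (M *ᵥ (χ - c' • o))
        = χ ⬝ᵥ (M *ᵥ χ) - k ^ 2 * q δ' / n := by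
      simp only [Matrix.mulVec_sub, Matrix.mulVec_smul, sub_dotProduct,
        dotProduct_sub, smul_dotProduct, dotProduct_smul, smul_eq_mul]
      rw [hχMo, hoMχ, hoMo, hc'def]
      field_simp
      ring
    have hz := hquad (χ - c' • o)
    rw [hstep] at hz
    linarith
  have hNnonneg : 0 ≤ N := by
    obtain ⟨u⟩ := hV
    have h := hquad (Pi.single u 1)
    have he : (Pi.single u 1 : V → ℝ) ⬝ᵥ (M *ᵥ Pi.single u 1) = M u u := by
      have e1 : (M *ᵥ (Pi.single u 1 : V → ℝ)) = fun w => M w u := by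
        ext w
        simp [Matrix.mulVec, dotProduct, Pi.single_apply]
      rw [e1]
      simp [dotProduct, Pi.single_apply]
    rw [he, hMdiag u] at h
    exact nonneg_of_mul_nonneg_right h hδpos
  have hqδ : q δ' = 2 * δ' * ((δ' - a) * (δ' - b)) := by
    simp only [hqdef]
    ring
  have hden_pos : 0 < 2 * (δ' - a) * (δ' - b) := by
    have h1 : 0 < δ' - a := by linarith
    have h2 : 0 < δ' - b := by linarith
    positivity
  rw [hθ0]
  rcases Nat.eq_zero_or_pos S.card with h0 | hpos
  · have hk0 : k = 0 := by rw [hkdef, h0, Nat.cast_zero]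
    rw [hk0]
    apply div_nonneg _ (le_of_lt hden_pos)
    have h1 : (0 : ℝ) ≤ (n : ℝ) := by positivity
    exact mul_nonneg h1 hNnonneg
  · have hkpos : 0 < k := by
      rw [hkdef]
      exact_mod_cast hpos
    have hmain := hlow
    rw [hform, div_le_iff₀ (by exact_mod_cast hnpos)] at hmain
    rw [le_div_iff₀ hden_pos]
    have hfin : (k * (2 * (δ' - a) * (δ' - b))) * (k * δ') ≤ ((n : ℝ) * N) * (k * δ') := by
      rw [hqδ] at hmain
      linear_combination hmain
    exact le_of_mul_le_mul_right hfin (mul_pos hkpos hδpos)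
end

section
/- Let d ≥ 3 and q ≥ 2 be integers and let b = d mod q. Then the 3-independence number of the Hamming graph H(d,q) satisfies: α₃(H(d,q)) ≤ q^{d−1}·(d−2)/(d·(d(q−1)−q)) if b = 0; α₃(H(d,q)) ≤ q^{d−1}/(d(q−1)+1) if b = 1; α₃(H(d,q)) ≤ q^{d−1}/(d(q−1)−q+2) if b = 2; and α₃(H(d,q)) ≤ q^{d−1}·(q(d−b)+(b−1)²+(1−d))/((dq−d+b−2q)·(dq−d+b−q)) if 2 < b < q. -/
/-- The 3-independence number of the Hamming graph `H(d,q)`: the maximum size of a set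
of words of length `d` over an alphabet of size `q` any two distinct members of which
have Hamming distance at least `4`. -/
noncomputable def hammingAlpha3 (d q : ℕ) : ℕ :=
  sSup {m : ℕ | ∃ C : Finset (Fin d → Fin q),
    (∀ x ∈ C, ∀ y ∈ C, x ≠ y → 4 ≤ hammingDist x y) ∧ C.card = m}


open Finset Complex

namespace HammingLP

variable {q : ℕ} [NeZero q]
noncomputable def ψ : ZMod q → ℂ := ZMod.stdAddChar
noncomputable def u (t : ZMod q) : ℂ := if t = 0 then 0 else 1

lemma psi_zero : ψ (0 : ZMod q) = 1 := AddChar.map_zero_eq_one _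

lemma psi_add (s t : ZMod q) : ψ (s + t) = ψ s * ψ t := AddChar.map_add_eq_mul _ s t

lemma psi_mul_conj (x : ZMod q) : ψ x * (starRingEnd ℂ) (ψ x) = 1 := by
  rw [Complex.mul_conj]
  norm_cast
  have : ψ x = (ZMod.toCircle x : ℂ) := rfl
  rw [this]
  simp [Complex.normSq_eq_norm_sq, Circle.norm_coe]

lemma psi_sub (m n : ZMod q) : ψ m * (starRingEnd ℂ) (ψ n) = ψ (m - n) := by
  have h1 : ψ m = ψ (m - n) * ψ n := by rw [← psi_add]; ring_nf
  calc ψ m * (starRingEnd ℂ) (ψ n) = ψ (m - n) * (ψ n * (starRingEnd ℂ) (ψ n)) := by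
        rw [h1]; ring
    _ = ψ (m - n) := by rw [psi_mul_conj]; ring

lemma sum_psi (z : ZMod q) : ∑ t : ZMod q, ψ (t * z) = if z = 0 then (q : ℂ) else 0 := by
  split_ifs with h
  · subst h; simp [psi_zero, ZMod.card q]
  · have : ∑ t : ZMod q, ψ (t * z) = ∑ t : ZMod q, (ZMod.stdAddChar.mulShift z) t := by
      apply Finset.sum_congr rfl
      intro t _
      simp [ψ, AddChar.mulShift_apply, mul_comm]
    rw [this]
    exact AddChar.sum_eq_zero_of_ne_one (ZMod.isPrimitive_stdAddChar q h)

lemma sum_u_psi (z : ZMod q) :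
    ∑ t : ZMod q, u t * ψ (t * z) = (if z = 0 then (q : ℂ) else 0) - 1 := by
  have h : ∀ t : ZMod q, u t * ψ (t * z) = ψ (t * z) - (if t = 0 then ψ (t * z) else 0) := by
    intro t; unfold u; split_ifs <;> ring
  rw [Finset.sum_congr rfl (fun t _ => h t), Finset.sum_sub_distrib, sum_psi,
    Finset.sum_ite_eq' Finset.univ (0 : ZMod q) (fun t => ψ (t * z))]
  simp [psi_zero]

variable {d : ℕ}

/-- `G r z = ∑_a C(wt a, r) ∏_j ψ (a j * z j)` -/
noncomputable def G (d : ℕ) (r : ℕ) (z : Fin d → ZMod q) : ℂ :=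
  ∑ a : Fin d → ZMod q, (Nat.choose (hammingNorm a) r : ℂ) * ∏ j, ψ (a j * z j)

-- counting lemma
lemma sum_powersetCard_prod_u (a : Fin d → ZMod q) (r : ℕ) :
    ∑ T ∈ Finset.powersetCard r Finset.univ, ∏ j ∈ T, u (a j)
      = (Nat.choose (hammingNorm a) r : ℂ) := by
  classical
  set W : Finset (Fin d) := Finset.univ.filter (fun j => a j ≠ 0) with hW
  have hterm : ∀ T : Finset (Fin d), (∏ j ∈ T, u (a j)) = if T ⊆ W then 1 else 0 := by
    intro T
    split_ifs with h
    · apply Finset.prod_eq_one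
      intro j hj
      have : a j ≠ 0 := by
        have := h hj
        simp [hW, Finset.mem_filter] at this
        exact this
      simp [u, this]
    · obtain ⟨j, hjT, hjW⟩ := Finset.not_subset.mp h
      apply Finset.prod_eq_zero hjT
      have : a j = 0 := by
        by_contra hc
        exact hjW (by simp [hW, Finset.mem_filter, hc])
      simp [u, this]
  rw [Finset.sum_congr rfl (fun T _ => hterm T), ← Finset.sum_filter]
  have hfilter : (Finset.powersetCard r (Finset.univ : Finset (Fin d))).filter (· ⊆ W)
      = Finset.powersetCard r W := by
    ext T
    simp only [Finset.mem_filter, Finset.mem_powersetCard]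
    constructor
    · rintro ⟨⟨_, hc⟩, hs⟩; exact ⟨hs, hc⟩
    · rintro ⟨hs, hc⟩; exact ⟨⟨Finset.subset_univ _, hc⟩, hs⟩
  rw [hfilter]
  simp only [Finset.sum_const, Finset.card_powersetCard, nsmul_eq_mul, mul_one]
  congr 2


lemma G_closed (r : ℕ) (z : Fin d → ZMod q) :
    G d r z = ∑ T ∈ Finset.powersetCard r Finset.univ,
      ∏ j, (if j ∈ T then ((if z j = 0 then (q : ℂ) else 0) - 1)
            else (if z j = 0 then (q : ℂ) else 0)) := by
  classical
  have step1 : G d r z = ∑ a : Fin d → ZMod q,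
      (∑ T ∈ Finset.powersetCard r Finset.univ, ∏ j ∈ T, u (a j)) * ∏ j, ψ (a j * z j) := by
    unfold G
    exact Finset.sum_congr rfl fun a _ => by rw [sum_powersetCard_prod_u]
  rw [step1]
  have step2 : ∀ a : Fin d → ZMod q,
      (∑ T ∈ Finset.powersetCard r Finset.univ, ∏ j ∈ T, u (a j)) * ∏ j, ψ (a j * z j)
      = ∑ T ∈ Finset.powersetCard r Finset.univ,
          ∏ j, ((if j ∈ T then u (a j) else 1) * ψ (a j * z j)) := by
    intro a
    rw [Finset.sum_mul]
    refine Finset.sum_congr rfl fun T _ => ?_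
    rw [Finset.prod_mul_distrib, Fintype.prod_ite_mem]
  rw [Finset.sum_congr rfl fun a _ => step2 a, Finset.sum_comm]
  refine Finset.sum_congr rfl fun T _ => ?_
  rw [show (∑ x : Fin d → ZMod q, ∏ j, ((if j ∈ T then u (x j) else 1) * ψ (x j * z j)))
      = ∏ j, ∑ t : ZMod q, ((if j ∈ T then u t else 1) * ψ (t * z j)) from
    (Fintype.prod_sum fun j t => (if j ∈ T then u t else 1) * ψ (t * z j)).symm]
  refine Finset.prod_congr rfl fun j _ => ?_
  by_cases h : j ∈ T
  · simp only [if_pos h]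
    exact sum_u_psi (z j)
  · simp only [if_neg h, one_mul]
    exact sum_psi (z j)

lemma G_zero (r : ℕ) : G d r (0 : Fin d → ZMod q)
    = (d.choose r : ℂ) * ((q : ℂ) - 1) ^ r * (q : ℂ) ^ (d - r) := by
  classical
  rw [G_closed]
  have key : ∀ T ∈ Finset.powersetCard r (Finset.univ : Finset (Fin d)),
      (∏ j, (if j ∈ T then ((if (0 : Fin d → ZMod q) j = 0 then (q : ℂ) else 0) - 1)
            else (if (0 : Fin d → ZMod q) j = 0 then (q : ℂ) else 0)))
      = ((q : ℂ) - 1) ^ r * (q : ℂ) ^ (d - r) := by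
    intro T hT
    rw [Finset.mem_powersetCard] at hT
    have e : ∀ j : Fin d,
        (if j ∈ T then ((if (0 : Fin d → ZMod q) j = 0 then (q : ℂ) else 0) - 1)
          else (if (0 : Fin d → ZMod q) j = 0 then (q : ℂ) else 0))
        = (if j ∈ T then ((q : ℂ) - 1) else (q : ℂ)) := by
      intro j; simp
    rw [Finset.prod_congr rfl (fun j _ => e j), ← Finset.prod_mul_prod_compl T,
      Finset.prod_congr rfl (fun j hj => if_pos hj),
      Finset.prod_congr rfl (fun j (hj : j ∈ Tᶜ) => if_neg (Finset.mem_compl.mp hj)),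
      Finset.prod_const, Finset.prod_const, Finset.card_compl, hT.2, Fintype.card_fin]
  rw [Finset.sum_congr rfl key, Finset.sum_const, Finset.card_powersetCard, nsmul_eq_mul]
  simp [mul_assoc]

lemma G_vanish (r : ℕ) (hr : r ≤ 3) (z : Fin d → ZMod q) (h4 : 4 ≤ hammingNorm z) :
    G d r z = 0 := by
  classical
  rw [G_closed]
  refine Finset.sum_eq_zero fun T hT => ?_
  rw [Finset.mem_powersetCard] at hT
  have hcard : T.card < hammingNorm z := by omega
  have : ∃ j, z j ≠ 0 ∧ j ∉ T := by
    by_contra hc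
    push_neg at hc
    have hsub : ({j | z j ≠ 0} : Finset (Fin d)) ⊆ T := by
      intro j hj
      simp only [Finset.mem_filter] at hj
      exact hc j (by simpa using hj)
    have := Finset.card_le_card hsub
    unfold hammingNorm at hcard
    omega
  obtain ⟨j, hzj, hjT⟩ := this
  apply Finset.prod_eq_zero (Finset.mem_univ j)
  rw [if_neg hjT, if_neg hzj]


noncomputable def S (C' : Finset (Fin d → ZMod q)) (a : Fin d → ZMod q) : ℂ :=
  ∑ x ∈ C', ∏ j, ψ (a j * x j)

lemma S_mul_conj (C' : Finset (Fin d → ZMod q)) (a : Fin d → ZMod q) :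
    S C' a * (starRingEnd ℂ) (S C' a)
      = ∑ x ∈ C', ∑ y ∈ C', ∏ j, ψ (a j * (x j - y j)) := by
  unfold S
  rw [map_sum, Finset.sum_mul_sum]
  refine Finset.sum_congr rfl fun x _ => Finset.sum_congr rfl fun y _ => ?_
  rw [map_prod, ← Finset.prod_mul_distrib]
  refine Finset.prod_congr rfl fun j _ => ?_
  rw [psi_sub, ← mul_sub]

lemma key_identity (C' : Finset (Fin d → ZMod q))
    (hC : ∀ x ∈ C', ∀ y ∈ C', x ≠ y → 4 ≤ hammingDist x y) (r : ℕ) (hr : r ≤ 3) :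
    ∑ a : Fin d → ZMod q, (Nat.choose (hammingNorm a) r : ℂ) * (S C' a * (starRingEnd ℂ) (S C' a))
      = (C'.card : ℂ) * ((d.choose r : ℂ) * ((q : ℂ) - 1) ^ r * (q : ℂ) ^ (d - r)) := by
  classical
  have step1 : ∑ a : Fin d → ZMod q,
      (Nat.choose (hammingNorm a) r : ℂ) * (S C' a * (starRingEnd ℂ) (S C' a))
      = ∑ a : Fin d → ZMod q, ∑ x ∈ C', ∑ y ∈ C',
          (Nat.choose (hammingNorm a) r : ℂ) * ∏ j, ψ (a j * (x j - y j)) := by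
    refine Finset.sum_congr rfl fun a _ => ?_
    rw [S_mul_conj, Finset.mul_sum]
    exact Finset.sum_congr rfl fun x _ => by rw [Finset.mul_sum]
  rw [step1, Finset.sum_comm]
  have step2 : ∀ x ∈ C', ∑ a : Fin d → ZMod q, ∑ y ∈ C',
      (Nat.choose (hammingNorm a) r : ℂ) * ∏ j, ψ (a j * (x j - y j))
      = ∑ y ∈ C', G d r (x - y) := by
    intro x _
    rw [Finset.sum_comm]
    exact Finset.sum_congr rfl fun y _ => rfl
  rw [Finset.sum_congr rfl step2]
  have step3 : ∀ x ∈ C', ∑ y ∈ C', G d r (x - y)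
      = (d.choose r : ℂ) * ((q : ℂ) - 1) ^ r * (q : ℂ) ^ (d - r) := by
    intro x hx
    rw [Finset.sum_eq_single x]
    · rw [sub_self, G_zero]
    · intro y hy hxy
      apply G_vanish r hr
      rw [show x - y = fun j => x j - y j from rfl]
      have : hammingNorm (fun j => x j - y j) = hammingDist x y := by
        unfold hammingNorm hammingDist
        congr 1
        ext j
        simp [sub_eq_zero]
      rw [this]
      exact hC x hx y hy (Ne.symm hxy)
    · intro hx'; exact absurd hx hx'
  rw [Finset.sum_congr rfl step3, Finset.sum_const, nsmul_eq_mul]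


lemma lp_bound (c : ℕ → ℝ) (hc0 : 0 ≤ c 0)
    (hpos : ∀ i : ℕ, 1 ≤ i → i ≤ d → 0 ≤ ∑ r ∈ Finset.range 4, c r * (i.choose r : ℝ))
    (C' : Finset (Fin d → ZMod q))
    (hC : ∀ x ∈ C', ∀ y ∈ C', x ≠ y → 4 ≤ hammingDist x y) :
    c 0 * (C'.card : ℝ) ^ 2 ≤ (C'.card : ℝ) *
      ∑ r ∈ Finset.range 4, c r * (d.choose r : ℝ) * ((q : ℝ) - 1) ^ r * (q : ℝ) ^ (d - r) := by
  classical
  set P : (Fin d → ZMod q) → ℝ :=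
    fun a => ∑ r ∈ Finset.range 4, c r * ((hammingNorm a).choose r : ℝ) with hP
  set E : ℝ := ∑ a : Fin d → ZMod q, P a * Complex.normSq (S C' a) with hEdef
  -- identity: E = card * total
  have hE : E = (C'.card : ℝ) *
      ∑ r ∈ Finset.range 4, c r * (d.choose r : ℝ) * ((q : ℝ) - 1) ^ r * (q : ℝ) ^ (d - r) := by
    have hcast : (E : ℂ) = ∑ a : Fin d → ZMod q,
        (P a : ℂ) * (S C' a * (starRingEnd ℂ) (S C' a)) := by
      rw [hEdef]
      push_cast
      refine Finset.sum_congr rfl fun a _ => ?_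
      rw [Complex.mul_conj]
    have hswap : (E : ℂ) = ∑ r ∈ Finset.range 4, (c r : ℂ) *
        ∑ a : Fin d → ZMod q, ((hammingNorm a).choose r : ℂ)
          * (S C' a * (starRingEnd ℂ) (S C' a)) := by
      rw [hcast]
      have : ∀ a : Fin d → ZMod q, (P a : ℂ) * (S C' a * (starRingEnd ℂ) (S C' a))
          = ∑ r ∈ Finset.range 4, (c r : ℂ) * (((hammingNorm a).choose r : ℂ)
              * (S C' a * (starRingEnd ℂ) (S C' a))) := by
        intro a
        rw [hP]
        push_cast
        rw [Finset.sum_mul]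
        exact Finset.sum_congr rfl fun r _ => by ring
      rw [Finset.sum_congr rfl fun a _ => this a, Finset.sum_comm]
      exact Finset.sum_congr rfl fun r _ => by rw [Finset.mul_sum]
    have hfinal : (E : ℂ) = ∑ r ∈ Finset.range 4, (c r : ℂ) * ((C'.card : ℂ)
        * ((d.choose r : ℂ) * ((q : ℂ) - 1) ^ r * (q : ℂ) ^ (d - r))) := by
      rw [hswap]
      refine Finset.sum_congr rfl fun r hr => ?_
      rw [key_identity C' hC r (by simp at hr; omega)]
    have : (E : ℂ) = (((C'.card : ℝ) * ∑ r ∈ Finset.range 4,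
        c r * (d.choose r : ℝ) * ((q : ℝ) - 1) ^ r * (q : ℝ) ^ (d - r) : ℝ) : ℂ) := by
      rw [hfinal]
      push_cast
      rw [Finset.mul_sum]
      exact Finset.sum_congr rfl fun r _ => by ring
    exact_mod_cast this
  -- lower bound for E
  have hS0 : S C' (0 : Fin d → ZMod q) = (C'.card : ℂ) := by
    unfold S
    rw [Finset.sum_congr rfl fun x _ => ?_]
    · rw [Finset.sum_const, nsmul_eq_mul, mul_one]
    · rw [Finset.prod_congr rfl fun j _ => ?_]
      · exact Finset.prod_const_one
      · show ψ ((0 : Fin d → ZMod q) j * x j) = 1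
        rw [Pi.zero_apply, zero_mul, psi_zero]
  have hP0 : P (0 : Fin d → ZMod q) = c 0 := by
    have h0 : hammingNorm (0 : Fin d → ZMod q) = 0 := by simp [hammingNorm]
    show (∑ r ∈ Finset.range 4, c r * ((hammingNorm (0 : Fin d → ZMod q)).choose r : ℝ)) = c 0
    rw [h0, Finset.sum_range_succ, Finset.sum_range_succ, Finset.sum_range_succ,
      Finset.sum_range_one]
    simp
  have hterm0 : P (0 : Fin d → ZMod q) * Complex.normSq (S C' (0 : Fin d → ZMod q))
      = c 0 * (C'.card : ℝ) ^ 2 := by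
    rw [hP0, hS0]
    rw [Complex.normSq_natCast]
    push_cast
    ring
  have hnonneg : ∀ a : Fin d → ZMod q, 0 ≤ P a * Complex.normSq (S C' a) := by
    intro a
    apply mul_nonneg _ (Complex.normSq_nonneg _)
    by_cases ha : a = 0
    · rw [ha, hP0]; exact hc0
    · apply hpos
      · have : hammingNorm a ≠ 0 := fun hcon => ha (hammingNorm_eq_zero.mp hcon)
        omega
      · simpa using (hammingNorm_le_card_fintype (x := a))
  have : c 0 * (C'.card : ℝ) ^ 2 ≤ E := by
    rw [← hterm0, hEdef]
    exact Finset.single_le_sum (fun a _ => hnonneg a) (Finset.mem_univ _)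
  linarith [hE ▸ this]

end HammingLP

noncomputable def hammingAlpha3' (d q : ℕ) : ℕ :=
  sSup {m : ℕ | ∃ C : Finset (Fin d → Fin q),
    (∀ x ∈ C, ∀ y ∈ C, x ≠ y → 4 ≤ hammingDist x y) ∧ C.card = m}

open HammingLP in
lemma alpha3_le_of_lp (d q : ℕ) (hq : 2 ≤ q) (c : ℕ → ℝ) (hc0 : 0 < c 0)
    (hpos : ∀ i : ℕ, 1 ≤ i → i ≤ d → 0 ≤ ∑ r ∈ Finset.range 4, c r * (i.choose r : ℝ)) :
    (hammingAlpha3' d q : ℝ) ≤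
      (∑ r ∈ Finset.range 4, c r * (d.choose r : ℝ) * ((q : ℝ) - 1) ^ r * (q : ℝ) ^ (d - r))
        / c 0 := by
  classical
  haveI : NeZero q := ⟨by omega⟩
  set R0 : ℝ :=
    ∑ r ∈ Finset.range 4, c r * (d.choose r : ℝ) * ((q : ℝ) - 1) ^ r * (q : ℝ) ^ (d - r)
    with hR0
  -- the map from Fin q words to ZMod q words
  set g : Fin q → ZMod q := fun i => ((i : ℕ) : ZMod q) with hg
  have hg_inj : Function.Injective g := by
    intro i1 i2 h
    apply Fin.ext
    rw [← ZMod.val_cast_of_lt i1.2, ← ZMod.val_cast_of_lt i2.2]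
    exact congrArg ZMod.val h
  have key : ∀ C : Finset (Fin d → Fin q),
      (∀ x ∈ C, ∀ y ∈ C, x ≠ y → 4 ≤ hammingDist x y) →
      c 0 * (C.card : ℝ) ^ 2 ≤ (C.card : ℝ) * R0 := by
    intro C hC
    set φ : (Fin d → Fin q) → (Fin d → ZMod q) := fun x j => g (x j) with hφ
    have hφ_inj : Function.Injective φ := by
      intro x y h
      funext j
      exact hg_inj (congrFun h j)
    have hdist : ∀ x y : Fin d → Fin q, hammingDist (φ x) (φ y) = hammingDist x y :=
      fun x y => hammingDist_comp (fun _ => g) (fun _ => hg_inj)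
    set C' : Finset (Fin d → ZMod q) := C.image φ with hC'
    have hcard : C'.card = C.card := Finset.card_image_of_injective C hφ_inj
    have hC'prop : ∀ x ∈ C', ∀ y ∈ C', x ≠ y → 4 ≤ hammingDist x y := by
      intro x hx y hy hxy
      obtain ⟨x0, hx0, rfl⟩ := Finset.mem_image.mp hx
      obtain ⟨y0, hy0, rfl⟩ := Finset.mem_image.mp hy
      rw [hdist]
      exact hC x0 hx0 y0 hy0 (fun h => hxy (by rw [h]))
    have := lp_bound c hc0.le hpos C' hC'prop
    rwa [hcard] at this
  have hR0pos : c 0 ≤ R0 := by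
    have := key {fun _ => (0 : Fin q)}
      (by intro x hx y hy hxy
          simp only [Finset.mem_singleton] at hx hy
          exact absurd (hx.trans hy.symm) hxy)
    simpa using this
  have hbound : ∀ m ∈ {m : ℕ | ∃ C : Finset (Fin d → Fin q),
      (∀ x ∈ C, ∀ y ∈ C, x ≠ y → 4 ≤ hammingDist x y) ∧ C.card = m},
      (m : ℝ) ≤ R0 / c 0 := by
    rintro m ⟨C, hC, rfl⟩
    have h2 := key C hC
    rcases Nat.eq_zero_or_pos C.card with h0 | hpos'
    · rw [h0]
      push_cast
      exact div_nonneg (hc0.le.trans hR0pos) hc0.le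
    · have hm : (0 : ℝ) < (C.card : ℝ) := by exact_mod_cast hpos'
      rw [le_div_iff₀ hc0]
      nlinarith
  have hnonempty : {m : ℕ | ∃ C : Finset (Fin d → Fin q),
      (∀ x ∈ C, ∀ y ∈ C, x ≠ y → 4 ≤ hammingDist x y) ∧ C.card = m}.Nonempty := by
    exact ⟨0, ∅, by simp⟩
  have hRnonneg : (0 : ℝ) ≤ R0 / c 0 := div_nonneg (hc0.le.trans hR0pos) hc0.le
  have hsup : hammingAlpha3' d q ≤ ⌊R0 / c 0⌋₊ := by
    apply csSup_le hnonempty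
    intro m hm
    exact Nat.le_floor (hbound m hm)
  calc (hammingAlpha3' d q : ℝ) ≤ (⌊R0 / c 0⌋₊ : ℝ) := by exact_mod_cast hsup
    _ ≤ R0 / c 0 := Nat.floor_le hRnonneg

lemma cast_choose_three (n : ℕ) : ((n.choose 3 : ℕ) : ℝ)
    = (n : ℝ) * ((n : ℝ) - 1) * ((n : ℝ) - 2) / 6 := by
  induction n with
  | zero => simp
  | succ m ih =>
    rw [show m + 1 = m + 1 from rfl, Nat.choose_succ_succ]
    push_cast [ih, Nat.cast_choose_two]
    ring

noncomputable def cc (d A : ℕ) : ℕ → ℝ := fun r =>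
  if r = 0 then ((0:ℝ) - (A:ℝ)) * ((0:ℝ) - (A:ℝ) - 1) * ((d:ℝ) - 0)
  else if r = 1 then
    ((1:ℝ) - (A:ℝ)) * ((1:ℝ) - (A:ℝ) - 1) * ((d:ℝ) - 1)
      - ((0:ℝ) - (A:ℝ)) * ((0:ℝ) - (A:ℝ) - 1) * ((d:ℝ) - 0)
  else if r = 2 then
    ((2:ℝ) - (A:ℝ)) * ((2:ℝ) - (A:ℝ) - 1) * ((d:ℝ) - 2)
      - 2 * (((1:ℝ) - (A:ℝ)) * ((1:ℝ) - (A:ℝ) - 1) * ((d:ℝ) - 1))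
      + ((0:ℝ) - (A:ℝ)) * ((0:ℝ) - (A:ℝ) - 1) * ((d:ℝ) - 0)
  else
    ((3:ℝ) - (A:ℝ)) * ((3:ℝ) - (A:ℝ) - 1) * ((d:ℝ) - 3)
      - 3 * (((2:ℝ) - (A:ℝ)) * ((2:ℝ) - (A:ℝ) - 1) * ((d:ℝ) - 2))
      + 3 * (((1:ℝ) - (A:ℝ)) * ((1:ℝ) - (A:ℝ) - 1) * ((d:ℝ) - 1))
      - ((0:ℝ) - (A:ℝ)) * ((0:ℝ) - (A:ℝ) - 1) * ((d:ℝ) - 0)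

lemma mul_nonneg_of_nonpos_nonpos {x y : ℝ} (hx : x ≤ 0) (hy : y ≤ 0) : 0 ≤ x * y := by
  nlinarith

lemma newton (d A : ℕ) (i : ℕ) :
    ∑ r ∈ Finset.range 4, cc d A r * (i.choose r : ℝ)
      = ((i : ℝ) - (A : ℝ)) * ((i : ℝ) - (A : ℝ) - 1) * ((d : ℝ) - (i : ℝ)) := by
  rw [Finset.sum_range_succ, Finset.sum_range_succ, Finset.sum_range_succ,
    Finset.sum_range_one]
  simp only [cc]
  norm_num [Nat.cast_choose_two, cast_choose_three, Nat.choose_one_right]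
  ring

lemma cubic_alpha_bound (d q A : ℕ) (hq : 2 ≤ q) (hA : 1 ≤ A) (hd : 1 ≤ d) :
    (hammingAlpha3' d q : ℝ) ≤
      (∑ r ∈ Finset.range 4, cc d A r * (d.choose r : ℝ) * ((q : ℝ) - 1) ^ r
          * (q : ℝ) ^ (d - r)) / ((A : ℝ) * ((A : ℝ) + 1) * (d : ℝ)) := by
  have hc0 : cc d A 0 = (A : ℝ) * ((A : ℝ) + 1) * (d : ℝ) := by
    simp only [cc]
    norm_num
    ring
  have hApos : (0 : ℝ) < (A : ℝ) := by exact_mod_cast hA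
  have hdpos : (0 : ℝ) < (d : ℝ) := by exact_mod_cast hd
  have hc0pos : 0 < cc d A 0 := by rw [hc0]; positivity
  have hpos : ∀ i : ℕ, 1 ≤ i → i ≤ d →
      0 ≤ ∑ r ∈ Finset.range 4, cc d A r * (i.choose r : ℝ) := by
    intro i hi1 hid
    rw [newton]
    have hdi : (i : ℝ) ≤ (d : ℝ) := by exact_mod_cast hid
    rcases le_or_gt i A with h | h
    · have hiA : (i : ℝ) ≤ (A : ℝ) := by exact_mod_cast h
      have h1 : 0 ≤ ((i : ℝ) - A) * ((i : ℝ) - A - 1) :=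
        mul_nonneg_of_nonpos_nonpos (by linarith) (by linarith)
      exact mul_nonneg h1 (by linarith)
    · have hiA : (A : ℝ) + 1 ≤ (i : ℝ) := by exact_mod_cast h
      exact mul_nonneg (mul_nonneg (by linarith) (by linarith)) (by linarith)
  have := alpha3_le_of_lp d q hq (cc d A) hc0pos hpos
  rwa [hc0] at this

lemma final_case (d q A : ℕ) (hq : 2 ≤ q) (hd : 1 ≤ d) (hA : 1 ≤ A) (num den : ℝ)
    (hden : den ≠ 0)
    (heq : (∑ r ∈ Finset.range 4, cc d A r * (d.choose r : ℝ) * ((q : ℝ) - 1) ^ r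
        * (q : ℝ) ^ (d - r)) * den = num * ((A : ℝ) * ((A : ℝ) + 1) * (d : ℝ))) :
    (hammingAlpha3' d q : ℝ) ≤ num / den := by
  refine le_trans (cubic_alpha_bound d q A hq hA hd) (le_of_eq ?_)
  have hApos : (0 : ℝ) < (A : ℝ) := by exact_mod_cast hA
  have hdpos : (0 : ℝ) < (d : ℝ) := by exact_mod_cast hd
  have hden1 : (A : ℝ) * ((A : ℝ) + 1) * (d : ℝ) ≠ 0 := by positivity
  rw [div_eq_div_iff hden1 hden]
  exact heq


theorem hamming_alpha3_bound' (d q b : ℕ) (hd : 3 ≤ d) (hq : 2 ≤ q) (hb : b = d % q) :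
    (b = 0 → (hammingAlpha3' d q : ℝ) ≤
      (q : ℝ) ^ (d - 1) * ((d : ℝ) - 2) / ((d : ℝ) * ((d : ℝ) * ((q : ℝ) - 1) - q))) ∧
    (b = 1 → (hammingAlpha3' d q : ℝ) ≤
      (q : ℝ) ^ (d - 1) / ((d : ℝ) * ((q : ℝ) - 1) + 1)) ∧
    (b = 2 → (hammingAlpha3' d q : ℝ) ≤
      (q : ℝ) ^ (d - 1) / ((d : ℝ) * ((q : ℝ) - 1) - q + 2)) ∧
    (2 < b → b < q → (hammingAlpha3' d q : ℝ) ≤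
      (q : ℝ) ^ (d - 1) * ((q : ℝ) * ((d : ℝ) - b) + ((b : ℝ) - 1) ^ 2 + (1 - (d : ℝ))) /
        (((d : ℝ) * q - d + b - 2 * q) * ((d : ℝ) * q - d + b - q))) := by
  set k := d / q with hk
  have hdkb : k * q + b = d := by
    rw [hb, hk, mul_comm]
    exact Nat.div_add_mod d q
  have h2kb : 2 * k + b ≤ d := by
    have h1 : k * 2 ≤ k * q := Nat.mul_le_mul_left k hq
    calc 2 * k + b = k * 2 + b := by ring
      _ ≤ k * q + b := Nat.add_le_add_right h1 b
      _ = d := hdkb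
  have hd_eq : (d : ℝ) = (k : ℝ) * (q : ℝ) + (b : ℝ) := by exact_mod_cast hdkb.symm
  have hqpos : (0 : ℝ) < (q : ℝ) := by
    have : 0 < q := by omega
    exact_mod_cast this
  have hdpos : (0 : ℝ) < (d : ℝ) := by
    have : 0 < d := by omega
    exact_mod_cast this
  have hp0 : (q : ℝ) ^ d = (q : ℝ) ^ (d - 3) * (q : ℝ) ^ 3 := by
    rw [← pow_add]; congr 1; omega
  have hp1 : (q : ℝ) ^ (d - 1) = (q : ℝ) ^ (d - 3) * (q : ℝ) ^ 2 := by
    rw [← pow_add]; congr 1; omega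
  have hp2 : (q : ℝ) ^ (d - 2) = (q : ℝ) ^ (d - 3) * (q : ℝ) ^ 1 := by
    rw [← pow_add]; congr 1; omega
  refine ⟨fun hb0 => ?_, fun hb1 => ?_, fun hb2 => ?_, fun hb3 hbq => ?_⟩
  -- case b = 0
  · subst hb0
    set A := d - k - 1 with hA
    have hA1 : 1 ≤ A := by omega
    have hA_eq : (A : ℝ) = (d : ℝ) - (k : ℝ) - 1 := by
      rw [show A = d - (k + 1) by omega, Nat.cast_sub (by omega)]
      push_cast; ring
    have hApos : (0 : ℝ) < (A : ℝ) := by exact_mod_cast hA1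
    have hden : (d : ℝ) * ((d : ℝ) * ((q : ℝ) - 1) - (q : ℝ)) ≠ 0 := by
      have h2 : (d : ℝ) * ((q : ℝ) - 1) - (q : ℝ) = (q : ℝ) * (A : ℝ) := by
        rw [hA_eq, hd_eq]; push_cast; ring
      rw [h2]
      exact ne_of_gt (mul_pos hdpos (mul_pos hqpos hApos))
    apply final_case d q A hq (by omega) hA1 _ _ hden
    rw [Finset.sum_range_succ, Finset.sum_range_succ, Finset.sum_range_succ,
      Finset.sum_range_one]
    simp only [cc, Nat.choose_zero_right, Nat.choose_one_right, Nat.cast_choose_two,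
      cast_choose_three, Nat.sub_zero, Nat.cast_one, pow_zero, pow_one]
    norm_num
    rw [hp0, hp1, hp2, hA_eq, hd_eq]
    push_cast
    ring
  -- case b = 1
  · subst hb1
    set A := d - k - 1 with hA
    have hA1 : 1 ≤ A := by omega
    have hA_eq : (A : ℝ) = (d : ℝ) - (k : ℝ) - 1 := by
      rw [show A = d - (k + 1) by omega, Nat.cast_sub (by omega)]
      push_cast; ring
    have hApos : (0 : ℝ) < (A : ℝ) := by exact_mod_cast hA1
    have hden : (d : ℝ) * ((q : ℝ) - 1) + 1 ≠ 0 := by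
      have h2 : (d : ℝ) * ((q : ℝ) - 1) + 1 = (q : ℝ) * ((A : ℝ) + 1) := by
        rw [hA_eq, hd_eq]; push_cast; ring
      rw [h2]
      exact ne_of_gt (mul_pos hqpos (by linarith))
    apply final_case d q A hq (by omega) hA1 _ _ hden
    rw [Finset.sum_range_succ, Finset.sum_range_succ, Finset.sum_range_succ,
      Finset.sum_range_one]
    simp only [cc, Nat.choose_zero_right, Nat.choose_one_right, Nat.cast_choose_two,
      cast_choose_three, Nat.sub_zero, Nat.cast_one, pow_zero, pow_one]
    norm_num
    rw [hp0, hp1, hp2, hA_eq, hd_eq]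
    push_cast
    ring
  -- case b = 2
  · subst hb2
    set A := d - k - 1 with hA
    have hA1 : 1 ≤ A := by omega
    have hA_eq : (A : ℝ) = (d : ℝ) - (k : ℝ) - 1 := by
      rw [show A = d - (k + 1) by omega, Nat.cast_sub (by omega)]
      push_cast; ring
    have hApos : (0 : ℝ) < (A : ℝ) := by exact_mod_cast hA1
    have hden : (d : ℝ) * ((q : ℝ) - 1) - (q : ℝ) + 2 ≠ 0 := by
      have h2 : (d : ℝ) * ((q : ℝ) - 1) - (q : ℝ) + 2 = (q : ℝ) * (A : ℝ) := by
        rw [hA_eq, hd_eq]; push_cast; ring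
      rw [h2]
      exact ne_of_gt (mul_pos hqpos hApos)
    apply final_case d q A hq (by omega) hA1 _ _ hden
    rw [Finset.sum_range_succ, Finset.sum_range_succ, Finset.sum_range_succ,
      Finset.sum_range_one]
    simp only [cc, Nat.choose_zero_right, Nat.choose_one_right, Nat.cast_choose_two,
      cast_choose_three, Nat.sub_zero, Nat.cast_one, pow_zero, pow_one]
    norm_num
    rw [hp0, hp1, hp2, hA_eq, hd_eq]
    push_cast
    ring
  -- case 2 < b < q
  · set A := d - k - 2 with hA
    have hA1 : 1 ≤ A := by omega
    have hA_eq : (A : ℝ) = (d : ℝ) - (k : ℝ) - 2 := by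
      rw [show A = d - (k + 2) by omega, Nat.cast_sub (by omega)]
      push_cast; ring
    have hApos : (0 : ℝ) < (A : ℝ) := by exact_mod_cast hA1
    have hden : ((d : ℝ) * (q : ℝ) - (d : ℝ) + (b : ℝ) - 2 * (q : ℝ))
        * ((d : ℝ) * (q : ℝ) - (d : ℝ) + (b : ℝ) - (q : ℝ)) ≠ 0 := by
      have h2 : (d : ℝ) * (q : ℝ) - (d : ℝ) + (b : ℝ) - 2 * (q : ℝ) = (q : ℝ) * (A : ℝ) := by
        rw [hA_eq, hd_eq]; push_cast; ring
      have h3 : (d : ℝ) * (q : ℝ) - (d : ℝ) + (b : ℝ) - (q : ℝ)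
          = (q : ℝ) * ((A : ℝ) + 1) := by
        rw [hA_eq, hd_eq]; push_cast; ring
      rw [h2, h3]
      exact ne_of_gt (mul_pos (mul_pos hqpos hApos) (mul_pos hqpos (by linarith)))
    apply final_case d q A hq (by omega) hA1 _ _ hden
    rw [Finset.sum_range_succ, Finset.sum_range_succ, Finset.sum_range_succ,
      Finset.sum_range_one]
    simp only [cc, Nat.choose_zero_right, Nat.choose_one_right, Nat.cast_choose_two,
      cast_choose_three, Nat.sub_zero, Nat.cast_one, pow_zero, pow_one]
    norm_num
    rw [hp0, hp1, hp2, hA_eq, hd_eq]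
    push_cast
    ring

/-- **Proposition (bound for Hamming graphs `H(d,q)`).**
Let `d ≥ 3`, `q ≥ 2` and `b = d % q`.  Then `α₃(H(d,q))` is at most
`q^(d-1) * (d-2) / (d * (d*(q-1) - q))` if `b = 0`;
`q^(d-1) / (d*(q-1) + 1)` if `b = 1`;
`q^(d-1) / (d*(q-1) - q + 2)` if `b = 2`; and
`q^(d-1) * (q*(d-b) + (b-1)^2 + (1-d)) / ((d*q - d + b - 2*q) * (d*q - d + b - q))`
if `2 < b < q`. -/
theorem hamming_alpha3_bound (d q b : ℕ) (hd : 3 ≤ d) (hq : 2 ≤ q) (hb : b = d % q) :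
    (b = 0 → (hammingAlpha3 d q : ℝ) ≤
      (q : ℝ) ^ (d - 1) * ((d : ℝ) - 2) / ((d : ℝ) * ((d : ℝ) * ((q : ℝ) - 1) - q))) ∧
    (b = 1 → (hammingAlpha3 d q : ℝ) ≤
      (q : ℝ) ^ (d - 1) / ((d : ℝ) * ((q : ℝ) - 1) + 1)) ∧
    (b = 2 → (hammingAlpha3 d q : ℝ) ≤
      (q : ℝ) ^ (d - 1) / ((d : ℝ) * ((q : ℝ) - 1) - q + 2)) ∧
    (2 < b → b < q → (hammingAlpha3 d q : ℝ) ≤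
      (q : ℝ) ^ (d - 1) * ((q : ℝ) * ((d : ℝ) - b) + ((b : ℝ) - 1) ^ 2 + (1 - (d : ℝ))) /
        (((d : ℝ) * q - d + b - 2 * q) * ((d : ℝ) * q - d + b - q))) := by
  have e : hammingAlpha3 d q = hammingAlpha3' d q := rfl
  rw [e]
  exact hamming_alpha3_bound' d q b hd hq hb
end

section
/- Let d ≥ 3 be an integer and let b = d mod 3. Then the 3-independence number of the Hamming graph H(d,3) satisfies α₃(H(d,3)) ≤ 3^{d−1}·(2d + b² + b − 4)/((2d + b)·(2d + b − 3)). -/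
open Finset Complex

noncomputable def om : ℂ := Complex.exp (2 * Real.pi * Complex.I / 3)

lemma om_prim : IsPrimitiveRoot om 3 := Complex.isPrimitiveRoot_exp 3 (by norm_num)

lemma om_pow_three : om ^ 3 = 1 := om_prim.pow_eq_one

lemma om_ne_one : om ≠ 1 := om_prim.ne_one (by norm_num)

lemma om_sum : 1 + om + om ^ 2 = 0 := by
  have h : (om - 1) * (1 + om + om ^ 2) = om ^ 3 - 1 := by ring
  rw [om_pow_three, sub_self] at h
  rcases mul_eq_zero.1 h with h' | h'
  · exact absurd (sub_eq_zero.1 h') om_ne_one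
  · exact h'

lemma om_pow_mod (m : ℕ) : om ^ (m % 3) = om ^ m := by
  conv_rhs => rw [← Nat.div_add_mod m 3, pow_add, pow_mul, om_pow_three, one_pow, one_mul]

noncomputable def ch (c : ZMod 3) : ℂ := om ^ c.val

lemma ch_zero : ch 0 = 1 := by simp [ch, ZMod.val_zero]

lemma ch_add (u v : ZMod 3) : ch (u + v) = ch u * ch v := by
  rw [ch, ch, ch, ← pow_add, ZMod.val_add, om_pow_mod]

lemma ch_mul_conj (c : ZMod 3) : ch c * (starRingEnd ℂ) (ch c) = 1 := by
  rw [Complex.mul_conj]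
  have : ‖ch c‖ = 1 := by
    rw [ch, norm_pow]
    rw [show om = Complex.exp (((2 * Real.pi / 3 : ℝ) : ℂ) * Complex.I) by
      rw [om]; push_cast; ring_nf]
    rw [Complex.norm_exp_ofReal_mul_I, one_pow]
  rw [Complex.normSq_eq_norm_sq, this]; norm_num

lemma ch_conj (c : ZMod 3) : (starRingEnd ℂ) (ch c) = ch (-c) := by
  have h1 := ch_mul_conj c
  have h2 : ch c * ch (-c) = 1 := by rw [← ch_add, add_neg_cancel, ch_zero]
  have hc : ch c ≠ 0 := by intro h; rw [h, zero_mul] at h1; exact one_ne_zero h1.symm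
  rw [← h2] at h1
  exact mul_left_cancel₀ hc h1


lemma sum_zmod3 {M : Type*} [AddCommMonoid M] (f : ZMod 3 → M) :
    ∑ c : ZMod 3, f c = f 0 + f 1 + f 2 := by
  rw [show (univ : Finset (ZMod 3)) = {0, 1, 2} by decide,
    Finset.sum_insert (by decide), Finset.sum_insert (by decide), Finset.sum_singleton, add_assoc]

lemma ch_one : ch 1 = om := by rw [ch]; norm_num [ZMod.val_one]

lemma ch_two : ch 2 = om ^ 2 := by rw [ch]; norm_num [show ((2 : ZMod 3)).val = 2 from rfl]

lemma ch_sum_zero (t : ZMod 3) (ht : t ≠ 0) : ∑ c : ZMod 3, ch (t * c) = 0 := by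
  have ht' : t = 1 ∨ t = 2 := by revert ht; revert t; decide
  have e1 : ∀ (a b : ZMod 3), a = b → ch a = ch b := fun a b h => by rw [h]
  rcases ht' with h | h <;> subst h <;> rw [sum_zmod3]
  · rw [e1 (1*0) 0 (by decide), e1 (1*1) 1 (by decide), e1 (1*2) 2 (by decide),
      ch_zero, ch_one, ch_two]
    linear_combination om_sum
  · rw [e1 (2*0) 0 (by decide), e1 (2*1) 2 (by decide), e1 (2*2) 1 (by decide),
      ch_zero, ch_one, ch_two]
    linear_combination om_sum

lemma ch_sum_ne (t : ZMod 3) (ht : t ≠ 0) : ch t + ch (2 * t) = -1 := by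
  have h := ch_sum_zero t ht
  rw [sum_zmod3] at h
  have h2 : t * 2 = 2 * t := by ring
  rw [mul_zero, ch_zero, show t * 1 = t by ring, h2] at h
  linear_combination h


variable {d : ℕ}

noncomputable def ee (a x : Fin d → ZMod 3) : ℂ := ∏ j, ch (a j * x j)

lemma ee_zero_right (a : Fin d → ZMod 3) : ee a 0 = 1 := by
  simp [ee, ch_zero]

lemma ee_zero_left (x : Fin d → ZMod 3) : ee 0 x = 1 := by
  simp [ee, ch_zero]

lemma ee_add (a x y : Fin d → ZMod 3) : ee a (x + y) = ee a x * ee a y := by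
  rw [ee, ee, ee, ← Finset.prod_mul_distrib]
  exact Finset.prod_congr rfl fun j _ => by rw [Pi.add_apply, mul_add, ch_add]

lemma ee_conj (a x : Fin d → ZMod 3) : (starRingEnd ℂ) (ee a x) = ee a (-x) := by
  rw [ee, ee, map_prod]
  exact Finset.prod_congr rfl fun j _ => by rw [ch_conj, Pi.neg_apply, mul_neg]

lemma orth (v : Fin d → ZMod 3) :
    ∑ a : Fin d → ZMod 3, ee a v = if v = 0 then (3 : ℂ) ^ d else 0 := by
  have key : ∑ a : Fin d → ZMod 3, ee a v = ∏ j, ∑ c : ZMod 3, ch (c * v j) :=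
    (Fintype.prod_sum fun j c => ch (c * v j)).symm
  rw [key]
  by_cases hv : v = 0
  · subst hv
    simp only [Pi.zero_apply, mul_zero, ch_zero, if_pos rfl]
    simp [Finset.card_univ]
  · rw [if_neg hv]
    obtain ⟨j, hj⟩ : ∃ j, v j ≠ 0 := by
      by_contra h; push_neg at h; exact hv (funext h)
    refine Finset.prod_eq_zero (Finset.mem_univ j) ?_
    rw [← ch_sum_zero (v j) hj]
    exact Finset.sum_congr rfl fun c _ => by rw [mul_comm]

lemma mem12 (c : ZMod 3) : c ∈ ({1, 2} : Finset (ZMod 3)) ↔ c ≠ 0 := by revert c; decide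

lemma wt_single (j : Fin d) (c : ZMod 3) (hc : c ≠ 0) :
    hammingNorm (Pi.single j c : Fin d → ZMod 3) = 1 := by
  have h : (univ.filter fun i => (Pi.single j c : Fin d → ZMod 3) i ≠ 0) = {j} := by
    ext i
    by_cases h : i = j <;> simp [Pi.single_apply, h, hc]
  simp only [hammingNorm, h, Finset.card_singleton]

lemma wt_filter (v : Fin d → ZMod 3) :
    hammingNorm v = (univ.filter fun i => v i ≠ 0).card := rfl

lemma filter_wt_one :
    (univ.filter fun v : Fin d → ZMod 3 => hammingNorm v = 1) =
      (univ ×ˢ ({1, 2} : Finset (ZMod 3))).image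
        fun p : Fin d × ZMod 3 => (Pi.single p.1 p.2 : Fin d → ZMod 3) := by
  ext v
  rw [Finset.mem_filter, Finset.mem_image]
  constructor
  · rintro ⟨-, hv⟩
    rw [wt_filter] at hv
    obtain ⟨j, hj⟩ := Finset.card_eq_one.1 hv
    have hjm : j ∈ (univ.filter fun i => v i ≠ 0) := hj ▸ Finset.mem_singleton_self j
    have hvj : v j ≠ 0 := (Finset.mem_filter.1 hjm).2
    refine ⟨(j, v j), Finset.mem_product.2 ⟨Finset.mem_univ _, (mem12 _).2 hvj⟩, ?_⟩
    funext i
    by_cases h : i = j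
    · subst h; rw [Pi.single_eq_same]
    · have hni : i ∉ (univ.filter fun i => v i ≠ 0) := by rw [hj]; simp [h]
      have hvi : v i = 0 := by
        by_contra hne; exact hni (Finset.mem_filter.2 ⟨Finset.mem_univ _, hne⟩)
      rw [Pi.single_eq_of_ne h, hvi]
  · rintro ⟨⟨j, c⟩, hm, rfl⟩
    have hc : c ≠ 0 := (mem12 c).1 (Finset.mem_product.1 hm).2
    exact ⟨Finset.mem_univ _, wt_single j c hc⟩

lemma single_injOn :
    ∀ p ∈ (univ ×ˢ ({1, 2} : Finset (ZMod 3))), ∀ q ∈ (univ ×ˢ ({1, 2} : Finset (ZMod 3))),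
      (Pi.single p.1 p.2 : Fin d → ZMod 3) = (Pi.single q.1 q.2 : Fin d → ZMod 3) → p = q := by
  rintro ⟨j, c⟩ hp ⟨k, t⟩ hq h
  have hc : c ≠ 0 := (mem12 c).1 (Finset.mem_product.1 hp).2
  dsimp only at h
  have hjk : j = k := by
    by_contra hne
    have h2 := congrFun h j
    rw [Pi.single_eq_same, Pi.single_eq_of_ne hne] at h2
    exact hc h2
  subst hjk
  have h2 := congrFun h j
  rw [Pi.single_eq_same, Pi.single_eq_same] at h2
  rw [Prod.mk.injEq]
  exact ⟨rfl, h2⟩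

lemma sum_wt_one {M : Type*} [AddCommMonoid M] (F : (Fin d → ZMod 3) → M) :
    ∑ v ∈ univ.filter (fun v => hammingNorm v = 1), F v =
      ∑ p ∈ univ ×ˢ ({1, 2} : Finset (ZMod 3)), F (Pi.single p.1 p.2 : Fin d → ZMod 3) := by
  rw [filter_wt_one, Finset.sum_image single_injOn]

lemma ee_single (a : Fin d → ZMod 3) (j : Fin d) (c : ZMod 3) :
    ee a (Pi.single j c : Fin d → ZMod 3) = ch (a j * c) := by
  rw [ee]
  have h1 : ∀ k ∈ (univ : Finset (Fin d)), k ≠ j →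
      ch (a k * (Pi.single j c : Fin d → ZMod 3) k) = 1 := fun k _ hk => by
    rw [Pi.single_eq_of_ne hk, mul_zero, ch_zero]
  rw [Finset.prod_eq_single j h1 (fun h => absurd (Finset.mem_univ j) h), Pi.single_eq_same]

noncomputable def g1 : (Fin d → ZMod 3) → ℝ := fun v => if hammingNorm v = 1 then 1 else 0

noncomputable def cnv (f g : (Fin d → ZMod 3) → ℝ) : (Fin d → ZMod 3) → ℝ :=
  fun v => ∑ u, f u * g (v - u)

noncomputable def tr (f : (Fin d → ZMod 3) → ℝ) (a : Fin d → ZMod 3) : ℂ :=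
  ∑ v, (f v : ℂ) * ee a v

lemma tr_cnv (f g : (Fin d → ZMod 3) → ℝ) (a : Fin d → ZMod 3) :
    tr (cnv f g) a = tr f a * tr g a := by
  rw [tr, tr, tr]
  have step1 : ∀ v, ((cnv f g v : ℝ) : ℂ) * ee a v
      = ∑ u, (f u : ℂ) * (g (v - u) : ℂ) * ee a v := by
    intro v
    rw [cnv]
    push_cast
    rw [Finset.sum_mul]
  simp_rw [step1]
  rw [Finset.sum_comm]
  have step2 : ∀ u, ∑ v, (f u : ℂ) * (g (v - u) : ℂ) * ee a v
      = (f u : ℂ) * ee a u * ∑ w, (g w : ℂ) * ee a w := by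
    intro u
    rw [Fintype.sum_equiv (Equiv.addLeft u)
      (fun w => (f u : ℂ) * (g ((u + w) - u) : ℂ) * ee a (u + w))
      (fun v => (f u : ℂ) * (g (v - u) : ℂ) * ee a v) (fun w => rfl) |>.symm]
    rw [Finset.mul_sum]
    refine Finset.sum_congr rfl fun w _ => ?_
    rw [add_sub_cancel_left, ee_add]
    ring
  simp_rw [step2]
  rw [← Finset.sum_mul]

lemma wt_add_le (x y : Fin d → ZMod 3) :
    hammingNorm (x + y) ≤ hammingNorm x + hammingNorm y := by
  have h := hammingDist_triangle (x + y) y (0 : Fin d → ZMod 3)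
  rw [hammingDist_zero_right, hammingDist_zero_right] at h
  have h2 : hammingDist (x + y) y = hammingNorm x := by
    rw [hammingDist_comm, hammingDist_eq_hammingNorm, show -y + (x + y) = x by abel]
  rw [h2] at h
  exact h

lemma cnv_support (f g : (Fin d → ZMod 3) → ℝ) (s t : ℕ)
    (hf : ∀ v, s < hammingNorm v → f v = 0) (hg : ∀ v, t < hammingNorm v → g v = 0) :
    ∀ v, s + t < hammingNorm v → cnv f g v = 0 := by
  intro v hv
  rw [cnv]
  refine Finset.sum_eq_zero fun u _ => ?_
  by_cases hu : s < hammingNorm u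
  · rw [hf u hu, zero_mul]
  · push_neg at hu
    have : t < hammingNorm (v - u) := by
      have h3 := wt_add_le u (v - u)
      rw [add_sub_cancel] at h3
      omega
    rw [hg _ this, mul_zero]

lemma tr_g1 (a : Fin d → ZMod 3) :
    tr g1 a = ((2 * (d : ℝ) - 3 * (hammingNorm a : ℝ) : ℝ) : ℂ) := by
  rw [tr]
  have h1 : ∀ v : Fin d → ZMod 3, ((g1 v : ℝ) : ℂ) * ee a v
      = if hammingNorm v = 1 then ee a v else 0 := by
    intro v; rw [g1]; split_ifs <;> simp
  simp_rw [h1]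
  rw [← Finset.sum_filter, sum_wt_one (fun v => ee a v), Finset.sum_product]
  have h2 : ∀ j : Fin d, ∑ c ∈ ({1, 2} : Finset (ZMod 3)),
      ee a (Pi.single (j, c).1 (j, c).2 : Fin d → ZMod 3)
      = if a j = 0 then 2 else -1 := by
    intro j
    rw [Finset.sum_pair (by decide : (1 : ZMod 3) ≠ 2)]
    dsimp only
    rw [ee_single, ee_single]
    by_cases h : a j = 0
    · rw [h, zero_mul, zero_mul, ch_zero, if_pos rfl]; norm_num
    · rw [if_neg h, mul_one, mul_comm (a j) 2]
      exact ch_sum_ne (a j) h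
  simp_rw [h2]
  have h3 : ∀ j : Fin d, (if a j = 0 then (2 : ℂ) else -1)
      = 2 - 3 * (if a j ≠ 0 then (1 : ℂ) else 0) := by
    intro j; split_ifs with h h' <;> simp_all <;> norm_num
  simp_rw [h3]
  rw [Finset.sum_sub_distrib, ← Finset.mul_sum, Finset.sum_const, Finset.card_univ,
    Finset.sum_boole]
  push_cast
  rw [wt_filter]
  norm_num
  ring

lemma single_sub (j : Fin d) (b c : ZMod 3) :
    (Pi.single j b : Fin d → ZMod 3) - (Pi.single j c : Fin d → ZMod 3)
      = (Pi.single j (b - c) : Fin d → ZMod 3) := by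
  funext i
  by_cases h : i = j
  · subst h; rw [Pi.sub_apply, Pi.single_eq_same, Pi.single_eq_same, Pi.single_eq_same]
  · rw [Pi.sub_apply, Pi.single_eq_of_ne h, Pi.single_eq_of_ne h, Pi.single_eq_of_ne h, sub_zero]

lemma neg_single (j : Fin d) (c : ZMod 3) :
    -(Pi.single j c : Fin d → ZMod 3) = (Pi.single j (-c) : Fin d → ZMod 3) := by
  have := single_sub j 0 c
  rw [Pi.single_zero, zero_sub, zero_sub] at this
  exact this

lemma g1_single (j : Fin d) (c : ZMod 3) (hc : c ≠ 0) :
    g1 (Pi.single j c : Fin d → ZMod 3) = 1 := by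
  rw [g1, if_pos (wt_single j c hc)]

lemma g1_zero_of (v : Fin d → ZMod 3) (hv : hammingNorm v ≠ 1) : g1 v = 0 := by
  rw [g1, if_neg hv]

lemma sum_g1_mul (F : (Fin d → ZMod 3) → ℝ) :
    ∑ u, g1 u * F u = ∑ p ∈ univ ×ˢ ({1, 2} : Finset (ZMod 3)),
      F (Pi.single p.1 p.2 : Fin d → ZMod 3) := by
  have h1 : ∀ u : Fin d → ZMod 3, g1 u * F u = if hammingNorm u = 1 then F u else 0 := by
    intro u; rw [g1]; split_ifs <;> simp
  simp_rw [h1]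
  rw [← Finset.sum_filter, sum_wt_one]

lemma g2_zero : cnv g1 g1 (0 : Fin d → ZMod 3) = 2 * d := by
  rw [cnv]
  have h : ∀ u : Fin d → ZMod 3, g1 u * g1 (0 - u) = g1 u * g1 (-u) := by
    intro u; rw [zero_sub]
  simp_rw [h]
  rw [sum_g1_mul (fun u => g1 (-u))]
  have h2 : ∀ p ∈ univ ×ˢ ({1, 2} : Finset (ZMod 3)),
      g1 (-(Pi.single p.1 p.2 : Fin d → ZMod 3)) = 1 := by
    rintro ⟨j, c⟩ hp
    have hc : c ≠ 0 := (mem12 c).1 (Finset.mem_product.1 hp).2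
    rw [neg_single, g1_single j (-c) (neg_ne_zero.2 hc)]
  rw [Finset.sum_congr rfl h2, Finset.sum_const, Finset.card_product, Finset.card_univ,
    Fintype.card_fin, show ({1, 2} : Finset (ZMod 3)).card = 2 by decide, nsmul_eq_mul]
  push_cast
  ring

lemma g1_zero' : g1 (0 : Fin d → ZMod 3) = 0 :=
  g1_zero_of _ (by rw [hammingNorm_zero]; omega)

lemma g2_single (l : Fin d) (m : ZMod 3) (hm : m ≠ 0) :
    cnv g1 g1 (Pi.single l m : Fin d → ZMod 3) = 1 := by
  rw [cnv, sum_g1_mul (fun u => g1 ((Pi.single l m : Fin d → ZMod 3) - u)),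
    Finset.sum_product]
  have hl : ∀ j ∈ (univ : Finset (Fin d)), j ≠ l →
      (∑ c ∈ ({1, 2} : Finset (ZMod 3)),
        g1 ((Pi.single l m : Fin d → ZMod 3) - (Pi.single j c : Fin d → ZMod 3))) = 0 := by
    intro j _ hj
    refine Finset.sum_eq_zero fun c hc => ?_
    have hc0 : c ≠ 0 := (mem12 c).1 hc
    set w := (Pi.single l m : Fin d → ZMod 3) - (Pi.single j c : Fin d → ZMod 3) with hw
    have hwl : w l = m := by
      rw [hw, Pi.sub_apply, Pi.single_eq_same, Pi.single_eq_of_ne (Ne.symm hj), sub_zero]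
    have hwj : w j = -c := by
      rw [hw, Pi.sub_apply, Pi.single_eq_same, Pi.single_eq_of_ne hj, zero_sub]
    refine g1_zero_of w ?_
    have hsub : ({l, j} : Finset (Fin d)) ⊆ univ.filter fun i => w i ≠ 0 := by
      intro i hi
      rcases Finset.mem_insert.1 hi with h | h
      · subst h; exact Finset.mem_filter.2 ⟨Finset.mem_univ _, by rw [hwl]; exact hm⟩
      · rw [Finset.mem_singleton.1 h]
        exact Finset.mem_filter.2 ⟨Finset.mem_univ _, by rw [hwj]; exact neg_ne_zero.2 hc0⟩
    have hcard : 2 ≤ (univ.filter fun i => w i ≠ 0).card := by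
      have h2 : ({l, j} : Finset (Fin d)).card = 2 := by
        rw [Finset.card_insert_of_notMem (by simp [Ne.symm hj]), Finset.card_singleton]
      rw [← h2]
      exact Finset.card_le_card hsub
    rw [wt_filter]
    omega
  rw [Finset.sum_eq_single l (fun j hj hne => hl j hj hne)
    (fun h => absurd (Finset.mem_univ l) h)]
  rw [Finset.sum_pair (by decide : (1 : ZMod 3) ≠ 2), single_sub, single_sub]
  have hm' : ∀ m : ZMod 3, m ≠ 0 → m = 1 ∨ m = 2 := by decide
  rcases hm' m hm with h | h <;> subst h
  · rw [show (1 : ZMod 3) - 1 = 0 by decide, show (1 : ZMod 3) - 2 = 2 by decide,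
      Pi.single_zero, g1_zero', g1_single _ _ (by decide : (2 : ZMod 3) ≠ 0)]
    norm_num
  · rw [show (2 : ZMod 3) - 1 = 1 by decide, show (2 : ZMod 3) - 2 = 0 by decide,
      Pi.single_zero, g1_zero', g1_single _ _ (by decide : (1 : ZMod 3) ≠ 0)]
    norm_num

lemma g3_zero : cnv (cnv g1 g1) g1 (0 : Fin d → ZMod 3) = 2 * d := by
  rw [cnv]
  have h : ∀ u : Fin d → ZMod 3, cnv g1 g1 u * g1 (0 - u)
      = g1 (-u) * cnv g1 g1 (-(-u)) := by
    intro u; rw [zero_sub, neg_neg, mul_comm]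
  simp_rw [h]
  rw [Fintype.sum_equiv (Equiv.neg (Fin d → ZMod 3))
    (fun u => g1 (-(-u)) * cnv g1 g1 (-(-(-u))))
    (fun u => g1 (-u) * cnv g1 g1 (-(-u))) (fun u => rfl) |>.symm]
  simp only [neg_neg]
  rw [sum_g1_mul (fun u => cnv g1 g1 (-u))]
  have h2 : ∀ p ∈ univ ×ˢ ({1, 2} : Finset (ZMod 3)),
      cnv g1 g1 (-(Pi.single p.1 p.2 : Fin d → ZMod 3)) = 1 := by
    rintro ⟨j, c⟩ hp
    have hc : c ≠ 0 := (mem12 c).1 (Finset.mem_product.1 hp).2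
    rw [neg_single, g2_single j (-c) (neg_ne_zero.2 hc)]
  rw [Finset.sum_congr rfl h2, Finset.sum_const, Finset.card_product, Finset.card_univ,
    Fintype.card_fin, show ({1, 2} : Finset (ZMod 3)).card = 2 by decide, nsmul_eq_mul]
  push_cast
  ring

noncomputable def dl : (Fin d → ZMod 3) → ℝ := fun v => if v = 0 then 1 else 0

noncomputable def ff (d : ℕ) (A B C : ℝ) : (Fin d → ZMod 3) → ℝ := fun v =>
  cnv (cnv g1 g1) g1 v + A * cnv g1 g1 v + B * g1 v + C * dl v

lemma tr_dl (a : Fin d → ZMod 3) : tr dl a = 1 := by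
  rw [tr]
  have h : ∀ v : Fin d → ZMod 3, ((dl v : ℝ) : ℂ) * ee a v
      = if v = 0 then ee a v else 0 := by
    intro v; rw [dl]; split_ifs <;> simp
  simp_rw [h]
  rw [Finset.sum_eq_single 0 (fun v _ hv => if_neg hv)
    (fun h => absurd (Finset.mem_univ 0) h), if_pos rfl, ee_zero_right]

noncomputable def qq (d : ℕ) (A B C : ℝ) (i : ℕ) : ℝ :=
  (2 * (d : ℝ) - 3 * (i : ℝ)) ^ 3 + A * (2 * (d : ℝ) - 3 * (i : ℝ)) ^ 2
    + B * (2 * (d : ℝ) - 3 * (i : ℝ)) + C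

lemma tr_ff (A B C : ℝ) (a : Fin d → ZMod 3) :
    tr (ff d A B C) a = ((qq d A B C (hammingNorm a) : ℝ) : ℂ) := by
  have hsplit : tr (ff d A B C) a
      = tr (cnv (cnv g1 g1) g1) a + (A : ℂ) * tr (cnv g1 g1) a + (B : ℂ) * tr g1 a
        + (C : ℂ) * tr dl a := by
    rw [tr, tr, tr, tr, tr, Finset.mul_sum, Finset.mul_sum, Finset.mul_sum,
      ← Finset.sum_add_distrib, ← Finset.sum_add_distrib, ← Finset.sum_add_distrib]
    refine Finset.sum_congr rfl fun v _ => ?_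
    rw [ff]
    push_cast
    ring
  rw [hsplit, tr_cnv, tr_cnv, tr_g1, tr_dl, qq]
  push_cast
  ring

lemma ff_support (A B C : ℝ) (v : Fin d → ZMod 3) (hv : 4 ≤ hammingNorm v) :
    ff d A B C v = 0 := by
  have hg1 : ∀ w : Fin d → ZMod 3, 1 < hammingNorm w → g1 w = 0 := fun w hw =>
    g1_zero_of w (by omega)
  have hg2 := cnv_support g1 g1 1 1 hg1 hg1
  have hg3 := cnv_support (cnv g1 g1) g1 2 1 hg2 hg1
  have hv0 : v ≠ 0 := by
    intro h; rw [h, hammingNorm_zero] at hv; omega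
  rw [ff, hg3 v (by omega), hg2 v (by omega), hg1 v (by omega), dl, if_neg hv0]
  ring

lemma ff_zero (A B C : ℝ) : ff d A B C 0 = 2 * d + A * (2 * d) + C := by
  rw [ff, g3_zero, g2_zero, g1_zero', dl, if_pos rfl]
  ring

lemma key_identity (f : (Fin d → ZMod 3) → ℝ) (S : Finset (Fin d → ZMod 3)) :
    ∑ a : Fin d → ZMod 3, tr f a *
        ((∑ x ∈ S, ee a x) * (starRingEnd ℂ) (∑ x ∈ S, ee a x))
      = (3 : ℂ) ^ d * ∑ x ∈ S, ∑ y ∈ S, (f (y - x) : ℂ) := by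
  have stepA : ∀ a : Fin d → ZMod 3,
      (∑ x ∈ S, ee a x) * (starRingEnd ℂ) (∑ x ∈ S, ee a x)
        = ∑ x ∈ S, ∑ y ∈ S, ee a (x - y) := by
    intro a
    rw [map_sum, Finset.sum_mul_sum]
    refine Finset.sum_congr rfl fun x _ => Finset.sum_congr rfl fun y _ => ?_
    rw [ee_conj, ← ee_add, ← sub_eq_add_neg]
  have stepB : ∀ a : Fin d → ZMod 3,
      tr f a * (∑ x ∈ S, ∑ y ∈ S, ee a (x - y))
        = ∑ v, ∑ x ∈ S, ∑ y ∈ S, (f v : ℂ) * ee a (v + (x - y)) := by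
    intro a
    rw [tr, Finset.sum_mul]
    refine Finset.sum_congr rfl fun v _ => ?_
    rw [Finset.mul_sum]
    refine Finset.sum_congr rfl fun x _ => ?_
    rw [Finset.mul_sum]
    refine Finset.sum_congr rfl fun y _ => ?_
    rw [mul_assoc, ← ee_add]
  calc ∑ a : Fin d → ZMod 3, tr f a *
        ((∑ x ∈ S, ee a x) * (starRingEnd ℂ) (∑ x ∈ S, ee a x))
      = ∑ a : Fin d → ZMod 3, ∑ v, ∑ x ∈ S, ∑ y ∈ S,
          (f v : ℂ) * ee a (v + (x - y)) := by
        refine Finset.sum_congr rfl fun a _ => ?_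
        rw [stepA, stepB]
    _ = ∑ v, ∑ x ∈ S, ∑ y ∈ S, ∑ a : Fin d → ZMod 3,
          (f v : ℂ) * ee a (v + (x - y)) := by
        rw [Finset.sum_comm]
        refine Finset.sum_congr rfl fun v _ => ?_
        rw [Finset.sum_comm]
        refine Finset.sum_congr rfl fun x _ => ?_
        rw [Finset.sum_comm]
    _ = ∑ v, ∑ x ∈ S, ∑ y ∈ S,
          (f v : ℂ) * (if v + (x - y) = 0 then (3 : ℂ) ^ d else 0) := by
        refine Finset.sum_congr rfl fun v _ => Finset.sum_congr rfl fun x _ =>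
          Finset.sum_congr rfl fun y _ => ?_
        rw [← Finset.mul_sum, orth]
    _ = ∑ x ∈ S, ∑ y ∈ S, ∑ v,
          (f v : ℂ) * (if v + (x - y) = 0 then (3 : ℂ) ^ d else 0) := by
        rw [Finset.sum_comm]
        refine Finset.sum_congr rfl fun x _ => ?_
        rw [Finset.sum_comm]
    _ = (3 : ℂ) ^ d * ∑ x ∈ S, ∑ y ∈ S, (f (y - x) : ℂ) := by
        rw [Finset.mul_sum]
        refine Finset.sum_congr rfl fun x hx => ?_
        rw [Finset.mul_sum]
        refine Finset.sum_congr rfl fun y hy => ?_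
        rw [Finset.sum_eq_single (y - x)]
        · rw [if_pos (by abel), mul_comm]
        · intro v _ hv
          rw [if_neg, mul_zero]
          intro h
          apply hv
          have : v = -(x - y) := eq_neg_of_add_eq_zero_left h
          rw [this, neg_sub]
        · intro h; exact absurd (Finset.mem_univ _) h

lemma quad_bound (d : ℕ) (A B C : ℝ) (S : Finset (Fin d → ZMod 3))
    (hS : ∀ x ∈ S, ∀ y ∈ S, x ≠ y → 4 ≤ hammingDist x y)
    (hq : ∀ i : ℕ, i ≤ d → 0 ≤ qq d A B C i) :
    qq d A B C 0 * (S.card : ℝ) ^ 2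
      ≤ 3 ^ d * (2 * d + A * (2 * d) + C) * S.card := by
  have key := key_identity (ff d A B C) S
  -- compute RHS of key (double sum over S)
  have hdiag : ∀ x ∈ S, ∑ y ∈ S, ((ff d A B C (y - x) : ℝ) : ℂ)
      = ((ff d A B C 0 : ℝ) : ℂ) := by
    intro x hx
    rw [Finset.sum_eq_single x]
    · rw [sub_self]
    · intro y hy hyx
      have hdist : 4 ≤ hammingNorm (y - x) := by
        rw [show y - x = -x + y by abel, ← hammingDist_eq_hammingNorm, hammingDist_comm]
        exact hS y hy x hx hyx
      rw [ff_support A B C _ hdist, Complex.ofReal_zero]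
    · intro h; exact absurd hx h
  rw [Finset.sum_congr rfl hdiag, Finset.sum_const, nsmul_eq_mul] at key
  -- compute LHS of key (spectral side)
  have hterm : ∀ a : Fin d → ZMod 3,
      tr (ff d A B C) a * ((∑ x ∈ S, ee a x) * (starRingEnd ℂ) (∑ x ∈ S, ee a x))
        = ((qq d A B C (hammingNorm a)
            * Complex.normSq (∑ x ∈ S, ee a x) : ℝ) : ℂ) := by
    intro a
    rw [tr_ff, Complex.mul_conj]
    push_cast
    ring
  rw [Finset.sum_congr rfl fun a _ => hterm a] at key
  rw [← Complex.ofReal_sum] at key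
  have key2 : ∑ a : Fin d → ZMod 3,
      qq d A B C (hammingNorm a) * Complex.normSq (∑ x ∈ S, ee a x)
      = 3 ^ d * ((S.card : ℝ) * ff d A B C 0) := by
    have := key.symm
    rw [show ((3:ℂ)^d * ((S.card : ℂ) * ((ff d A B C 0 : ℝ):ℂ)))
        = (((3:ℝ)^d * ((S.card : ℝ) * ff d A B C 0) : ℝ) : ℂ) by push_cast; ring] at this
    exact_mod_cast this.symm
  -- single term lower bound at a = 0
  have hlow : qq d A B C 0 * (S.card : ℝ) ^ 2
      ≤ ∑ a : Fin d → ZMod 3,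
          qq d A B C (hammingNorm a) * Complex.normSq (∑ x ∈ S, ee a x) := by
    have h0 : qq d A B C (hammingNorm (0 : Fin d → ZMod 3))
        * Complex.normSq (∑ x ∈ S, ee (0 : Fin d → ZMod 3) x)
        = qq d A B C 0 * (S.card : ℝ) ^ 2 := by
      rw [hammingNorm_zero]
      have hE0 : (∑ x ∈ S, ee (0 : Fin d → ZMod 3) x) = ((S.card : ℝ) : ℂ) := by
        rw [Finset.sum_congr rfl fun x _ => ee_zero_left x, Finset.sum_const, nsmul_eq_mul,
          mul_one]
        push_cast
        ring
      rw [hE0, Complex.normSq_ofReal]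
      ring
    rw [← h0]
    refine Finset.single_le_sum (f := fun a => qq d A B C (hammingNorm a)
      * Complex.normSq (∑ x ∈ S, ee a x)) (fun a _ => ?_) (Finset.mem_univ 0)
    have hwt : hammingNorm a ≤ d := by
      have := hammingNorm_le_card_fintype (x := a)
      rwa [Fintype.card_fin] at this
    exact mul_nonneg (hq _ hwt) (Complex.normSq_nonneg _)
  rw [key2] at hlow
  calc qq d A B C 0 * (S.card : ℝ) ^ 2
      ≤ 3 ^ d * ((S.card : ℝ) * ff d A B C 0) := hlow
    _ = 3 ^ d * (2 * d + A * (2 * d) + C) * S.card := by rw [ff_zero]; ring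

lemma ppos (d i : ℕ) (r : ℤ) (hid : i ≤ d) (hcong : (3:ℤ) ∣ (2 * d - r)) :
    0 ≤ ((2 * d : ℝ) - 3 * i - r) * ((2 * d : ℝ) - 3 * i - r + 3)
      * ((2 * d : ℝ) - 3 * i + d) := by
  set z : ℤ := 2 * d - 3 * i - r with hz
  have h3z : (3:ℤ) ∣ z := by
    obtain ⟨k, hk⟩ := hcong
    exact ⟨k - i, by omega⟩
  have hzR : ((2 * d : ℝ) - 3 * i - r) = (z : ℝ) := by push_cast [hz]; ring
  have h3 : (0:ℝ) ≤ (2 * d : ℝ) - 3 * i + d := by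
    have : (i : ℝ) ≤ d := by exact_mod_cast hid
    nlinarith
  rcases le_or_gt 0 z with h | h
  · have h1 : (0:ℝ) ≤ (z:ℝ) := by exact_mod_cast h
    rw [hzR]
    have h2 : (0:ℝ) ≤ (z:ℝ) + 3 := by linarith
    positivity
  · have hz3 : z ≤ -3 := by omega
    have h1 : (z:ℝ) ≤ -3 := by exact_mod_cast hz3
    rw [hzR]
    have h2 : 0 ≤ (z:ℝ) * ((z:ℝ) + 3) :=
      mul_nonneg_of_nonpos_of_nonpos (by linarith) (by linarith)
    exact mul_nonneg h2 h3

lemma card_code_bound (d : ℕ) (hd : 3 ≤ d) (r : ℤ) (hr2 : 2 ≤ r) (hr4 : r ≤ 4)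
    (hcong : (3:ℤ) ∣ (2 * d - r)) (S : Finset (Fin d → ZMod 3))
    (hS : ∀ x ∈ S, ∀ y ∈ S, x ≠ y → 4 ≤ hammingDist x y) :
    (S.card : ℝ) * ((2 * d - r) * (2 * d - r + 3) * (3 * d))
      ≤ 3 ^ d * ((d : ℝ) * (2 * d + r ^ 2 - 7 * r + 8)) := by
  set A : ℝ := (d : ℝ) - 2 * r + 3
  set B : ℝ := (r : ℝ) ^ 2 - 3 * r - 2 * r * d + 3 * d
  set C : ℝ := (d : ℝ) * r * (r - 3)
  have hq : ∀ i : ℕ, i ≤ d → 0 ≤ qq d A B C i := by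
    intro i hi
    have h := ppos d i r hi hcong
    have : qq d A B C i = ((2 * d : ℝ) - 3 * i - r) * ((2 * d : ℝ) - 3 * i - r + 3)
        * ((2 * d : ℝ) - 3 * i + d) := by
      rw [qq]; push_cast [A, B, C]; ring
    rw [this]
    exact h
  have hquad := quad_bound d A B C S hS hq
  have hq0 : qq d A B C 0 = ((2 * d : ℝ) - r) * ((2 * d : ℝ) - r + 3) * (3 * d) := by
    rw [qq]; push_cast [A, B, C]; ring
  have hw : (2 * (d:ℝ) + A * (2 * d) + C) = (d : ℝ) * (2 * d + r ^ 2 - 7 * r + 8) := by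
    push_cast [A, C]; ring
  rw [hq0, hw] at hquad
  -- divide by card if positive
  rcases Nat.eq_zero_or_pos S.card with h0 | h0
  · rw [h0]
    push_cast
    rw [zero_mul]
    have hdR : (3:ℝ) ≤ d := by exact_mod_cast hd
    have hrR : (r:ℝ) ≤ 4 := by exact_mod_cast hr4
    have hrR2 : (2:ℝ) ≤ r := by exact_mod_cast hr2
    have : (0:ℝ) ≤ (d : ℝ) * (2 * d + r ^ 2 - 7 * r + 8) := by
      nlinarith [sq_nonneg ((r:ℝ) - 7/2)]
    positivity
  · have hcpos : (0:ℝ) < S.card := by exact_mod_cast h0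
    nlinarith [hquad, sq_nonneg ((S.card : ℝ))]

lemma div_step (m P W Q : ℝ) (hP : 0 < P) (hmP : m * P ≤ W) (hWQ : W / P = Q) : m ≤ Q := by
  rw [← hWQ, le_div_iff₀ hP]; exact hmP

/-- **Corollary (bound for `H(d,3)`).**  Let `d ≥ 3` and `b = d % 3`.  Then
`α₃(H(d,3)) ≤ 3^(d-1) * (2*d + b^2 + b - 4) / ((2*d + b) * (2*d + b - 3))`. -/
theorem hamming_alpha3_bound_q3 (d b : ℕ) (hd : 3 ≤ d) (hb : b = d % 3) :
    (hammingAlpha3 d 3 : ℝ) ≤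
      (3 : ℝ) ^ (d - 1) * (2 * (d : ℝ) + (b : ℝ) ^ 2 + (b : ℝ) - 4) /
        ((2 * (d : ℝ) + (b : ℝ)) * (2 * (d : ℝ) + (b : ℝ) - 3)) := by
  have hne : ({m : ℕ | ∃ C : Finset (Fin d → Fin 3),
      (∀ x ∈ C, ∀ y ∈ C, x ≠ y → 4 ≤ hammingDist x y) ∧ C.card = m}).Nonempty :=
    ⟨0, ∅, fun x hx => absurd hx (Finset.notMem_empty x), Finset.card_empty⟩
  have hbdd : BddAbove {m : ℕ | ∃ C : Finset (Fin d → Fin 3),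
      (∀ x ∈ C, ∀ y ∈ C, x ≠ y → 4 ≤ hammingDist x y) ∧ C.card = m} := by
    refine ⟨Fintype.card (Fin d → Fin 3), ?_⟩
    rintro m ⟨C, -, rfl⟩
    exact Finset.card_le_univ C
  obtain ⟨C, hC, hcard⟩ := Nat.sSup_mem hne hbdd
  rw [hammingAlpha3, ← hcard]
  -- transport to ZMod 3
  set φ : Fin 3 → ZMod 3 := fun c => ((c : ℕ) : ZMod 3) with hφdef
  have hφ : Function.Injective φ := by decide
  set S : Finset (Fin d → ZMod 3) := C.image (fun x => fun j => φ (x j)) with hSdef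
  have hinj : Function.Injective (fun x : Fin d → Fin 3 => fun j => φ (x j)) :=
    fun x y h => funext fun j => hφ (congrFun h j)
  have hSC : S.card = C.card := Finset.card_image_of_injective _ hinj
  have hS : ∀ x ∈ S, ∀ y ∈ S, x ≠ y → 4 ≤ hammingDist x y := by
    intro u hu v hv huv
    obtain ⟨x, hx, rfl⟩ := Finset.mem_image.1 hu
    obtain ⟨y, hy, rfl⟩ := Finset.mem_image.1 hv
    have hxy : x ≠ y := fun h => huv (by rw [h])
    rw [hammingDist_comp (fun _ => φ) (fun _ => hφ)]
    exact hC x hx y hy hxy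
  have hdR : (3:ℝ) ≤ (d:ℝ) := by exact_mod_cast hd
  have h3d : (0:ℝ) < 3 * (d:ℝ) := by linarith
  have hp3 : (3:ℝ) ^ d = 3 ^ (d - 1) * 3 := by
    rw [← pow_succ]
    congr 1
    omega
  have hcards : (C.card : ℝ) = (S.card : ℝ) := by rw [hSC]
  rw [hcards]
  have hb' : b = 0 ∨ b = 1 ∨ b = 2 := by omega
  rcases hb' with h | h | h
  · -- b = 0, r = 3
    have hcong : (3:ℤ) ∣ (2 * (d:ℤ) - 3) := by omega
    have main := card_code_bound d hd 3 (by norm_num) (by norm_num) hcong S hS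
    have hbR : ((b:ℝ)) = 0 := by rw [h]; norm_num
    rw [hbR]
    have hP : (0:ℝ) < (2 * (d:ℝ) - 3) * (2 * (d:ℝ) - 3 + 3) * (3 * (d:ℝ)) :=
      mul_pos (mul_pos (by linarith) (by linarith)) h3d
    have hD : (0:ℝ) < (2 * (d:ℝ) + 0) * (2 * (d:ℝ) + 0 - 3) :=
      mul_pos (by linarith) (by linarith)
    refine div_step _ _ ((3:ℝ) ^ d * ((d:ℝ) * (2 * (d:ℝ) + (3:ℝ) ^ 2 - 7 * 3 + 8))) _ hP
      ?_ ?_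
    · push_cast at main ⊢
      linarith
    · rw [div_eq_div_iff hP.ne' hD.ne', hp3]
      ring
  · -- b = 1, r = 2
    have hcong : (3:ℤ) ∣ (2 * (d:ℤ) - 2) := by omega
    have main := card_code_bound d hd 2 (by norm_num) (by norm_num) hcong S hS
    have hbR : ((b:ℝ)) = 1 := by rw [h]; norm_num
    rw [hbR]
    have hP : (0:ℝ) < (2 * (d:ℝ) - 2) * (2 * (d:ℝ) - 2 + 3) * (3 * (d:ℝ)) :=
      mul_pos (mul_pos (by linarith) (by linarith)) h3d
    have hD : (0:ℝ) < (2 * (d:ℝ) + 1) * (2 * (d:ℝ) + 1 - 3) :=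
      mul_pos (by linarith) (by linarith)
    refine div_step _ _ ((3:ℝ) ^ d * ((d:ℝ) * (2 * (d:ℝ) + (2:ℝ) ^ 2 - 7 * 2 + 8))) _ hP
      ?_ ?_
    · push_cast at main ⊢
      linarith
    · rw [div_eq_div_iff hP.ne' hD.ne', hp3]
      ring
  · -- b = 2, r = 4
    have hcong : (3:ℤ) ∣ (2 * (d:ℤ) - 4) := by omega
    have main := card_code_bound d hd 4 (by norm_num) (by norm_num) hcong S hS
    have hbR : ((b:ℝ)) = 2 := by rw [h]; norm_num
    rw [hbR]
    have hP : (0:ℝ) < (2 * (d:ℝ) - 4) * (2 * (d:ℝ) - 4 + 3) * (3 * (d:ℝ)) :=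
      mul_pos (mul_pos (by linarith) (by linarith)) h3d
    have hD : (0:ℝ) < (2 * (d:ℝ) + 2) * (2 * (d:ℝ) + 2 - 3) :=
      mul_pos (by linarith) (by linarith)
    refine div_step _ _ ((3:ℝ) ^ d * ((d:ℝ) * (2 * (d:ℝ) + (4:ℝ) ^ 2 - 7 * 4 + 8))) _ hP
      ?_ ?_
    · push_cast at main ⊢
      linarith
    · rw [div_eq_div_iff hP.ne' hD.ne', hp3]
      ring
end
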